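/- arXiv:1608.02262 — 7 statements merged into one kernel-verified Lean document; each statement's English description precedes it below -/
import Mathlib

section
/- Let s be a positive integer. A partition into distinct parts is an (s,s+1)-core partition if and only if its perimeter is strictly less than s. -/
open Polynomial Filter

/-- The hook length of the cell `(i, j)` of a Young diagram:
the arm plus the leg plus one. -/
def YoungDiagram.hookLength (Y : YoungDiagram) (i j : ℕ) : ℕ :=
  (Y.rowLen i - j) + (Y.colLen j - i) - 1

/-- A Young diagram is an `(s, t)`-core if none of its cells has hook length `s` or `t`. -/
def YoungDiagram.IsCore (Y : YoungDiagram) (s t : ℕ) : Prop :=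
  ∀ i j : ℕ, (i, j) ∈ Y → Y.hookLength i j ≠ s ∧ Y.hookLength i j ≠ t

/-- A Young diagram has distinct parts if its nonzero row lengths are pairwise distinct,
i.e. strictly decreasing. -/
def YoungDiagram.DistinctParts (Y : YoungDiagram) : Prop :=
  ∀ i : ℕ, 0 < Y.rowLen (i + 1) → Y.rowLen (i + 1) < Y.rowLen i

/-- The perimeter of a partition: its largest hook length, namely the hook length of the
top-left box for a nonempty partition, and `0` for the empty partition. -/
def YoungDiagram.perimeter (Y : YoungDiagram) : ℕ :=
  Y.rowLen 0 + Y.colLen 0 - 1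

/-- `corePartitionsDistinct s` is the set `P_s` of `(s, s+1)`-core partitions with
distinct parts. -/
def corePartitionsDistinct (s : ℕ) : Set YoungDiagram :=
  {Y | Y.DistinctParts ∧ Y.IsCore s (s + 1)}

/-- For a distinct-parts diagram, consecutive column lengths differ by at most 1
(within the first row). -/
lemma colLen_step (Y : YoungDiagram) (hY : Y.DistinctParts) (j : ℕ)
    (hj : j + 1 < Y.rowLen 0) : Y.colLen j ≤ Y.colLen (j + 1) + 1 := by
  by_contra h
  push_neg at h
  set c := Y.colLen (j + 1) with hc
  -- rows c and c+1 both contain column j but not column j+1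
  have hcj : (c, j) ∈ Y := by
    rw [YoungDiagram.mem_iff_lt_colLen]; omega
  have hcj1 : (c + 1, j) ∈ Y := by
    rw [YoungDiagram.mem_iff_lt_colLen]; omega
  have hncj : (c, j + 1) ∉ Y := by
    rw [YoungDiagram.mem_iff_lt_colLen]; omega
  have hncj1 : (c + 1, j + 1) ∉ Y := by
    rw [YoungDiagram.mem_iff_lt_colLen]; omega
  rw [YoungDiagram.mem_iff_lt_rowLen] at hcj hcj1 hncj hncj1
  have hd : 0 < Y.rowLen (c + 1) → Y.rowLen (c + 1) < Y.rowLen c := hY c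
  omega

/-- Key lemma: in a distinct-parts diagram, if `s ≤ hookLength 0 j` for some cell `(0,j)`,
then some first-row cell has hook length `s` or `s+1`. -/
lemma key (Y : YoungDiagram) (hY : Y.DistinctParts) (s : ℕ) (hs : 0 < s) :
    ∀ n j, j < Y.rowLen 0 → Y.rowLen 0 - j ≤ n → s ≤ Y.hookLength 0 j →
      ∃ j', j' < Y.rowLen 0 ∧ (Y.hookLength 0 j' = s ∨ Y.hookLength 0 j' = s + 1) := by
  intro n
  induction n with
  | zero => intro j hj hn _; omega
  | succ n ih =>
    intro j hj _ hsj
    have hcolj : 0 < Y.colLen j := by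
      rw [← YoungDiagram.mem_iff_lt_colLen, YoungDiagram.mem_iff_lt_rowLen]; exact hj
    have haj : Y.hookLength 0 j = (Y.rowLen 0 - j) + Y.colLen j - 1 := by
      simp [YoungDiagram.hookLength]
    by_cases hle : Y.hookLength 0 j ≤ s + 1
    · exact ⟨j, hj, by omega⟩
    · -- hookLength 0 j ≥ s + 2 ≥ 3; show j + 1 < rowLen 0
      push_neg at hle
      have hj1 : j + 1 < Y.rowLen 0 := by
        by_contra h
        push_neg at h
        -- then rowLen 0 - j = 1, so colLen j ≥ 3, so (1, j) ∈ Y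
        have h2 : 2 ≤ Y.colLen j := by omega
        have h1j : (1, j) ∈ Y := by rw [YoungDiagram.mem_iff_lt_colLen]; omega
        rw [YoungDiagram.mem_iff_lt_rowLen] at h1j
        have hd : 0 < Y.rowLen 1 → Y.rowLen 1 < Y.rowLen 0 := hY 0
        omega
      have hcolj1 : 0 < Y.colLen (j + 1) := by
        rw [← YoungDiagram.mem_iff_lt_colLen, YoungDiagram.mem_iff_lt_rowLen]; exact hj1
      have hstep := colLen_step Y hY j hj1
      have hanti := Y.colLen_anti j (j + 1) (by omega)
      have haj1 : Y.hookLength 0 (j + 1) = (Y.rowLen 0 - (j + 1)) + Y.colLen (j + 1) - 1 := by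
        simp [YoungDiagram.hookLength]
      exact ih (j + 1) hj1 (by omega) (by omega)

/-- A partition into distinct parts is an `(s, s+1)`-core if and only if its perimeter
is strictly less than `s`. -/
theorem distinctParts_isCore_iff_perimeter_lt (s : ℕ) (hs : 0 < s)
    (Y : YoungDiagram) (hY : Y.DistinctParts) :
    Y.IsCore s (s + 1) ↔ Y.perimeter < s := by
  constructor
  · intro hcore
    by_contra h
    push_neg at h
    have hrow : 0 < Y.rowLen 0 := by
      by_contra hr
      push_neg at hr
      have hcol : Y.colLen 0 = 0 := by
        by_contra hc
        have : (0, 0) ∈ Y := by rw [YoungDiagram.mem_iff_lt_colLen]; omega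
        rw [YoungDiagram.mem_iff_lt_rowLen] at this; omega
      simp [YoungDiagram.perimeter, hcol] at h; omega
    have hcol : 0 < Y.colLen 0 := by
      rw [← YoungDiagram.mem_iff_lt_colLen, YoungDiagram.mem_iff_lt_rowLen]; omega
    have h0 : Y.hookLength 0 0 = Y.perimeter := by
      simp [YoungDiagram.hookLength, YoungDiagram.perimeter]
    obtain ⟨j', hj', hval⟩ := key Y hY s hs (Y.rowLen 0) 0 hrow (by omega) (by omega)
    have hmem : (0, j') ∈ Y := by rw [YoungDiagram.mem_iff_lt_rowLen]; exact hj'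
    obtain ⟨h1, h2⟩ := hcore 0 j' hmem
    tauto
  · intro hperim
    intro i j hmem
    have hmem' := hmem
    rw [YoungDiagram.mem_iff_lt_rowLen] at hmem
    rw [YoungDiagram.mem_iff_lt_colLen] at hmem'
    have hr := Y.rowLen_anti 0 i (by omega)
    have hc := Y.colLen_anti 0 j (by omega)
    have : Y.hookLength i j ≤ Y.perimeter := by
      unfold YoungDiagram.hookLength YoungDiagram.perimeter
      omega
    omega
end

section
/- For every positive integer s, the number of (s,s+1)-core partitions with distinct parts equals the Fibonacci number F_{s+1}, where F_1 = F_2 = 1. -/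
open Polynomial Filter

-- basic lemmas
lemma rowLen_pos_iff (Y : YoungDiagram) (i : ℕ) : 0 < Y.rowLen i ↔ i < Y.colLen 0 := by
  rw [← YoungDiagram.mem_iff_lt_rowLen, YoungDiagram.mem_iff_lt_colLen]

lemma colLen_pos_iff (Y : YoungDiagram) (j : ℕ) : 0 < Y.colLen j ↔ j < Y.rowLen 0 := by
  rw [← YoungDiagram.mem_iff_lt_colLen, YoungDiagram.mem_iff_lt_rowLen]

lemma rowLen_strictAnti {Y : YoungDiagram} (h : Y.DistinctParts) :
    ∀ i j, i < j → j < Y.colLen 0 → Y.rowLen j < Y.rowLen i := by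
  intro i j
  induction j with
  | zero => omega
  | succ j ih =>
    intro hij hj
    have hpos : 0 < Y.rowLen (j + 1) := (rowLen_pos_iff Y _).2 hj
    rcases Nat.lt_or_ge i j with h' | h'
    · exact lt_trans (h j hpos) (ih h' (by omega))
    · have : i = j := by omega
      subst this
      exact h i hpos

lemma colLen_drop {Y : YoungDiagram} (h : Y.DistinctParts) (j : ℕ) :
    Y.colLen j ≤ Y.colLen (j + 1) + 1 := by
  by_contra hc
  push_neg at hc
  set i := Y.colLen (j + 1) with hi
  have h1 : (i + 1, j) ∈ Y := YoungDiagram.mem_iff_lt_colLen.2 (by omega)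
  have h2 : (i, j + 1) ∉ Y := by rw [YoungDiagram.mem_iff_lt_colLen]; omega
  rw [YoungDiagram.mem_iff_lt_rowLen] at h1 h2
  have := h i (by omega)
  omega

lemma perim_le {Y : YoungDiagram} {s : ℕ} (hs : 0 < s) (hd : Y.DistinctParts)
    (hc : Y.IsCore s (s + 1)) : Y.rowLen 0 + Y.colLen 0 ≤ s := by
  by_contra hb
  push_neg at hb
  set L := Y.rowLen 0 with hL
  have hc0 := colLen_pos_iff Y 0
  have hL1 : 0 < L := by omega
  have hook : ∀ j, j < L → ¬ ((L - j) + Y.colLen j = s + 1 ∨ (L - j) + Y.colLen j = s + 2) := by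
    intro j hj hg
    have hmem : (0, j) ∈ Y := YoungDiagram.mem_iff_lt_rowLen.2 hj
    have := hc 0 j hmem
    simp only [YoungDiagram.hookLength] at this
    omega
  have hlast : Y.colLen (L - 1) = 1 := by
    have h1 : (0, L - 1) ∈ Y := YoungDiagram.mem_iff_lt_rowLen.2 (by omega)
    have h2 : (1, L - 1) ∉ Y := by
      intro hmem
      rw [YoungDiagram.mem_iff_lt_rowLen] at hmem
      have hd0 : 0 < Y.rowLen 1 → Y.rowLen 1 < Y.rowLen 0 := hd 0
      omega
    rw [YoungDiagram.mem_iff_lt_colLen] at h1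
    rw [YoungDiagram.mem_iff_lt_colLen] at h2
    omega
  have key : ∀ k j, j + k + 1 = L → s + 1 ≤ (L - j) + Y.colLen j → False := by
    intro k
    induction k with
    | zero =>
      intro j hjk hgj
      have hj : j = L - 1 := by omega
      subst hj
      exact hook (L - 1) (by omega) (by omega)
    | succ k ih =>
      intro j hjk hgj
      by_cases hle : (L - j) + Y.colLen j ≤ s + 2
      · exact hook j (by omega) (by omega)
      · have hdrop := colLen_drop hd j
        exact ih (j + 1) (by omega) (by omega)
  exact key (L - 1) 0 (by omega) (by omega)

lemma char {s : ℕ} (hs : 0 < s) :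
    corePartitionsDistinct s
      = {Y : YoungDiagram | Y.DistinctParts ∧ Y.rowLen 0 + Y.colLen 0 ≤ s} := by
  ext Y
  constructor
  · rintro ⟨hd, hc⟩
    exact ⟨hd, perim_le hs hd hc⟩
  · rintro ⟨hd, hb⟩
    refine ⟨hd, fun i j hmem => ?_⟩
    rw [YoungDiagram.mem_iff_lt_rowLen] at hmem
    have h1 : Y.rowLen i ≤ Y.rowLen 0 := Y.rowLen_anti 0 i (Nat.zero_le _)
    have h2 : Y.colLen j ≤ Y.colLen 0 := Y.colLen_anti 0 j (Nat.zero_le _)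
    constructor <;> · simp only [YoungDiagram.hookLength]; omega

def Tset (s : ℕ) : Finset (Finset ℕ) :=
  (Finset.Icc 1 s).powerset.filter (fun A => ∀ x ∈ A, x + A.card ≤ s)

lemma mem_Tset {s : ℕ} {A : Finset ℕ} :
    A ∈ Tset s ↔ (∀ x ∈ A, 1 ≤ x) ∧ (∀ x ∈ A, x + A.card ≤ s) := by
  simp only [Tset, Finset.mem_filter, Finset.mem_powerset]
  constructor
  · rintro ⟨h1, h2⟩
    exact ⟨fun x hx => (Finset.mem_Icc.1 (h1 hx)).1, h2⟩
  · rintro ⟨h1, h2⟩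
    refine ⟨fun x hx => Finset.mem_Icc.2 ⟨h1 x hx, ?_⟩, h2⟩
    have hc : 1 ≤ A.card := Finset.card_pos.2 ⟨x, hx⟩
    have := h2 x hx
    omega

lemma card_le_of_mem_Tset {s : ℕ} {A : Finset ℕ} (h : A ∈ Tset s) : A.card ≤ s := by
  rcases Finset.eq_empty_or_nonempty A with rfl | ⟨x, hx⟩
  · simp
  · rw [mem_Tset] at h
    have := h.1 x hx
    have := h.2 x hx
    omega

lemma Tset_succ_succ (s : ℕ) :
    Tset (s + 2) = Tset (s + 1) ∪ (Tset s).image (fun B => insert (s + 1 - B.card) B) := by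
  ext A
  simp only [Finset.mem_union, Finset.mem_image]
  constructor
  · intro hA
    rw [mem_Tset] at hA
    obtain ⟨h1, h2⟩ := hA
    by_cases hall : ∀ x ∈ A, x + A.card ≤ s + 1
    · left; exact mem_Tset.2 ⟨h1, hall⟩
    · right
      push_neg at hall
      obtain ⟨m, hm, hm2⟩ := hall
      have hmeq : m + A.card = s + 2 := by have := h2 m hm; omega
      have hk : 1 ≤ A.card := Finset.card_pos.2 ⟨m, hm⟩
      refine ⟨A.erase m, ?_, ?_⟩
      · rw [mem_Tset]
        have hce : (A.erase m).card = A.card - 1 := Finset.card_erase_of_mem hm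
        constructor
        · intro x hx
          exact h1 x (Finset.mem_of_mem_erase hx)
        · intro x hx
          have hxA := Finset.mem_of_mem_erase hx
          have hxne := Finset.ne_of_mem_erase hx
          have := h2 x hxA
          have h1x := h1 x hxA
          -- x + card ≤ s+2 and x ≠ m so x + card ≤ s+1
          have : x + A.card ≤ s + 1 := by omega
          omega
      · have hce : (A.erase m).card = A.card - 1 := Finset.card_erase_of_mem hm
        have h1m := h1 m hm
        have : s + 1 - (A.erase m).card = m := by omega
        rw [this]
        exact Finset.insert_erase hm
  · rintro (hA | ⟨B, hB, rfl⟩)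
    · rw [mem_Tset] at hA ⊢
      exact ⟨hA.1, fun x hx => by have := hA.2 x hx; omega⟩
    · rw [mem_Tset] at hB ⊢
      obtain ⟨h1, h2⟩ := hB
      have hk : B.card ≤ s := card_le_of_mem_Tset (by rw [mem_Tset]; exact ⟨h1, h2⟩)
      have hnot : s + 1 - B.card ∉ B := by
        intro hmem
        have := h2 _ hmem
        omega
      have hcard : (insert (s + 1 - B.card) B).card = B.card + 1 :=
        Finset.card_insert_of_notMem hnot
      constructor
      · intro x hx
        rcases Finset.mem_insert.1 hx with rfl | hx
        · omega
        · exact h1 x hx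
      · intro x hx
        rw [hcard]
        rcases Finset.mem_insert.1 hx with rfl | hx
        · omega
        · have := h2 x hx; omega

lemma card_Tset : ∀ s : ℕ, (Tset s).card = Nat.fib (s + 1) := by
  have key : ∀ s, (Tset (s + 2)).card = (Tset (s + 1)).card + (Tset s).card := by
    intro s
    rw [Tset_succ_succ]
    have hdisj : Disjoint (Tset (s + 1)) ((Tset s).image (fun B => insert (s + 1 - B.card) B)) := by
      rw [Finset.disjoint_right]
      rintro A hA hA'
      simp only [Finset.mem_image] at hA
      obtain ⟨B, hB, rfl⟩ := hA
      rw [mem_Tset] at hB hA'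
      have hk : B.card ≤ s := card_le_of_mem_Tset (by rw [mem_Tset]; exact hB)
      have hnot : s + 1 - B.card ∉ B := by
        intro hmem
        have := hB.2 _ hmem
        omega
      have hcard : (insert (s + 1 - B.card) B).card = B.card + 1 :=
        Finset.card_insert_of_notMem hnot
      have := hA'.2 (s + 1 - B.card) (Finset.mem_insert_self _ _)
      omega
    rw [Finset.card_union_of_disjoint hdisj, Finset.card_image_of_injOn]
    intro B1 h1 B2 h2 heq0
    simp only [Finset.mem_coe] at h1 h2
    have heq : insert (s + 1 - B1.card) B1 = insert (s + 1 - B2.card) B2 := heq0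
    have hn1 : s + 1 - B1.card ∉ B1 := by
      intro hmem; have := (mem_Tset.1 h1).2 _ hmem; omega
    have hn2 : s + 1 - B2.card ∉ B2 := by
      intro hmem; have := (mem_Tset.1 h2).2 _ hmem; omega
    have hc : B1.card = B2.card := by
      have e1 : (insert (s + 1 - B1.card) B1).card = B1.card + 1 :=
        Finset.card_insert_of_notMem hn1
      have e2 : (insert (s + 1 - B2.card) B2).card = B2.card + 1 :=
        Finset.card_insert_of_notMem hn2
      rw [heq] at e1
      omega
    have : B1 = (insert (s + 1 - B1.card) B1).erase (s + 1 - B1.card) :=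
      (Finset.erase_insert hn1).symm
    rw [this, heq, hc, Finset.erase_insert hn2]
  intro s
  induction s using Nat.twoStepInduction with
  | zero => decide
  | one => decide
  | more s ih1 ih2 =>
    rw [key s, ih1, ih2]
    conv_rhs => rw [show s + 2 + 1 = (s + 1) + 2 from rfl, Nat.fib_add_two]
    exact Nat.add_comm _ _

def partsOf (Y : YoungDiagram) : Finset ℕ := Y.rowLens.toFinset

lemma mem_rowLens_iff {Y : YoungDiagram} {x : ℕ} :
    x ∈ Y.rowLens ↔ ∃ i < Y.colLen 0, Y.rowLen i = x := by
  simp [YoungDiagram.rowLens]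

lemma rowLens_sorted_gt {Y : YoungDiagram} (hd : Y.DistinctParts) :
    Y.rowLens.Pairwise (· > ·) := by
  rw [List.pairwise_iff_get]
  intro i j hij
  have hj : (j : ℕ) < Y.colLen 0 := by
    rw [← YoungDiagram.length_rowLens]; exact j.isLt
  have g1 : Y.rowLens.get i = Y.rowLen i := by
    rw [List.get_eq_getElem, YoungDiagram.get_rowLens]
  have g2 : Y.rowLens.get j = Y.rowLen j := by
    rw [List.get_eq_getElem, YoungDiagram.get_rowLens]
  rw [g1, g2]
  exact rowLen_strictAnti hd i j hij hj

lemma rowLens_nodup {Y : YoungDiagram} (hd : Y.DistinctParts) : Y.rowLens.Nodup :=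
  (rowLens_sorted_gt hd).nodup

lemma card_partsOf {Y : YoungDiagram} (hd : Y.DistinctParts) :
    (partsOf Y).card = Y.colLen 0 := by
  rw [partsOf, List.toFinset_card_of_nodup (rowLens_nodup hd), YoungDiagram.length_rowLens]

lemma bijOn_partsOf {s : ℕ} :
    Set.BijOn partsOf {Y : YoungDiagram | Y.DistinctParts ∧ Y.rowLen 0 + Y.colLen 0 ≤ s}
      ↑(Tset s) := by
  refine ⟨?_, ?_, ?_⟩
  · rintro Y ⟨hd, hb⟩
    rw [Finset.mem_coe, mem_Tset]
    constructor
    · intro x hx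
      exact Y.pos_of_mem_rowLens x (List.mem_toFinset.1 hx)
    · intro x hx
      rw [partsOf, List.mem_toFinset, mem_rowLens_iff] at hx
      obtain ⟨i, hi, rfl⟩ := hx
      have := Y.rowLen_anti 0 i (Nat.zero_le _)
      rw [card_partsOf hd]
      omega
  · rintro Y1 ⟨hd1, _⟩ Y2 ⟨hd2, _⟩ heq
    have hperm : List.Perm Y1.rowLens Y2.rowLens :=
      List.perm_of_nodup_nodup_toFinset_eq (rowLens_nodup hd1) (rowLens_nodup hd2) heq
    have heql : Y1.rowLens = Y2.rowLens :=
      hperm.eq_of_pairwise' (List.sortedGE_iff_pairwise.1 Y1.rowLens_sorted) (List.sortedGE_iff_pairwise.1 Y2.rowLens_sorted)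
    exact YoungDiagram.equivListRowLens.injective (Subtype.ext heql)
  · intro A hA
    rw [Finset.mem_coe, mem_Tset] at hA
    obtain ⟨hpos, hcond⟩ := hA
    set l : List ℕ := A.sort (· ≥ ·) with hl
    have hsorted : l.SortedGE := List.sortedGE_iff_pairwise.2 (Finset.pairwise_sort _ _)
    have hposl : ∀ x ∈ l, 0 < x := fun x hx => hpos x ((Finset.mem_sort _).1 hx)
    set Y : YoungDiagram := YoungDiagram.ofRowLens l hsorted with hY
    have hrl : Y.rowLens = l := YoungDiagram.rowLens_ofRowLens_eq_self hposl
    have hparts : partsOf Y = A := by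
      rw [partsOf, hrl, hl, Finset.sort_toFinset]
    have hlen : Y.colLen 0 = A.card := by
      rw [← YoungDiagram.length_rowLens, hrl, hl, Finset.length_sort]
    have hgetrow : ∀ i (h : i < l.length), Y.rowLen i = l[i] := by
      intro i h
      exact YoungDiagram.rowLen_ofRowLens ⟨i, h⟩
    have hlensort : l.length = A.card := by rw [hl, Finset.length_sort]
    have hgt : l.Pairwise (· > ·) := List.sortedGT_iff_pairwise.1 (Finset.sortedGT_sort A)
    have hd : Y.DistinctParts := by
      intro i hpos2
      have hi1 : i + 1 < Y.colLen 0 := (rowLen_pos_iff Y (i + 1)).1 hpos2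
      have hi1l : i + 1 < l.length := by omega
      rw [hgetrow (i + 1) hi1l, hgetrow i (by omega)]
      exact List.pairwise_iff_get.1 hgt ⟨i, by omega⟩ ⟨i + 1, hi1l⟩ (by simp)
    refine ⟨Y, ⟨hd, ?_⟩, hparts⟩
    rcases Nat.eq_zero_or_pos A.card with hc0 | hc1
    · have h1 : Y.colLen 0 = 0 := by omega
      have h2 : Y.rowLen 0 = 0 := by
        by_contra h
        have := (rowLen_pos_iff Y 0).1 (Nat.pos_of_ne_zero h)
        omega
      omega
    · have h0l : 0 < l.length := by omega
      have hr0 : Y.rowLen 0 = l[0] := hgetrow 0 h0l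
      have hmem : l[0] ∈ A := (Finset.mem_sort _).1 (List.getElem_mem h0l)
      have := hcond _ hmem
      omega


/-- The number of `(s, s+1)`-core partitions with distinct parts is the Fibonacci number
`F_{s+1}` (with `F_1 = F_2 = 1`). -/
theorem card_corePartitionsDistinct (s : ℕ) (hs : 0 < s) :
    (corePartitionsDistinct s).ncard = Nat.fib (s + 1) := by
  rw [char hs, ← Set.ncard_image_of_injOn (bijOn_partsOf (s := s)).injOn,
    (bijOn_partsOf (s := s)).image_eq, Set.ncard_coe_finset, card_Tset]
end

section
/- For every positive integer s, the generating function G_s(q) := Σ_{p ∈ P_s} q^{|p|} of (s,s+1)-core partitions with distinct parts satisfies G_s(q) = Σ_{m=0}^{s} q^{m(m+1)/2} · [s−m choose m]_q, where [n choose m]_q denotes the Gaussian binomial coefficient. -/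
open Polynomial Filter

/-- The Gaussian (`q`-)binomial coefficient `[n choose m]_q`: the generating function,
according to size, of partitions whose Young diagram fits inside an `m × (n - m)` rectangle
(i.e. with at most `m` parts, each at most `n - m`), interpreted as `0` when `m > n`. -/
noncomputable def qBinomial (n m : ℕ) : Polynomial ℤ :=
  if m ≤ n then
    ∑ᶠ Y ∈ {Y : YoungDiagram | Y.colLen 0 ≤ m ∧ Y.rowLen 0 ≤ n - m}, (Polynomial.X : Polynomial ℤ) ^ Y.card
  else 0

/-- `G_s(q) = Σ_{p ∈ P_s} q^{|p|}`, the generating function according to size of the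
`(s, s+1)`-core partitions with distinct parts. -/
noncomputable def Gpoly (s : ℕ) : Polynomial ℤ :=
  ∑ᶠ Y ∈ corePartitionsDistinct s, (Polynomial.X : Polynomial ℤ) ^ Y.card

namespace YoungDiagram

lemma rowLen_pos_iff {Y : YoungDiagram} {i : ℕ} : 0 < Y.rowLen i ↔ i < Y.colLen 0 := by
  rw [← mem_iff_lt_rowLen, mem_iff_lt_colLen]

lemma ext_rowLen {Y Z : YoungDiagram} (h : ∀ i, Y.rowLen i = Z.rowLen i) : Y = Z := by
  ext ⟨i, j⟩
  simp only [mem_cells, mem_iff_lt_rowLen, h i]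

lemma rowLen_eq_zero_of_le {Y : YoungDiagram} {i : ℕ} (h : Y.colLen 0 ≤ i) : Y.rowLen i = 0 := by
  by_contra hc
  exact absurd (rowLen_pos_iff.1 (Nat.pos_of_ne_zero hc)) (by omega)

lemma colLen_le_succ_of_distinct {Y : YoungDiagram} (hY : Y.DistinctParts) (j : ℕ) :
    Y.colLen j ≤ Y.colLen (j + 1) + 1 := by
  by_contra hc
  push_neg at hc
  set i := Y.colLen (j + 1) with hi
  have h1 : (i + 1, j) ∈ Y := mem_iff_lt_colLen.2 (by omega)
  have h2 : j < Y.rowLen (i + 1) := mem_iff_lt_rowLen.1 h1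
  have h3 : Y.rowLen (i + 1) < Y.rowLen i := hY i (by omega)
  have h4 : (i, j + 1) ∈ Y := mem_iff_lt_rowLen.2 (by omega)
  have h5 := mem_iff_lt_colLen.1 h4
  omega

lemma rowLen_add_le {Y : YoungDiagram} (hY : Y.DistinctParts) (i : ℕ) (k : ℕ)
    (h : i + k < Y.colLen 0) : Y.rowLen (i + k) + k ≤ Y.rowLen i := by
  induction k with
  | zero => simp
  | succ k ih =>
    have hpos : 0 < Y.rowLen (i + k + 1) := rowLen_pos_iff.2 (by omega)
    have h1 := hY (i + k) hpos
    have h2 := ih (by omega)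
    have h3 : Y.rowLen (i + (k + 1)) = Y.rowLen (i + k + 1) := rfl
    omega

lemma rowLen_ge {Y : YoungDiagram} (hY : Y.DistinctParts) {i : ℕ} (h : i < Y.colLen 0) :
    Y.colLen 0 - i ≤ Y.rowLen i := by
  have h1 := rowLen_add_le hY i (Y.colLen 0 - 1 - i) (by omega)
  have h2 : 0 < Y.rowLen (i + (Y.colLen 0 - 1 - i)) := rowLen_pos_iff.2 (by omega)
  omega

lemma card_eq_sum_rowLens' {Y : YoungDiagram} {n : ℕ} (h : Y.colLen 0 ≤ n) :
    Y.card = ∑ i ∈ Finset.range n, Y.rowLen i := by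
  classical
  have hcells : Y.cells = (Finset.range n).biUnion (fun i => Y.row i) := by
    ext ⟨i, j⟩
    simp only [Finset.mem_biUnion, Finset.mem_range, mem_row_iff, mem_cells]
    constructor
    · intro hm
      refine ⟨i, ?_, hm, rfl⟩
      have h1 : (i, 0) ∈ Y := Y.up_left_mem le_rfl (Nat.zero_le _) hm
      have h2 := mem_iff_lt_colLen.1 h1
      omega
    · rintro ⟨a, -, hm, rfl⟩; exact hm
  rw [YoungDiagram.card, hcells, Finset.card_biUnion]
  · exact Finset.sum_congr rfl fun i _ => (Y.rowLen_eq_card).symm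
  · intro a _ b _ hab
    simp only [Finset.disjoint_left]
    intro c hc hc'
    rw [mem_row_iff] at hc hc'
    exact hab (hc.2 ▸ hc'.2 ▸ rfl)

lemma rowLen_ofRowLens_of_lt {w : List ℕ} {hw : w.SortedGE} {i : ℕ} (h : i < w.length) :
    (ofRowLens w hw).rowLen i = w[i] := rowLen_ofRowLens ⟨i, h⟩

lemma rowLen_ofRowLens_of_ge {w : List ℕ} {hw : w.SortedGE} {i : ℕ} (h : w.length ≤ i) :
    (ofRowLens w hw).rowLen i = 0 := by
  by_contra hc
  have h1 : (i, 0) ∈ ofRowLens w hw := mem_iff_lt_rowLen.2 (Nat.pos_of_ne_zero hc)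
  rw [mem_ofRowLens] at h1
  obtain ⟨h2, -⟩ := h1
  omega

lemma finite_of_bounds (a b : ℕ) :
    {Y : YoungDiagram | Y.colLen 0 ≤ a ∧ Y.rowLen 0 ≤ b}.Finite := by
  have hsub : {Y : YoungDiagram | Y.colLen 0 ≤ a ∧ Y.rowLen 0 ≤ b} ⊆
      YoungDiagram.cells ⁻¹' ↑((Finset.range a ×ˢ Finset.range b).powerset) := by
    rintro Y ⟨h1, h2⟩
    simp only [Set.mem_preimage, Finset.mem_coe, Finset.mem_powerset]
    rintro ⟨i, j⟩ hm
    rw [mem_cells] at hm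
    have hi : (i, 0) ∈ Y := Y.up_left_mem le_rfl (Nat.zero_le _) hm
    have hj : j < Y.rowLen i := mem_iff_lt_rowLen.1 hm
    have h3 := mem_iff_lt_colLen.1 hi
    have h4 := Y.rowLen_anti 0 i (Nat.zero_le _)
    simp only [Finset.mem_product, Finset.mem_range]
    omega
  refine Set.Finite.subset (Set.Finite.preimage ?_ (Finset.finite_toSet _)) hsub
  intro x _ y _ hxy
  exact YoungDiagram.ext hxy

end YoungDiagram

namespace YoungDiagram

lemma isCore_iff_perimeter_lt {Y : YoungDiagram} (hY : Y.DistinctParts) {s : ℕ} (hs : 0 < s) :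
    Y.IsCore s (s + 1) ↔ Y.perimeter < s := by
  constructor
  · intro hc
    by_contra hp
    push_neg at hp
    have hr0 : 0 < Y.rowLen 0 := by
      by_contra h0
      push_neg at h0
      have h1 : Y.colLen 0 = 0 := by
        by_contra hcl
        have := rowLen_pos_iff.2 (Nat.pos_of_ne_zero hcl)
        omega
      have : Y.perimeter = 0 := by
        unfold perimeter; omega
      omega
    set r := Y.rowLen 0 with hr
    have hc0 : 0 < Y.colLen 0 := rowLen_pos_iff.1 hr0
    set f : ℕ → ℕ := fun j => (r - 1 - j) + Y.colLen j with hf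
    have hf0 : f 0 = Y.perimeter := by
      unfold perimeter
      simp only [hf]
      omega
    have hcolpos : ∀ j < r, 0 < Y.colLen j := by
      intro j hj
      exact mem_iff_lt_colLen.1 (mem_iff_lt_rowLen.2 (show j < Y.rowLen 0 from hj))
    have hfr1 : f (r - 1) = 1 := by
      have h2 : 0 < Y.colLen (r - 1) := hcolpos _ (by omega)
      have h3 : (1, r - 1) ∉ Y := by
        intro hm
        have h4 : r - 1 < Y.rowLen 1 := mem_iff_lt_rowLen.1 hm
        have h5 : Y.rowLen 1 < Y.rowLen 0 := hY 0 (show 0 < Y.rowLen 1 by omega)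
        omega
      have h6 : ¬ (1 < Y.colLen (r - 1)) := fun hlt => h3 (mem_iff_lt_colLen.2 hlt)
      simp only [hf]
      omega
    have hstep : ∀ j, j + 1 < r → f (j + 1) < f j ∧ f j ≤ f (j + 1) + 2 := by
      intro j hj
      have h1 := colLen_le_succ_of_distinct hY j
      have h2 := Y.colLen_anti j (j + 1) (by omega)
      have h3 := hcolpos j (by omega)
      simp only [hf]
      omega
    have key : ∃ j < r, f j = s ∨ f j = s + 1 := by
      have hex : ∃ j, j < r ∧ f j ≤ s + 1 := ⟨r - 1, by omega, by rw [hfr1]; omega⟩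
      classical
      obtain ⟨j0, hj0r, hj0le, hmin⟩ :
          ∃ j, j < r ∧ f j ≤ s + 1 ∧ ∀ k < j, ¬(k < r ∧ f k ≤ s + 1) :=
        ⟨Nat.find hex, (Nat.find_spec hex).1, (Nat.find_spec hex).2,
          fun k hk => Nat.find_min hex hk⟩
      rcases Nat.eq_zero_or_pos j0 with h0 | h0
      · subst h0
        exact ⟨0, hj0r, by omega⟩
      · have h1 : j0 - 1 < r := by omega
        have hlt := hmin (j0 - 1) (by omega)
        have h2 : s + 2 ≤ f (j0 - 1) := by
          by_contra hcon
          exact hlt ⟨h1, by omega⟩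
        have h3 := hstep (j0 - 1) (by omega)
        have he : j0 - 1 + 1 = j0 := by omega
        rw [he] at h3
        exact ⟨j0, hj0r, by omega⟩
    obtain ⟨j, hjr, hfj⟩ := key
    have hm : (0, j) ∈ Y := mem_iff_lt_rowLen.2 hjr
    have hhook : Y.hookLength 0 j = f j := by
      unfold hookLength
      have := hcolpos j hjr
      simp only [hf]
      omega
    obtain ⟨hn1, hn2⟩ := hc 0 j hm
    rw [hhook] at hn1 hn2
    omega
  · intro hp i j hm
    have h1 : j < Y.rowLen i := mem_iff_lt_rowLen.1 hm
    have h2 : i < Y.colLen j := mem_iff_lt_colLen.1 hm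
    have h3 := Y.rowLen_anti 0 i (Nat.zero_le _)
    have h4 := Y.colLen_anti 0 j (Nat.zero_le _)
    unfold hookLength
    unfold perimeter at hp
    constructor <;> omega

end YoungDiagram

namespace YoungDiagram

/-- Add a staircase `(m, m-1, ..., 1)` to the first `m` rows of a diagram. -/
noncomputable def addStair (m : ℕ) (μ : YoungDiagram) : YoungDiagram :=
  YoungDiagram.ofRowLens ((List.range m).map fun i => μ.rowLen i + (m - i)) (by
    rw [List.sortedGE_iff_pairwise, List.pairwise_iff_getElem]
    intro a b ha hb hab
    simp only [List.getElem_map, List.getElem_range, List.length_map, List.length_range] at *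
    have h1 := μ.rowLen_anti a b (le_of_lt hab)
    omega)

/-- Remove a staircase `(m, m-1, ..., 1)` from the first `m` rows of a diagram
(defined to be `⊥` if the result would not be a partition). -/
noncomputable def removeStair (m : ℕ) (Y : YoungDiagram) : YoungDiagram :=
  if h : (((List.range m).map fun i => Y.rowLen i - (m - i)).SortedGE)
  then YoungDiagram.ofRowLens _ h else ⊥

lemma rowLen_addStair_lt (m : ℕ) (μ : YoungDiagram) {i : ℕ} (h : i < m) :
    (addStair m μ).rowLen i = μ.rowLen i + (m - i) := by
  rw [addStair, rowLen_ofRowLens_of_lt (by simpa using h)]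
  simp

lemma rowLen_addStair_ge (m : ℕ) (μ : YoungDiagram) {i : ℕ} (h : m ≤ i) :
    (addStair m μ).rowLen i = 0 := by
  rw [addStair, rowLen_ofRowLens_of_ge (by simpa using h)]

/-- The set of distinct-part partitions with perimeter `< s` and exactly `m` parts. -/
def setA (s m : ℕ) : Set YoungDiagram :=
  {Y | Y.DistinctParts ∧ Y.perimeter < s ∧ Y.colLen 0 = m}

lemma setA_sorted {s m : ℕ} {Y : YoungDiagram} (hY : Y ∈ setA s m) :
    (((List.range m).map fun i => Y.rowLen i - (m - i)).SortedGE) := by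
  obtain ⟨hd, hp, hc⟩ := hY
  rw [List.sortedGE_iff_pairwise, List.pairwise_iff_getElem]
  intro a b ha hb hab
  simp only [List.length_map, List.length_range] at ha hb
  simp only [List.getElem_map, List.getElem_range]
  have h1 := rowLen_add_le hd a (b - a) (by omega)
  have h2 : a + (b - a) = b := by omega
  rw [h2] at h1
  have h3 := rowLen_ge hd (show b < Y.colLen 0 by omega)
  omega

lemma rowLen_removeStair_lt {s m : ℕ} {Y : YoungDiagram} (hY : Y ∈ setA s m) {i : ℕ}
    (h : i < m) : (removeStair m Y).rowLen i = Y.rowLen i - (m - i) := by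
  rw [removeStair, dif_pos (setA_sorted hY), rowLen_ofRowLens_of_lt (by simpa using h)]
  simp

lemma rowLen_removeStair_ge {s m : ℕ} {Y : YoungDiagram} (hY : Y ∈ setA s m) {i : ℕ}
    (h : m ≤ i) : (removeStair m Y).rowLen i = 0 := by
  rw [removeStair, dif_pos (setA_sorted hY), rowLen_ofRowLens_of_ge (by simpa using h)]

lemma setA_rowLen_zero_add_le {s m : ℕ} {Y : YoungDiagram} (hY : Y ∈ setA s m) :
    Y.rowLen 0 + m ≤ s ∧ 0 < s := by
  obtain ⟨hd, hp, hc⟩ := hY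
  rcases Nat.eq_zero_or_pos m with h0 | h0
  · have : Y.rowLen 0 = 0 := rowLen_eq_zero_of_le (by omega)
    unfold perimeter at hp
    omega
  · have h1 : 0 < Y.rowLen 0 := rowLen_pos_iff.2 (by omega)
    unfold perimeter at hp
    omega

lemma removeStair_mem {s m : ℕ} {Y : YoungDiagram} (hY : Y ∈ setA s m) :
    (removeStair m Y).colLen 0 ≤ m ∧ (removeStair m Y).rowLen 0 ≤ s - m - m := by
  obtain ⟨h1, h2⟩ := setA_rowLen_zero_add_le hY
  constructor
  · by_contra hcon
    push_neg at hcon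
    have h3 : 0 < (removeStair m Y).rowLen m := rowLen_pos_iff.2 hcon
    rw [rowLen_removeStair_ge hY le_rfl] at h3
    omega
  · rcases Nat.eq_zero_or_pos m with h0 | h0
    · subst h0
      rw [rowLen_removeStair_ge hY (le_refl 0)]
      omega
    · rw [rowLen_removeStair_lt hY h0]
      omega

lemma addStair_mem {s m : ℕ} (h2m : m + m ≤ s) (hs : 0 < s) {μ : YoungDiagram}
    (hμ : μ.colLen 0 ≤ m ∧ μ.rowLen 0 ≤ s - m - m) : addStair m μ ∈ setA s m := by
  obtain ⟨hc, hr⟩ := hμ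
  have hrow : ∀ i < m, (addStair m μ).rowLen i = μ.rowLen i + (m - i) :=
    fun i hi => rowLen_addStair_lt m μ hi
  have hcol : (addStair m μ).colLen 0 = m := by
    apply le_antisymm
    · by_contra hcon
      push_neg at hcon
      have h3 : 0 < (addStair m μ).rowLen m := rowLen_pos_iff.2 hcon
      rw [rowLen_addStair_ge m μ le_rfl] at h3
      omega
    · rcases Nat.eq_zero_or_pos m with h0 | h0
      · omega
      · have h3 : 0 < (addStair m μ).rowLen (m - 1) := by
          rw [hrow (m - 1) (by omega)]
          omega
        have h4 := rowLen_pos_iff.1 h3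
        omega
  refine ⟨?_, ?_, hcol⟩
  · intro i hi
    rcases Nat.lt_or_ge (i + 1) m with h | h
    · have e1 := hrow i (by omega)
      have e2 := hrow (i + 1) h
      have h4 := μ.rowLen_anti i (i + 1) (by omega)
      omega
    · rw [rowLen_addStair_ge m μ h] at hi
      omega
  · unfold perimeter
    rw [hcol]
    rcases Nat.eq_zero_or_pos m with h0 | h0
    · have : (addStair m μ).rowLen 0 = 0 := rowLen_addStair_ge m μ (by omega)
      omega
    · have := hrow 0 h0
      omega

lemma removeStair_addStair {m : ℕ} {s : ℕ} {μ : YoungDiagram}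
    (hμ : μ.colLen 0 ≤ m) (hmem : addStair m μ ∈ setA s m) :
    removeStair m (addStair m μ) = μ := by
  apply ext_rowLen
  intro i
  rcases Nat.lt_or_ge i m with h | h
  · rw [rowLen_removeStair_lt hmem h, rowLen_addStair_lt m μ h]
    omega
  · rw [rowLen_removeStair_ge hmem h, rowLen_eq_zero_of_le (le_trans hμ h)]

lemma addStair_removeStair {s m : ℕ} {Y : YoungDiagram} (hY : Y ∈ setA s m) :
    addStair m (removeStair m Y) = Y := by
  apply ext_rowLen
  intro i
  rcases Nat.lt_or_ge i m with h | h
  · rw [rowLen_addStair_lt m _ h, rowLen_removeStair_lt hY h]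
    have h1 := rowLen_ge hY.1 (show i < Y.colLen 0 by rw [hY.2.2]; exact h)
    have hc2 := hY.2.2
    omega
  · rw [rowLen_addStair_ge m _ h]
    exact (rowLen_eq_zero_of_le (by rw [hY.2.2]; exact h)).symm

end YoungDiagram

namespace YoungDiagram

lemma sum_range_sub_eq_tri (m : ℕ) :
    ∑ i ∈ Finset.range m, (m - i) = m * (m + 1) / 2 := by
  have hrefl := Finset.sum_range_reflect (fun j => j + 1) m
  have h1 : ∑ i ∈ Finset.range m, (m - i) = ∑ i ∈ Finset.range m, (m - 1 - i + 1) := by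
    apply Finset.sum_congr rfl
    intro i hi
    rw [Finset.mem_range] at hi
    omega
  rw [h1, hrefl]
  have h2 : ∑ i ∈ Finset.range (m + 1), i = (∑ i ∈ Finset.range m, (i + 1)) + 0 :=
    Finset.sum_range_succ' id m
  have h3 := Finset.sum_range_id (m + 1)
  simp only [add_zero] at h2
  rw [← h2, h3]
  simp [Nat.mul_comm]

lemma card_removeStair {s m : ℕ} {Y : YoungDiagram} (hY : Y ∈ setA s m) :
    Y.card = m * (m + 1) / 2 + (removeStair m Y).card := by
  rw [card_eq_sum_rowLens' (le_of_eq hY.2.2), card_eq_sum_rowLens' (removeStair_mem hY).1]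
  have h1 : ∀ i ∈ Finset.range m, Y.rowLen i = (m - i) + (removeStair m Y).rowLen i := by
    intro i hi
    rw [Finset.mem_range] at hi
    rw [rowLen_removeStair_lt hY hi]
    have h2 := rowLen_ge hY.1 (show i < Y.colLen 0 by rw [hY.2.2]; exact hi)
    have h3 := hY.2.2
    omega
  rw [Finset.sum_congr rfl h1, Finset.sum_add_distrib, sum_range_sub_eq_tri]

lemma setA_finite (s m : ℕ) : (setA s m).Finite := by
  apply Set.Finite.subset (finite_of_bounds s s)
  intro Y hY
  have h1 := setA_rowLen_zero_add_le hY
  have h2 := hY.2.2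
  exact ⟨by omega, by omega⟩

lemma sum_setA_eq (s m : ℕ) (hs : 0 < s) (hm : m ≤ s) :
    ∑ Y ∈ (setA_finite s m).toFinset, (Polynomial.X : Polynomial ℤ) ^ Y.card
      = Polynomial.X ^ (m * (m + 1) / 2) * qBinomial (s - m) m := by
  classical
  rcases Nat.lt_or_ge s (m + m) with h2 | h2
  · have hq : ¬ (m ≤ s - m) := by omega
    rw [qBinomial, if_neg hq, mul_zero]
    have hempty : (setA_finite s m).toFinset = ∅ := by
      ext Y
      simp only [Set.Finite.mem_toFinset, Finset.notMem_empty, iff_false]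
      intro hY
      obtain ⟨h1, h0⟩ := setA_rowLen_zero_add_le hY
      have h3 := rowLen_ge hY.1 (show 0 < Y.colLen 0 by rw [hY.2.2]; omega)
      rw [hY.2.2] at h3
      omega
    rw [hempty, Finset.sum_empty]
  · have hq : m ≤ s - m := by omega
    rw [qBinomial, if_pos hq]
    have hRfin : {Y : YoungDiagram | Y.colLen 0 ≤ m ∧ Y.rowLen 0 ≤ s - m - m}.Finite :=
      finite_of_bounds m (s - m - m)
    rw [← Set.Finite.coe_toFinset hRfin, finsum_mem_coe_finset, Finset.mul_sum]
    refine Finset.sum_nbij' (removeStair m) (addStair m) ?_ ?_ ?_ ?_ ?_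
    · intro Y hY
      rw [Set.Finite.mem_toFinset] at *
      exact removeStair_mem hY
    · intro μ hμ
      rw [Set.Finite.mem_toFinset] at *
      exact addStair_mem h2 hs hμ
    · intro Y hY
      rw [Set.Finite.mem_toFinset] at hY
      exact addStair_removeStair hY
    · intro μ hμ
      rw [Set.Finite.mem_toFinset] at hμ
      exact removeStair_addStair hμ.1 (addStair_mem h2 hs hμ)
    · intro Y hY
      rw [Set.Finite.mem_toFinset] at hY
      rw [card_removeStair hY, pow_add]

end YoungDiagram


open YoungDiagram in
/-- For every positive integer `s`,
`G_s(q) = Σ_{m=0}^{s} q^{m(m+1)/2} [s - m choose m]_q`. -/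
theorem Gpoly_eq_sum_qBinomial (s : ℕ) (hs : 0 < s) :
    Gpoly s = ∑ m ∈ Finset.range (s + 1),
      Polynomial.X ^ (m * (m + 1) / 2) * qBinomial (s - m) m := by
  classical
  have hPeq : corePartitionsDistinct s = {Y : YoungDiagram | Y.DistinctParts ∧ Y.perimeter < s} := by
    ext Y
    exact and_congr_right fun hd => isCore_iff_perimeter_lt hd hs
  have hbound : ∀ Y : YoungDiagram, Y.perimeter < s → Y.colLen 0 ≤ s ∧ Y.rowLen 0 ≤ s := by
    intro Y hp
    have h3 : Y.colLen 0 = 0 ∨ 0 < Y.rowLen 0 := by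
      rcases Nat.eq_zero_or_pos (Y.colLen 0) with h | h
      · exact Or.inl h
      · exact Or.inr (rowLen_pos_iff.2 h)
    have h4 : Y.rowLen 0 = 0 ∨ 0 < Y.colLen 0 := by
      rcases Nat.eq_zero_or_pos (Y.rowLen 0) with h | h
      · exact Or.inl h
      · exact Or.inr (rowLen_pos_iff.1 h)
    unfold YoungDiagram.perimeter at hp
    omega
  have hQfin : {Y : YoungDiagram | Y.DistinctParts ∧ Y.perimeter < s}.Finite := by
    apply Set.Finite.subset (finite_of_bounds s s)
    rintro Y ⟨hd, hp⟩
    exact hbound Y hp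
  rw [Gpoly, hPeq, ← Set.Finite.coe_toFinset hQfin, finsum_mem_coe_finset]
  have hsplit : hQfin.toFinset
      = (Finset.range (s + 1)).biUnion (fun m => (setA_finite s m).toFinset) := by
    ext Y
    simp only [Set.Finite.mem_toFinset, Finset.mem_biUnion, Finset.mem_range]
    constructor
    · rintro ⟨hd, hp⟩
      refine ⟨Y.colLen 0, ?_, hd, hp, rfl⟩
      have := hbound Y hp
      omega
    · rintro ⟨m, hm, hd, hp, hc⟩
      exact ⟨hd, hp⟩
  rw [hsplit, Finset.sum_biUnion ?_]
  · refine Finset.sum_congr rfl fun m hm => sum_setA_eq s m hs ?_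
    rw [Finset.mem_range] at hm
    omega
  · intro a _ b _ hab
    rw [Function.onFun, Finset.disjoint_left]
    intro Y hYa hYb
    rw [Set.Finite.mem_toFinset] at hYa hYb
    exact hab (hYa.2.2 ▸ hYb.2.2 ▸ rfl)
end

section
/- The generating functions G_s(q) of (s,s+1)-core partitions with distinct parts satisfy G_1(q) = 1, G_2(q) = 1 + q, G_3(q) = 1 + q + q^2, G_4(q) = 1 + q + q^2 + 2q^3, and for all s ≥ 5 the recurrence G_s(q) = G_{s−1}(q) + q^{s−1} G_{s−3}(q) + q^{s−1} G_{s−4}(q). -/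
open Polynomial Filter

namespace CoreAux


lemma card_cellsOfRowLens (w : List ℕ) : (YoungDiagram.cellsOfRowLens w).card = w.sum := by
  induction w with
  | nil => simp [YoungDiagram.cellsOfRowLens]
  | cons a l ih =>
    rw [YoungDiagram.cellsOfRowLens, Finset.card_union_of_disjoint, Finset.card_map, ih]
    · simp [List.sum_cons]
    · simp only [Finset.disjoint_left]
      rintro ⟨i, j⟩ hm hm2
      simp only [Finset.mem_product, Finset.mem_singleton] at hm
      simp only [Finset.mem_map, Function.Embedding.prodMap, Function.Embedding.coeFn_mk,
        Prod.exists] at hm2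
      obtain ⟨a', b', _, heq⟩ := hm2
      rw [Prod.ext_iff] at heq
      simp at heq
      omega

/-- The Young diagram whose parts are the elements of `S`. -/
noncomputable def fromFinset (S : Finset ℕ) : YoungDiagram :=
  YoungDiagram.ofRowLens (S.sort (· ≥ ·)) (Finset.pairwise_sort _ _).sortedGE

lemma card_fromFinset (S : Finset ℕ) : (fromFinset S).card = ∑ x ∈ S, x := by
  have h1 : (S.toList.map id).sum = ∑ x ∈ S, id x := Finset.sum_map_toList S id
  simp only [List.map_id, id] at h1
  rw [← h1, ← (Finset.sort_perm_toList S (· ≥ ·)).sum_eq]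
  exact card_cellsOfRowLens _

lemma rowLens_fromFinset {S : Finset ℕ} (hpos : ∀ x ∈ S, 0 < x) :
    (fromFinset S).rowLens = S.sort (· ≥ ·) := by
  apply YoungDiagram.rowLens_ofRowLens_eq_self
  intro x hx
  exact hpos x ((Finset.mem_sort _).mp hx)

lemma rowLen_pos_iff {Y : YoungDiagram} {i : ℕ} : 0 < Y.rowLen i ↔ i < Y.colLen 0 := by
  rw [← YoungDiagram.mem_iff_lt_rowLen, YoungDiagram.mem_iff_lt_colLen]

lemma rowLen_eq_get {Y : YoungDiagram} {i : ℕ} (h : i < Y.rowLens.length) :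
    Y.rowLen i = Y.rowLens.get ⟨i, h⟩ := (YoungDiagram.get_rowLens (h := h)).symm

lemma rowLen_eq_zero {Y : YoungDiagram} {i : ℕ} (h : Y.colLen 0 ≤ i) : Y.rowLen i = 0 := by
  by_contra hc
  exact absurd (rowLen_pos_iff.mp (Nat.pos_of_ne_zero hc)) (by omega)

lemma colLen_fromFinset {S : Finset ℕ} (hpos : ∀ x ∈ S, 0 < x) :
    (fromFinset S).colLen 0 = S.card := by
  rw [← YoungDiagram.length_rowLens, rowLens_fromFinset hpos, Finset.length_sort]

lemma distinctParts_fromFinset {S : Finset ℕ} (hpos : ∀ x ∈ S, 0 < x) :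
    (fromFinset S).DistinctParts := by
  intro i hi
  have hlen : (fromFinset S).rowLens.length = S.card := by
    rw [rowLens_fromFinset hpos, Finset.length_sort]
  have h1 : i + 1 < (fromFinset S).colLen 0 := rowLen_pos_iff.mp hi
  rw [colLen_fromFinset hpos] at h1
  rw [rowLen_eq_get (i := i + 1) (by omega), rowLen_eq_get (i := i) (by omega)]
  have hsorted : ((fromFinset S).rowLens).Pairwise (· > ·) := by
    rw [rowLens_fromFinset hpos]; exact (Finset.sortedGT_sort S).pairwise
  exact List.pairwise_iff_get.mp hsorted ⟨i, by omega⟩ ⟨i + 1, by omega⟩ (by simp)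

lemma mem_rowLens_iff_exists {Y : YoungDiagram} {x : ℕ} :
    x ∈ Y.rowLens ↔ ∃ i < Y.colLen 0, Y.rowLen i = x := by
  constructor
  · intro hx
    obtain ⟨⟨i, hi⟩, rfl⟩ := List.mem_iff_get.mp hx
    exact ⟨i, by rwa [YoungDiagram.length_rowLens] at hi, rowLen_eq_get _⟩
  · rintro ⟨i, hi, rfl⟩
    have : i < Y.rowLens.length := by rwa [YoungDiagram.length_rowLens]
    rw [rowLen_eq_get this]
    exact List.get_mem _ _

lemma rowLen_zero_fromFinset_mem {S : Finset ℕ} (hpos : ∀ x ∈ S, 0 < x) (hS : S.Nonempty) :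
    (fromFinset S).rowLen 0 ∈ S := by
  have hcard : 0 < S.card := Finset.card_pos.mpr hS
  have : (fromFinset S).rowLen 0 ∈ (fromFinset S).rowLens := by
    apply mem_rowLens_iff_exists.mpr
    exact ⟨0, by rw [colLen_fromFinset hpos]; omega, rfl⟩
  rw [rowLens_fromFinset hpos, Finset.mem_sort] at this
  exact this

lemma mem_le_rowLen_zero {Y : YoungDiagram} {x : ℕ} (hx : x ∈ Y.rowLens) :
    x ≤ Y.rowLen 0 := by
  obtain ⟨i, _, rfl⟩ := mem_rowLens_iff_exists.mp hx
  exact Y.rowLen_anti 0 i (by omega)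

end CoreAux
namespace CoreAux

lemma rowLens_sorted_gt {Y : YoungDiagram} (hY : Y.DistinctParts) :
    Y.rowLens.Pairwise (· > ·) := by
  have hstep : ∀ i : ℕ, i + 1 < Y.colLen 0 → Y.rowLen (i + 1) < Y.rowLen i := by
    intro i hi
    exact hY i (rowLen_pos_iff.mpr hi)
  have key : ∀ (d i : ℕ), i + d + 1 < Y.colLen 0 → Y.rowLen (i + d + 1) < Y.rowLen i := by
    intro d
    induction d with
    | zero => intro i h; exact hstep i (by omega)
    | succ d ih =>
      intro i h
      have h1 : (i + 1) + d + 1 < Y.colLen 0 := by omega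
      have := ih (i + 1) h1
      have h2 := hstep i (by omega)
      have : Y.rowLen (i + (d + 1) + 1) = Y.rowLen ((i + 1) + d + 1) := by ring_nf
      omega
  rw [List.pairwise_iff_get]
  intro i j hij
  have hj : (j : ℕ) < Y.colLen 0 := by
    have h1 := j.isLt
    have h2 : Y.rowLens.length = Y.colLen 0 := YoungDiagram.length_rowLens
    omega
  have hkey := key ((j : ℕ) - (i : ℕ) - 1) (i : ℕ) (by omega)
  have heq : (i : ℕ) + ((j : ℕ) - (i : ℕ) - 1) + 1 = (j : ℕ) := by omega
  rw [heq] at hkey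
  show Y.rowLens.get j < Y.rowLens.get i
  rw [show Y.rowLens.get j = Y.rowLen j from YoungDiagram.get_rowLens,
    show Y.rowLens.get i = Y.rowLen i from YoungDiagram.get_rowLens]
  exact hkey

lemma ofRowLens_congr {w w' : List ℕ} (h : w = w') (hw : w.SortedGE)
    (hw' : w'.SortedGE) : YoungDiagram.ofRowLens w hw = YoungDiagram.ofRowLens w' hw' := by
  subst h; rfl

lemma fromFinset_toFinset {Y : YoungDiagram} (hY : Y.DistinctParts) :
    fromFinset Y.rowLens.toFinset = Y := by
  have hnd : Y.rowLens.Nodup := (rowLens_sorted_gt hY).nodup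
  have hsort : Y.rowLens.toFinset.sort (· ≥ ·) = Y.rowLens :=
    (List.toFinset_sort (· ≥ ·) hnd).mpr Y.rowLens_sorted.pairwise
  rw [fromFinset, ofRowLens_congr hsort _ Y.rowLens_sorted]
  exact YoungDiagram.ofRowLens_to_rowLens_eq_self

lemma fromFinset_injOn {S S' : Finset ℕ} (hpos : ∀ x ∈ S, 0 < x) (hpos' : ∀ x ∈ S', 0 < x)
    (h : fromFinset S = fromFinset S') : S = S' := by
  have h1 : S.sort (· ≥ ·) = S'.sort (· ≥ ·) := by
    rw [← rowLens_fromFinset hpos, ← rowLens_fromFinset hpos', h]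
  ext x
  rw [← Finset.mem_sort (· ≥ ·), h1, Finset.mem_sort]

lemma perimeter_fromFinset_le {S : Finset ℕ} {n : ℕ} (hpos : ∀ x ∈ S, 0 < x)
    (hcond : ∀ x ∈ S, S.card + x ≤ n + 1) : (fromFinset S).perimeter ≤ n := by
  rcases S.eq_empty_or_nonempty with rfl | hne
  · have hc : (fromFinset ∅).colLen 0 = 0 := by
      rw [colLen_fromFinset (by simp)]; simp
    have hr : (fromFinset ∅).rowLen 0 = 0 := rowLen_eq_zero (by omega)
    rw [YoungDiagram.perimeter, hc, hr]
    omega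
  · have hmem := rowLen_zero_fromFinset_mem hpos hne
    have hcard : 0 < S.card := Finset.card_pos.mpr hne
    have := hcond _ hmem
    rw [YoungDiagram.perimeter, colLen_fromFinset hpos]
    omega

lemma cond_of_perimeter {Y : YoungDiagram} {n : ℕ} (hperim : Y.perimeter ≤ n) {x : ℕ}
    (hx : x ∈ Y.rowLens) : Y.colLen 0 + x ≤ n + 1 := by
  have h1 := mem_le_rowLen_zero hx
  have h2 := Y.pos_of_mem_rowLens x hx
  have h3 : 0 < Y.rowLens.length := List.length_pos_iff.mpr (by intro h; rw [h] at hx; simp at hx)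
  rw [YoungDiagram.length_rowLens] at h3
  rw [YoungDiagram.perimeter] at hperim
  omega

end CoreAux
namespace CoreAux

lemma hookLength_le_perimeter {Y : YoungDiagram} {i j : ℕ} (h : (i, j) ∈ Y) :
    Y.hookLength i j ≤ Y.perimeter := by
  have h1 : j < Y.rowLen i := YoungDiagram.mem_iff_lt_rowLen.mp h
  have h2 : i < Y.colLen j := YoungDiagram.mem_iff_lt_colLen.mp h
  have h3 : Y.rowLen i ≤ Y.rowLen 0 := Y.rowLen_anti 0 i (by omega)
  have h4 : Y.colLen j ≤ Y.colLen 0 := Y.colLen_anti 0 j (by omega)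
  have e1 : Y.hookLength i j = (Y.rowLen i - j) + (Y.colLen j - i) - 1 := rfl
  have e2 : Y.perimeter = Y.rowLen 0 + Y.colLen 0 - 1 := rfl
  omega

/-- Covering lemma: in a distinct-parts diagram, any value `x` between `1` and the first-column
hook of row `i` is either a hook length in row `i`, or its complement is a first-column hook
further down. -/
lemma row_covering {Y : YoungDiagram} (hY : Y.DistinctParts) {i x : ℕ}
    (hrow : 0 < Y.rowLen i) (hx1 : 1 ≤ x) (hx2 : x ≤ Y.hookLength i 0) :
    (∃ j < Y.rowLen i, Y.hookLength i j = x) ∨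
    (∃ k, i < k ∧ (k, 0) ∈ Y ∧ Y.hookLength k 0 + x = Y.hookLength i 0) := by
  set L := Y.rowLen i with hL
  set ℓ := Y.colLen 0 with hℓ
  have hiℓ : i < ℓ := rowLen_pos_iff.mp hrow
  set g : ℕ → ℕ := fun j => j + (ℓ - Y.colLen j) with hg
  have hβdef : Y.hookLength i 0 = (Y.rowLen i - 0) + (Y.colLen 0 - i) - 1 := rfl
  set β := Y.hookLength i 0 with hβ
  -- the basic hook identity along row i
  have hookid : ∀ j < L, Y.hookLength i j + g j = β := by
    intro j hj
    have hmem : (i, j) ∈ Y := YoungDiagram.mem_iff_lt_rowLen.mpr hj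
    have h2 : i < Y.colLen j := YoungDiagram.mem_iff_lt_colLen.mp hmem
    have h4 : Y.colLen j ≤ ℓ := Y.colLen_anti 0 j (by omega)
    have e1 : Y.hookLength i j = (Y.rowLen i - j) + (Y.colLen j - i) - 1 := rfl
    simp only [hg]
    omega
  -- the last column of row i has length exactly i+1 (uses distinct parts)
  have hcollast : Y.colLen (L - 1) = i + 1 := by
    have hmem : (i, L - 1) ∈ Y := YoungDiagram.mem_iff_lt_rowLen.mpr (by omega)
    have h2 : i < Y.colLen (L - 1) := YoungDiagram.mem_iff_lt_colLen.mp hmem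
    have hnot : (i + 1, L - 1) ∉ Y := by
      rw [YoungDiagram.mem_iff_lt_rowLen]
      rcases Nat.eq_zero_or_pos (Y.rowLen (i + 1)) with h0 | h0
      · omega
      · have := hY i h0; omega
    rw [YoungDiagram.mem_iff_lt_colLen] at hnot
    omega
  have hglast : g (L - 1) + 1 = β := by
    simp only [hg, hcollast]
    omega
  have hg0 : g 0 = 0 := by simp [hg, hℓ]
  set b := β - x with hb
  by_cases hatt : ∃ j, j < L ∧ g j = b
  · obtain ⟨j, hj, hgj⟩ := hatt
    left
    refine ⟨j, hj, ?_⟩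
    have := hookid j hj
    omega
  · right
    have hne : g (L - 1) ≠ b := fun h => hatt ⟨L - 1, by omega, h⟩
    have hex : b < g (L - 1) := by omega
    have H : ∃ m, b < g m := ⟨L - 1, hex⟩
    set j0 := Nat.find H with hj0
    have hspec : b < g j0 := Nat.find_spec H
    have hj0le : j0 ≤ L - 1 := Nat.find_min' H hex
    have hj0ne : j0 ≠ 0 := by
      intro h; rw [h, hg0] at hspec; omega
    set j := j0 - 1 with hjdef
    have hjlt : ¬ b < g j := Nat.find_min H (by omega)
    have hjL : j < L := by omega
    have hgjne : g j ≠ b := fun h => hatt ⟨j, hjL, h⟩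
    have hgjb : g j < b := by omega
    have hsucc : j + 1 = j0 := by omega
    have hj1L : j + 1 < L := by omega
    set cj := Y.colLen j with hcj
    set cj' := Y.colLen (j + 1) with hcj'
    have hcle : cj' ≤ cj := Y.colLen_anti j (j + 1) (by omega)
    have hcjℓ : cj ≤ ℓ := Y.colLen_anti 0 j (by omega)
    have hicj' : i < cj' :=
      YoungDiagram.mem_iff_lt_colLen.mp (YoungDiagram.mem_iff_lt_rowLen.mpr hj1L)
    have hgje : g j = j + (ℓ - cj) := rfl
    have hgj1e : g (j + 1) = (j + 1) + (ℓ - cj') := by simp only [hg, hcj']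
    have hspec' : b < (j + 1) + (ℓ - cj') := by rw [← hgj1e, hsucc]; exact hspec
    set k := cj - (b - g j) with hk
    have hkcj : k < cj := by omega
    have hcj'k : cj' ≤ k := by omega
    have hkmemj : (k, j) ∈ Y := YoungDiagram.mem_iff_lt_colLen.mpr (by omega)
    have hknotmem : (k, j + 1) ∉ Y := by
      rw [YoungDiagram.mem_iff_lt_colLen]; omega
    have hrlk1 : j < Y.rowLen k := YoungDiagram.mem_iff_lt_rowLen.mp hkmemj
    rw [YoungDiagram.mem_iff_lt_rowLen] at hknotmem
    have hrlk : Y.rowLen k = j + 1 := by omega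
    have hik : i < k := by omega
    have hkℓ : k < ℓ := by omega
    have hkmem0 : (k, 0) ∈ Y := YoungDiagram.mem_iff_lt_rowLen.mpr (by omega)
    refine ⟨k, hik, hkmem0, ?_⟩
    have e1 : Y.hookLength k 0 = (Y.rowLen k - 0) + (Y.colLen 0 - k) - 1 := rfl
    rw [e1, hrlk]
    omega

/-- First-column hooks of a distinct-parts diagram decrease by at least 2. -/
lemma beta_gap {Y : YoungDiagram} (hY : Y.DistinctParts) :
    ∀ (d k : ℕ), (k + d, 0) ∈ Y → Y.hookLength (k + d) 0 + 2 * d ≤ Y.hookLength k 0 := by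
  intro d
  induction d with
  | zero => intro k _; simp
  | succ d ih =>
    intro k hmem
    have hmem' : (k + d, 0) ∈ Y := Y.up_left_mem (by omega) le_rfl hmem
    have ih' := ih k hmem'
    have hpos : 0 < Y.rowLen (k + d + 1) :=
      YoungDiagram.mem_iff_lt_rowLen.mp (by exact hmem)
    have hstep := hY (k + d) hpos
    have h1 : k + d + 1 < Y.colLen 0 := YoungDiagram.mem_iff_lt_colLen.mp hmem
    have e1 : Y.hookLength (k + d + 1) 0 =
        (Y.rowLen (k + d + 1) - 0) + (Y.colLen 0 - (k + d + 1)) - 1 := rfl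
    have e2 : Y.hookLength (k + d) 0 =
        (Y.rowLen (k + d) - 0) + (Y.colLen 0 - (k + d)) - 1 := rfl
    have h2 : k + (d + 1) = k + d + 1 := by omega
    rw [h2]
    omega

lemma beta_gap' {Y : YoungDiagram} (hY : Y.DistinctParts) {k k' : ℕ} (h : k ≤ k')
    (hmem : (k', 0) ∈ Y) : Y.hookLength k' 0 + 2 * (k' - k) ≤ Y.hookLength k 0 := by
  have h2 : k + (k' - k) = k' := by omega
  have := beta_gap hY (k' - k) k (by rw [h2]; exact hmem)
  rw [h2] at this
  exact this

/-- Key equivalence: a distinct-parts partition is an `(s, s+1)`-core iff its perimeter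
is at most `s - 1`. -/
lemma isCore_iff_perimeter_le {Y : YoungDiagram} (hY : Y.DistinctParts) {s : ℕ} (hs : 1 ≤ s) :
    Y.IsCore s (s + 1) ↔ Y.perimeter ≤ s - 1 := by
  constructor
  · intro hcore
    by_contra hp
    have hperim : s ≤ Y.perimeter := by omega
    have e2 : Y.perimeter = Y.rowLen 0 + Y.colLen 0 - 1 := rfl
    have h00 : 0 < Y.rowLen 0 := by
      rcases Nat.eq_zero_or_pos (Y.rowLen 0) with h0 | h0
      · exfalso
        have : Y.colLen 0 = 0 := by
          by_contra hc
          have : (0, 0) ∈ Y := YoungDiagram.mem_iff_lt_colLen.mpr (by omega)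
          rw [YoungDiagram.mem_iff_lt_rowLen] at this; omega
        omega
      · exact h0
    have hmem00 : (0, 0) ∈ Y := YoungDiagram.mem_iff_lt_rowLen.mpr h00
    have hcol0 : 0 < Y.colLen 0 := YoungDiagram.mem_iff_lt_colLen.mp hmem00
    have e1 : Y.hookLength 0 0 = (Y.rowLen 0 - 0) + (Y.colLen 0 - 0) - 1 := rfl
    have hβ0 : Y.hookLength 0 0 = Y.perimeter := by omega
    have hns := hcore 0 0 hmem00
    have hβ0big : s + 2 ≤ Y.hookLength 0 0 := by omega
    have hc1 := row_covering hY h00 (show 1 ≤ s by omega) (by omega)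
    have hc2 := row_covering hY h00 (show 1 ≤ s + 1 by omega) (by omega)
    rcases hc1 with ⟨j, hj, hjeq⟩ | ⟨k, hk, hkmem, hkeq⟩
    · exact absurd hjeq (hcore 0 j (YoungDiagram.mem_iff_lt_rowLen.mpr hj)).1
    rcases hc2 with ⟨j, hj, hjeq⟩ | ⟨k', hk', hkmem', hkeq'⟩
    · exact absurd hjeq (hcore 0 j (YoungDiagram.mem_iff_lt_rowLen.mpr hj)).2
    rcases lt_trichotomy k k' with h | h | h
    · have := beta_gap' hY (le_of_lt h) hkmem'
      omega
    · subst h; omega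
    · have := beta_gap' hY (le_of_lt h) hkmem
      omega
  · intro hperim i j hmem
    have := hookLength_le_perimeter hmem
    omega

end CoreAux
namespace CoreAux

/-- `Sfin n` : finsets of distinct parts, all in `[1,n]`, with `card + max ≤ n + 1`
(i.e. perimeter at most `n`). -/
def Sfin (n : ℕ) : Finset (Finset ℕ) :=
  (Finset.Icc 1 n).powerset.filter (fun S => ∀ x ∈ S, S.card + x ≤ n + 1)

noncomputable def Ppoly (n : ℕ) : Polynomial ℤ :=
  ∑ S ∈ Sfin n, (Polynomial.X : Polynomial ℤ) ^ (∑ x ∈ S, x)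

lemma mem_Sfin {n : ℕ} {S : Finset ℕ} :
    S ∈ Sfin n ↔ (∀ x ∈ S, 1 ≤ x ∧ x ≤ n) ∧ (∀ x ∈ S, S.card + x ≤ n + 1) := by
  simp only [Sfin, Finset.mem_filter, Finset.mem_powerset, Finset.subset_iff, Finset.mem_Icc]

lemma card_le_of_mem_Sfin {n : ℕ} {S : Finset ℕ} (h : S ∈ Sfin n) : S.card ≤ n := by
  have hsub : S ⊆ Finset.Icc 1 n := by
    rw [Sfin, Finset.mem_filter, Finset.mem_powerset] at h
    exact h.1
  have := Finset.card_le_card hsub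
  rwa [Nat.card_Icc, Nat.add_sub_cancel] at this

-- image helpers
lemma card_image_add_one (T : Finset ℕ) : (T.image (· + 1)).card = T.card :=
  Finset.card_image_of_injective T (fun a b h => by omega)

lemma sum_image_add_one (T : Finset ℕ) : ∑ x ∈ T.image (· + 1), x = (∑ x ∈ T, x) + T.card := by
  rw [Finset.sum_image (fun x _ y _ h => by omega), Finset.card_eq_sum_ones,
    ← Finset.sum_add_distrib]

lemma card_image_sub_one {R : Finset ℕ} (h : ∀ x ∈ R, 1 ≤ x) :
    (R.image (· - 1)).card = R.card :=
  Finset.card_image_of_injOn (fun a ha b hb hab => by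
    have := h a ha; have := h b hb; omega)

lemma sum_image_sub_one {R : Finset ℕ} (h : ∀ x ∈ R, 1 ≤ x) :
    (∑ x ∈ R.image (· - 1), x) + R.card = ∑ x ∈ R, x := by
  rw [Finset.sum_image (fun a ha b hb hab => by have := h a ha; have := h b hb; omega)]
  rw [Finset.card_eq_sum_ones, ← Finset.sum_add_distrib]
  exact Finset.sum_congr rfl (fun x hx => by have := h x hx; omega)

lemma image_sub_add {R : Finset ℕ} (h : ∀ x ∈ R, 1 ≤ x) :
    (R.image (· - 1)).image (· + 1) = R := by
  rw [Finset.image_image]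
  have : ∀ x ∈ R, ((· + 1) ∘ (· - 1)) x = id x := by
    intro x hx; have := h x hx; simp [Function.comp]; omega
  rw [Finset.image_congr this, Finset.image_id]

lemma image_add_sub (T : Finset ℕ) : (T.image (· + 1)).image (· - 1) = T := by
  rw [Finset.image_image]
  have : ∀ x ∈ T, ((· - 1) ∘ (· + 1)) x = id x := by
    intro x hx; simp [Function.comp]
  rw [Finset.image_congr this, Finset.image_id]

end CoreAux
namespace CoreAux

def mapA (N : ℕ) (T : Finset ℕ) : Finset ℕ := insert (N - T.card) (T.image (· + 1))

def mapB (N : ℕ) (T : Finset ℕ) : Finset ℕ :=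
  insert 1 (insert (N - T.card - 1) (T.image (· + 1)))

def unmapA (N : ℕ) (S : Finset ℕ) : Finset ℕ := (S.erase (N + 1 - S.card)).image (· - 1)

def unmapB (N : ℕ) (S : Finset ℕ) : Finset ℕ :=
  ((S.erase 1).erase (N + 1 - S.card)).image (· - 1)

/-- The "exceptional" part: elements of `Sfin N` with perimeter exactly `N`. -/
def Efin (N : ℕ) : Finset (Finset ℕ) :=
  (Sfin N).filter (fun S => ¬ ∀ x ∈ S, S.card + x ≤ N)

lemma Efin_facts {N : ℕ} {S : Finset ℕ} (hS : S ∈ Efin N) :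
    1 ≤ S.card ∧ S.card ≤ N ∧ (N + 1 - S.card) ∈ S ∧
      (∀ x ∈ S, 1 ≤ x ∧ x ≤ N + 1 - S.card) := by
  rw [Efin, Finset.mem_filter] at hS
  obtain ⟨hmem, hnot⟩ := hS
  push_neg at hnot
  obtain ⟨x0, hx0S, hx0⟩ := hnot
  rw [mem_Sfin] at hmem
  obtain ⟨hrange, hcond⟩ := hmem
  have hcx0 := hcond x0 hx0S
  have hx0eq : x0 = N + 1 - S.card := by omega
  have hc1 : 1 ≤ S.card := Finset.card_pos.mpr ⟨x0, hx0S⟩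
  have hx0n : x0 ≤ N := (hrange x0 hx0S).2
  have hx01 : 1 ≤ x0 := (hrange x0 hx0S).1
  refine ⟨hc1, by omega, hx0eq ▸ hx0S, fun x hx => ?_⟩
  have h1 := (hrange x hx).1
  have h2 := hcond x hx
  omega

lemma mapA_facts {m : ℕ} {T : Finset ℕ} (hT : T ∈ Sfin (m + 1)) :
    mapA (m + 4) T ∈ Efin (m + 4) ∧ 1 ∉ mapA (m + 4) T ∧
      (∑ x ∈ mapA (m + 4) T, x) = (m + 4) + ∑ x ∈ T, x := by
  set k := T.card with hk
  have hkle : k ≤ m + 1 := card_le_of_mem_Sfin hT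
  rw [mem_Sfin] at hT
  obtain ⟨hrange, hcond⟩ := hT
  have himg : ∀ y ∈ T.image (· + 1), ∃ x ∈ T, x + 1 = y := by
    intro y hy
    rw [Finset.mem_image] at hy
    obtain ⟨x, hx, rfl⟩ := hy
    exact ⟨x, hx, rfl⟩
  have hnotmem : (m + 4 - k) ∉ T.image (· + 1) := by
    intro hc
    obtain ⟨x, hx, hxe⟩ := himg _ hc
    have := hcond x hx
    omega
  have hcard : (mapA (m + 4) T).card = k + 1 := by
    rw [mapA, Finset.card_insert_of_notMem hnotmem, card_image_add_one]
  have hsum : (∑ x ∈ mapA (m + 4) T, x) = (m + 4) + ∑ x ∈ T, x := by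
    rw [mapA, Finset.sum_insert hnotmem, sum_image_add_one]
    omega
  have h1notmem : 1 ∉ mapA (m + 4) T := by
    rw [mapA, Finset.mem_insert]
    rintro (h | h)
    · omega
    · obtain ⟨x, hx, hxe⟩ := himg _ h
      have := (hrange x hx).1
      omega
  refine ⟨?_, h1notmem, hsum⟩
  rw [Efin, Finset.mem_filter, mem_Sfin, hcard]
  refine ⟨⟨fun y hy => ?_, fun y hy => ?_⟩, ?_⟩
  · rw [mapA, Finset.mem_insert] at hy
    rcases hy with rfl | hy
    · omega
    · obtain ⟨x, hx, hxe⟩ := himg _ hy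
      have := hrange x hx
      omega
  · rw [mapA, Finset.mem_insert] at hy
    rcases hy with rfl | hy
    · omega
    · obtain ⟨x, hx, hxe⟩ := himg _ hy
      have := hcond x hx
      omega
  · push_neg
    refine ⟨m + 4 - k, ?_, by omega⟩
    rw [mapA, Finset.mem_insert]
    left; rfl

lemma unmapA_facts {m : ℕ} {S : Finset ℕ} (hS : S ∈ Efin (m + 4)) (h1 : 1 ∉ S) :
    unmapA (m + 4) S ∈ Sfin (m + 1) ∧
      (m + 4) + (∑ x ∈ unmapA (m + 4) S, x) = ∑ x ∈ S, x := by
  obtain ⟨hc1, hcN, hm0, hbound⟩ := Efin_facts hS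
  set c := S.card with hc
  set m0 := m + 4 + 1 - c with hm0def
  set R := S.erase m0 with hR
  have hRfacts : ∀ x ∈ R, 2 ≤ x ∧ x + 1 ≤ m0 := by
    intro x hx
    rw [hR, Finset.mem_erase] at hx
    have := hbound x hx.2
    have hne := hx.1
    have hx1 : 1 ≤ x := this.1
    constructor
    · rcases Nat.lt_or_ge x 2 with h | h
      · exfalso; interval_cases x <;> simp_all
      · exact h
    · omega
  have hRpos : ∀ x ∈ R, 1 ≤ x := fun x hx => by have := hRfacts x hx; omega
  have hcardR : R.card = c - 1 := by rw [hR, Finset.card_erase_of_mem hm0]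
  have hcardU : (unmapA (m + 4) S).card = c - 1 := by
    rw [unmapA, ← hm0def, ← hR, card_image_sub_one hRpos, hcardR]
  have hc2 : ∀ x ∈ R, 2 ≤ c := by
    intro x hx
    have : 0 < R.card := Finset.card_pos.mpr ⟨x, hx⟩
    omega
  constructor
  · rw [mem_Sfin]
    constructor
    · intro y hy
      rw [unmapA, ← hm0def, ← hR, Finset.mem_image] at hy
      obtain ⟨x, hx, rfl⟩ := hy
      have := hRfacts x hx
      have := hc2 x hx
      omega
    · intro y hy
      rw [hcardU]
      rw [unmapA, ← hm0def, ← hR, Finset.mem_image] at hy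
      obtain ⟨x, hx, rfl⟩ := hy
      have := hRfacts x hx
      have := hc2 x hx
      omega
  · have hsumR : (∑ x ∈ unmapA (m + 4) S, x) + R.card = ∑ x ∈ R, x := by
      rw [unmapA, ← hm0def, ← hR]
      exact sum_image_sub_one hRpos
    have hsumS : (∑ x ∈ R, x) + m0 = ∑ x ∈ S, x := by
      rw [hR, Finset.sum_erase_add _ _ hm0]
    omega

lemma left_inv_A {m : ℕ} {S : Finset ℕ} (hS : S ∈ Efin (m + 4)) (h1 : 1 ∉ S) :
    mapA (m + 4) (unmapA (m + 4) S) = S := by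
  obtain ⟨hc1, hcN, hm0, hbound⟩ := Efin_facts hS
  set c := S.card with hc
  set m0 := m + 4 + 1 - c with hm0def
  set R := S.erase m0 with hR
  have hRpos : ∀ x ∈ R, 1 ≤ x := by
    intro x hx
    rw [hR, Finset.mem_erase] at hx
    exact (hbound x hx.2).1
  have hcardU : (unmapA (m + 4) S).card = c - 1 := by
    rw [unmapA, ← hm0def, ← hR, card_image_sub_one hRpos, hR,
      Finset.card_erase_of_mem hm0]
  rw [mapA, hcardU, unmapA, ← hm0def, ← hR, image_sub_add hRpos]
  have : m + 4 - (c - 1) = m0 := by omega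
  rw [this, hR, Finset.insert_erase hm0]

lemma right_inv_A {m : ℕ} {T : Finset ℕ} (hT : T ∈ Sfin (m + 1)) :
    unmapA (m + 4) (mapA (m + 4) T) = T := by
  set k := T.card with hk
  have hkle : k ≤ m + 1 := card_le_of_mem_Sfin hT
  rw [mem_Sfin] at hT
  obtain ⟨hrange, hcond⟩ := hT
  have hnotmem : (m + 4 - k) ∉ T.image (· + 1) := by
    intro hc
    rw [Finset.mem_image] at hc
    obtain ⟨x, hx, hxe⟩ := hc
    have := hcond x hx
    omega
  have hcard : (mapA (m + 4) T).card = k + 1 := by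
    rw [mapA, Finset.card_insert_of_notMem hnotmem, card_image_add_one]
  rw [unmapA, hcard]
  have : m + 4 + 1 - (k + 1) = m + 4 - k := by omega
  rw [this, mapA, Finset.erase_insert hnotmem, image_add_sub]

end CoreAux
namespace CoreAux

lemma m0_ne_one {m : ℕ} {S : Finset ℕ} (hS : S ∈ Efin (m + 4)) (h1 : 1 ∈ S) :
    m + 4 + 1 - S.card ≠ 1 := by
  obtain ⟨hc1, hcN, hm0, hbound⟩ := Efin_facts hS
  intro heq
  have hsub : S ⊆ {1} := by
    intro x hx
    have := hbound x hx
    rw [heq] at this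
    rw [Finset.mem_singleton]
    omega
  have := Finset.card_le_card hsub
  rw [Finset.card_singleton] at this
  omega

lemma unmapB_facts {m : ℕ} {S : Finset ℕ} (hS : S ∈ Efin (m + 4)) (h1 : 1 ∈ S) :
    unmapB (m + 4) S ∈ Sfin m ∧
      (m + 4) + (∑ x ∈ unmapB (m + 4) S, x) = ∑ x ∈ S, x := by
  obtain ⟨hc1, hcN, hm0, hbound⟩ := Efin_facts hS
  have hm0ne1 := m0_ne_one hS h1
  set c := S.card with hc
  set m0 := m + 4 + 1 - c with hm0def
  set R := (S.erase 1).erase m0 with hR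
  have hm0' : m0 ∈ S.erase 1 := Finset.mem_erase.mpr ⟨hm0ne1, hm0⟩
  have hc2 : 2 ≤ c := by
    have hsub2 : ({1, m0} : Finset ℕ) ⊆ S := by
      intro x hx
      rw [Finset.mem_insert, Finset.mem_singleton] at hx
      rcases hx with rfl | rfl
      · exact h1
      · exact hm0
    have hcard2 : ({1, m0} : Finset ℕ).card = 2 := by
      rw [Finset.card_insert_of_notMem (by simpa using (Ne.symm hm0ne1)), Finset.card_singleton]
    have := Finset.card_le_card hsub2
    omega
  have hcard1 : (S.erase 1).card = c - 1 := Finset.card_erase_of_mem h1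
  have hcardR : R.card = c - 2 := by
    rw [hR, Finset.card_erase_of_mem hm0', hcard1]
    omega

  have hRfacts : ∀ x ∈ R, 2 ≤ x ∧ x + 1 ≤ m0 := by
    intro x hx
    rw [hR, Finset.mem_erase, Finset.mem_erase] at hx
    obtain ⟨hxm0, hx1, hxS⟩ := hx
    have := hbound x hxS
    omega
  have hRpos : ∀ x ∈ R, 1 ≤ x := fun x hx => by have := hRfacts x hx; omega
  have hc3 : ∀ x ∈ R, 3 ≤ c := by
    intro x hx
    have : 0 < R.card := Finset.card_pos.mpr ⟨x, hx⟩
    omega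
  have hcardU : (unmapB (m + 4) S).card = c - 2 := by
    rw [unmapB, ← hm0def, ← hR, card_image_sub_one hRpos, hcardR]
  constructor
  · rw [mem_Sfin]
    constructor
    · intro y hy
      rw [unmapB, ← hm0def, ← hR, Finset.mem_image] at hy
      obtain ⟨x, hx, rfl⟩ := hy
      have := hRfacts x hx
      have := hc3 x hx
      omega
    · intro y hy
      rw [hcardU]
      rw [unmapB, ← hm0def, ← hR, Finset.mem_image] at hy
      obtain ⟨x, hx, rfl⟩ := hy
      have := hRfacts x hx
      have := hc3 x hx
      omega
  · have hsumU : (∑ x ∈ unmapB (m + 4) S, x) + R.card = ∑ x ∈ R, x := by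
      rw [unmapB, ← hm0def, ← hR]
      exact sum_image_sub_one hRpos
    have hsum1 : (∑ x ∈ R, x) + m0 = ∑ x ∈ S.erase 1, x := by
      rw [hR, Finset.sum_erase_add _ _ hm0']
    have hsum2 : (∑ x ∈ S.erase 1, x) + 1 = ∑ x ∈ S, x := by
      rw [Finset.sum_erase_add _ _ h1]
    omega

lemma mapB_facts {m : ℕ} {T : Finset ℕ} (hT : T ∈ Sfin m) :
    mapB (m + 4) T ∈ Efin (m + 4) ∧ 1 ∈ mapB (m + 4) T ∧
      (∑ x ∈ mapB (m + 4) T, x) = (m + 4) + ∑ x ∈ T, x := by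
  set k := T.card with hk
  have hkle : k ≤ m := card_le_of_mem_Sfin hT
  rw [mem_Sfin] at hT
  obtain ⟨hrange, hcond⟩ := hT
  have himg : ∀ y ∈ T.image (· + 1), ∃ x ∈ T, x + 1 = y := by
    intro y hy
    rw [Finset.mem_image] at hy
    obtain ⟨x, hx, rfl⟩ := hy
    exact ⟨x, hx, rfl⟩
  have hnotmem : (m + 4 - k - 1) ∉ T.image (· + 1) := by
    intro hc
    obtain ⟨x, hx, hxe⟩ := himg _ hc
    have := hcond x hx
    omega
  have h1notmem : (1 : ℕ) ∉ insert (m + 4 - k - 1) (T.image (· + 1)) := by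
    rw [Finset.mem_insert]
    rintro (h | h)
    · omega
    · obtain ⟨x, hx, hxe⟩ := himg _ h
      have := (hrange x hx).1
      omega
  have hcard : (mapB (m + 4) T).card = k + 2 := by
    rw [mapB, Finset.card_insert_of_notMem h1notmem,
      Finset.card_insert_of_notMem hnotmem, card_image_add_one]
  have hsum : (∑ x ∈ mapB (m + 4) T, x) = (m + 4) + ∑ x ∈ T, x := by
    rw [mapB, Finset.sum_insert h1notmem, Finset.sum_insert hnotmem, sum_image_add_one]
    omega
  refine ⟨?_, by rw [mapB]; exact Finset.mem_insert_self 1 _, hsum⟩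
  rw [Efin, Finset.mem_filter, mem_Sfin, hcard]
  refine ⟨⟨fun y hy => ?_, fun y hy => ?_⟩, ?_⟩
  · rw [mapB, Finset.mem_insert, Finset.mem_insert] at hy
    rcases hy with rfl | rfl | hy
    · omega
    · omega
    · obtain ⟨x, hx, hxe⟩ := himg _ hy
      have := hrange x hx
      omega
  · rw [mapB, Finset.mem_insert, Finset.mem_insert] at hy
    rcases hy with rfl | rfl | hy
    · omega
    · omega
    · obtain ⟨x, hx, hxe⟩ := himg _ hy
      have := hcond x hx
      omega
  · push_neg
    refine ⟨m + 4 - k - 1, ?_, by omega⟩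
    rw [mapB, Finset.mem_insert, Finset.mem_insert]
    right; left; rfl

lemma left_inv_B {m : ℕ} {S : Finset ℕ} (hS : S ∈ Efin (m + 4)) (h1 : 1 ∈ S) :
    mapB (m + 4) (unmapB (m + 4) S) = S := by
  obtain ⟨hc1, hcN, hm0, hbound⟩ := Efin_facts hS
  have hm0ne1 := m0_ne_one hS h1
  set c := S.card with hc
  set m0 := m + 4 + 1 - c with hm0def
  set R := (S.erase 1).erase m0 with hR
  have hm0' : m0 ∈ S.erase 1 := Finset.mem_erase.mpr ⟨hm0ne1, hm0⟩
  have hcardR : R.card = c - 2 := by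
    rw [hR, Finset.card_erase_of_mem hm0', Finset.card_erase_of_mem h1]
    omega
  have hRpos : ∀ x ∈ R, 1 ≤ x := by
    intro x hx
    rw [hR, Finset.mem_erase, Finset.mem_erase] at hx
    exact (hbound x hx.2.2).1
  have hc2 : 2 ≤ c := by
    have : ({1, m0} : Finset ℕ) ⊆ S := by
      intro x hx
      rw [Finset.mem_insert, Finset.mem_singleton] at hx
      rcases hx with rfl | rfl
      · exact h1
      · exact hm0
    have hcard2 : ({1, m0} : Finset ℕ).card = 2 := by
      rw [Finset.card_insert_of_notMem (by simpa using (Ne.symm hm0ne1)), Finset.card_singleton]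
    have := Finset.card_le_card this
    omega
  have hcardU : (unmapB (m + 4) S).card = c - 2 := by
    rw [unmapB, ← hm0def, ← hR, card_image_sub_one hRpos, hcardR]
  rw [mapB, hcardU, unmapB, ← hm0def, ← hR, image_sub_add hRpos]
  have : m + 4 - (c - 2) - 1 = m0 := by omega
  rw [this, hR, Finset.insert_erase hm0', Finset.insert_erase h1]

lemma right_inv_B {m : ℕ} {T : Finset ℕ} (hT : T ∈ Sfin m) :
    unmapB (m + 4) (mapB (m + 4) T) = T := by
  set k := T.card with hk
  have hkle : k ≤ m := card_le_of_mem_Sfin hT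
  rw [mem_Sfin] at hT
  obtain ⟨hrange, hcond⟩ := hT
  have hnotmem : (m + 4 - k - 1) ∉ T.image (· + 1) := by
    intro hc
    rw [Finset.mem_image] at hc
    obtain ⟨x, hx, hxe⟩ := hc
    have := hcond x hx
    omega
  have h1notmem : (1 : ℕ) ∉ insert (m + 4 - k - 1) (T.image (· + 1)) := by
    rw [Finset.mem_insert]
    rintro (h | h)
    · omega
    · rw [Finset.mem_image] at h
      obtain ⟨x, hx, hxe⟩ := h
      have := (hrange x hx).1
      omega
  have hcard : (mapB (m + 4) T).card = k + 2 := by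
    rw [mapB, Finset.card_insert_of_notMem h1notmem,
      Finset.card_insert_of_notMem hnotmem, card_image_add_one]
  rw [unmapB, hcard]
  have : m + 4 + 1 - (k + 2) = m + 4 - k - 1 := by omega
  rw [this, mapB, Finset.erase_insert h1notmem, Finset.erase_insert hnotmem, image_add_sub]

end CoreAux
namespace CoreAux

lemma Sfin_filter_eq (n : ℕ) :
    (Sfin (n + 1)).filter (fun S => ∀ x ∈ S, S.card + x ≤ n + 1) = Sfin n := by
  ext S
  rw [Finset.mem_filter, mem_Sfin, mem_Sfin]
  constructor
  · rintro ⟨⟨hrange, _⟩, hcond⟩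
    refine ⟨fun x hx => ?_, hcond⟩
    have h1 := hrange x hx
    have h2 := hcond x hx
    have hc : 1 ≤ S.card := Finset.card_pos.mpr ⟨x, hx⟩
    omega
  · rintro ⟨hrange, hcond⟩
    exact ⟨⟨fun x hx => by have := hrange x hx; omega,
      fun x hx => by have := hcond x hx; omega⟩, hcond⟩

lemma Ppoly_succ (n : ℕ) :
    Ppoly (n + 1) = Ppoly n + ∑ S ∈ Efin (n + 1), (Polynomial.X : Polynomial ℤ) ^ (∑ x ∈ S, x) := by
  rw [Ppoly, ← Finset.sum_filter_add_sum_filter_not (Sfin (n + 1))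
    (fun S => ∀ x ∈ S, S.card + x ≤ n + 1), Sfin_filter_eq, ← Ppoly, Efin]

lemma sum_Efin (m : ℕ) :
    ∑ S ∈ Efin (m + 4), (Polynomial.X : Polynomial ℤ) ^ (∑ x ∈ S, x)
      = Polynomial.X ^ (m + 4) * Ppoly (m + 1) + Polynomial.X ^ (m + 4) * Ppoly m := by
  rw [← Finset.sum_filter_add_sum_filter_not (Efin (m + 4)) (fun S => 1 ∈ S)]
  have hB : ∑ S ∈ (Efin (m + 4)).filter (fun S => 1 ∈ S),
      (Polynomial.X : Polynomial ℤ) ^ (∑ x ∈ S, x)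
      = ∑ T ∈ Sfin m, (Polynomial.X : Polynomial ℤ) ^ ((m + 4) + ∑ x ∈ T, x) := by
    refine Finset.sum_bij' (fun S _ => unmapB (m + 4) S) (fun T _ => mapB (m + 4) T)
      ?_ ?_ ?_ ?_ ?_
    · intro S hS
      rw [Finset.mem_filter] at hS
      exact (unmapB_facts hS.1 hS.2).1
    · intro T hT
      rw [Finset.mem_filter]
      exact ⟨(mapB_facts hT).1, (mapB_facts hT).2.1⟩
    · intro S hS
      rw [Finset.mem_filter] at hS
      exact left_inv_B hS.1 hS.2
    · intro T hT
      exact right_inv_B hT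
    · intro S hS
      rw [Finset.mem_filter] at hS
      rw [(unmapB_facts hS.1 hS.2).2]
  have hA : ∑ S ∈ (Efin (m + 4)).filter (fun S => ¬ 1 ∈ S),
      (Polynomial.X : Polynomial ℤ) ^ (∑ x ∈ S, x)
      = ∑ T ∈ Sfin (m + 1), (Polynomial.X : Polynomial ℤ) ^ ((m + 4) + ∑ x ∈ T, x) := by
    refine Finset.sum_bij' (fun S _ => unmapA (m + 4) S) (fun T _ => mapA (m + 4) T)
      ?_ ?_ ?_ ?_ ?_
    · intro S hS
      rw [Finset.mem_filter] at hS
      exact (unmapA_facts hS.1 hS.2).1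
    · intro T hT
      rw [Finset.mem_filter]
      exact ⟨(mapA_facts hT).1, (mapA_facts hT).2.1⟩
    · intro S hS
      rw [Finset.mem_filter] at hS
      exact left_inv_A hS.1 hS.2
    · intro T hT
      exact right_inv_A hT
    · intro S hS
      rw [Finset.mem_filter] at hS
      rw [(unmapA_facts hS.1 hS.2).2]
  rw [hA, hB, Ppoly, Ppoly, Finset.mul_sum, Finset.mul_sum]
  simp only [pow_add]
  ring

lemma Ppoly_rec (m : ℕ) :
    Ppoly (m + 4) = Ppoly (m + 3) + Polynomial.X ^ (m + 4) * Ppoly (m + 1)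
      + Polynomial.X ^ (m + 4) * Ppoly m := by
  have h := Ppoly_succ (m + 3)
  rw [show m + 3 + 1 = m + 4 from rfl] at h
  rw [h, sum_Efin]
  ring

lemma Sfin_zero : Sfin 0 = {∅} := by decide
lemma Sfin_one : Sfin 1 = {∅, {1}} := by decide
lemma Sfin_two : Sfin 2 = {∅, {1}, {2}} := by decide
lemma Sfin_three : Sfin 3 = {∅, {1}, {2}, {3}, {1, 2}} := by decide

end CoreAux
namespace CoreAux

noncomputable instance : DecidableEq YoungDiagram := Classical.decEq _

lemma Ppoly_zero : Ppoly 0 = 1 := by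
  rw [Ppoly, Sfin_zero]; simp

lemma Ppoly_one : Ppoly 1 = 1 + Polynomial.X := by
  rw [Ppoly, Sfin_one, Finset.sum_insert (by decide), Finset.sum_singleton]
  simp

lemma Ppoly_two : Ppoly 2 = 1 + Polynomial.X + Polynomial.X ^ 2 := by
  rw [Ppoly, Sfin_two, Finset.sum_insert (by decide), Finset.sum_insert (by decide),
    Finset.sum_singleton (fun S : Finset ℕ => (Polynomial.X : Polynomial ℤ) ^ (∑ x ∈ S, x))
      ({2} : Finset ℕ)]
  norm_num
  ring

lemma Ppoly_three : Ppoly 3 = 1 + Polynomial.X + Polynomial.X ^ 2 + 2 * Polynomial.X ^ 3 := by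
  rw [Ppoly, Sfin_three, Finset.sum_insert (by decide), Finset.sum_insert (by decide),
    Finset.sum_insert (by decide), Finset.sum_insert (by decide),
    Finset.sum_singleton (fun S : Finset ℕ => (Polynomial.X : Polynomial ℤ) ^ (∑ x ∈ S, x))
      ({1, 2} : Finset ℕ)]
  have h12 : ∑ x ∈ ({1, 2} : Finset ℕ), x = 3 := by decide
  rw [h12]
  norm_num
  ring

lemma corePartitions_eq {s : ℕ} (hs : 1 ≤ s) :
    corePartitionsDistinct s = ↑((Sfin (s - 1)).image fromFinset) := by
  ext Y
  simp only [corePartitionsDistinct, Set.mem_setOf_eq, Finset.coe_image, Set.mem_image,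
    Finset.mem_coe]
  constructor
  · rintro ⟨hdist, hcore⟩
    have hperim := (isCore_iff_perimeter_le hdist hs).mp hcore
    refine ⟨Y.rowLens.toFinset, ?_, fromFinset_toFinset hdist⟩
    rw [mem_Sfin]
    have hnd : Y.rowLens.Nodup := (rowLens_sorted_gt hdist).nodup
    have hcardeq : Y.rowLens.toFinset.card = Y.colLen 0 := by
      rw [List.toFinset_card_of_nodup hnd, YoungDiagram.length_rowLens]
    constructor
    · intro x hx
      rw [List.mem_toFinset] at hx
      have h1 := Y.pos_of_mem_rowLens x hx
      have h2 := cond_of_perimeter hperim hx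
      have h3 : 0 < Y.rowLens.length :=
        List.length_pos_iff.mpr (List.ne_nil_of_mem hx)
      have h4 : Y.rowLens.length = Y.colLen 0 := YoungDiagram.length_rowLens
      omega
    · intro x hx
      rw [List.mem_toFinset] at hx
      rw [hcardeq]
      have h2 := cond_of_perimeter hperim hx
      omega
  · rintro ⟨S, hS, rfl⟩
    rw [mem_Sfin] at hS
    have hpos : ∀ x ∈ S, 0 < x := fun x hx => (hS.1 x hx).1
    refine ⟨distinctParts_fromFinset hpos, ?_⟩
    rw [isCore_iff_perimeter_le (distinctParts_fromFinset hpos) hs]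
    exact perimeter_fromFinset_le hpos (fun x hx => by
      have h1 := hS.2 x hx; omega)

lemma Gpoly_eq {s : ℕ} (hs : 1 ≤ s) : Gpoly s = Ppoly (s - 1) := by
  rw [Gpoly, corePartitions_eq hs, finsum_mem_coe_finset]
  rw [Finset.sum_image (fun S hS S' hS' h => by
    rw [Finset.mem_coe, mem_Sfin] at hS hS'
    exact fromFinset_injOn (fun x hx => (hS.1 x hx).1) (fun x hx => (hS'.1 x hx).1) h)]
  rw [Ppoly]
  exact Finset.sum_congr rfl (fun S _ => by rw [card_fromFinset])

end CoreAux


/-- Initial values and recurrence for the generating functions `G_s(q)`: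
`G_1 = 1`, `G_2 = 1 + q`, `G_3 = 1 + q + q^2`, `G_4 = 1 + q + q^2 + 2 q^3`, and
`G_s = G_{s-1} + q^{s-1} G_{s-3} + q^{s-1} G_{s-4}` for `s ≥ 5`. -/
theorem Gpoly_recurrence :
    Gpoly 1 = 1 ∧
    Gpoly 2 = 1 + Polynomial.X ∧
    Gpoly 3 = 1 + Polynomial.X + Polynomial.X ^ 2 ∧
    Gpoly 4 = 1 + Polynomial.X + Polynomial.X ^ 2 + 2 * Polynomial.X ^ 3 ∧
    ∀ s : ℕ, 5 ≤ s →
      Gpoly s = Gpoly (s - 1) + Polynomial.X ^ (s - 1) * Gpoly (s - 3)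
        + Polynomial.X ^ (s - 1) * Gpoly (s - 4) := by
  refine ⟨?_, ?_, ?_, ?_, ?_⟩
  · rw [CoreAux.Gpoly_eq (by norm_num)]
    exact CoreAux.Ppoly_zero
  · rw [CoreAux.Gpoly_eq (by norm_num)]
    exact CoreAux.Ppoly_one
  · rw [CoreAux.Gpoly_eq (by norm_num)]
    exact CoreAux.Ppoly_two
  · rw [CoreAux.Gpoly_eq (by norm_num)]
    exact CoreAux.Ppoly_three
  · intro s hs
    obtain ⟨m, rfl⟩ : ∃ m, s = m + 5 := ⟨s - 5, by omega⟩
    rw [show m + 5 - 1 = m + 4 by omega, show m + 5 - 3 = m + 2 by omega,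
      show m + 5 - 4 = m + 1 by omega,
      CoreAux.Gpoly_eq (show 1 ≤ m + 5 by omega),
      CoreAux.Gpoly_eq (show 1 ≤ m + 4 by omega),
      CoreAux.Gpoly_eq (show 1 ≤ m + 2 by omega),
      CoreAux.Gpoly_eq (show 1 ≤ m + 1 by omega),
      show m + 5 - 1 = m + 4 by omega, show m + 4 - 1 = m + 3 by omega,
      show m + 2 - 1 = m + 1 by omega, show m + 1 - 1 = m by omega]
    exact CoreAux.Ppoly_rec m
end

section
/- For every positive integer s, the sum of the sizes of all (s,s+1)-core partitions with distinct parts satisfies 50 · Σ_{p ∈ P_s} |p| = (5s^2 + 7s) F_{s+1} − (6s + 6) F_s; equivalently, the expected size of a uniformly random (s,s+1)-core partition with distinct parts equals (5s^2 F_{s+1} − 6s F_s + 7s F_{s+1} − 6 F_s) / (50 F_{s+1}). -/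
open Polynomial Filter

/-- The `k`-th moment `E[X_s^k]` of the size of a uniformly random `(s, s+1)`-core
partition with distinct parts: `(1/|P_s|) Σ_{p ∈ P_s} |p|^k`, where `|P_s| = F_{s+1}`. -/
noncomputable def sizeMoment (k s : ℕ) : ℝ :=
  (∑ᶠ Y ∈ corePartitionsDistinct s, (Y.card : ℝ) ^ k) / (Nat.fib (s + 1) : ℝ)

/-- The `k`-th central moment `E[(X_s - E[X_s])^k]` of the size of a uniformly random
`(s, s+1)`-core partition with distinct parts. -/
noncomputable def sizeCentralMoment (k s : ℕ) : ℝ :=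
  (∑ᶠ Y ∈ corePartitionsDistinct s, ((Y.card : ℝ) - sizeMoment 1 s) ^ k)
    / (Nat.fib (s + 1) : ℝ)

/-- The variance `Var(X_s) = E[X_s^2] - E[X_s]^2`. -/
noncomputable def sizeVariance (s : ℕ) : ℝ :=
  sizeMoment 2 s - (sizeMoment 1 s) ^ 2

def DL : ℕ → Finset (List ℕ)
  | 0 => {[]}
  | 1 => {[]}
  | (s+2) => DL (s+1) ∪ (DL s).image (fun w => (s + 1 - w.length) :: w)

def GoodList (s : ℕ) (w : List ℕ) : Prop :=
  w.Chain' (· > ·) ∧ (∀ x ∈ w, 0 < x) ∧ w.headD 0 + w.length ≤ s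

lemma goodList_length_le {s w} (h : GoodList s w) : w.length ≤ s := by
  obtain ⟨-, hpos, hle⟩ := h
  cases w with
  | nil => simp
  | cons a t =>
    have ha : 0 < a := hpos a (by simp)
    simp only [List.headD_cons, List.length_cons] at hle
    simp only [List.length_cons]
    omega

lemma goodList_mono {s w} (h : GoodList s w) : GoodList (s+1) w :=
  ⟨h.1, h.2.1, h.2.2.trans (by omega)⟩

lemma mem_DL : ∀ s w, w ∈ DL s ↔ GoodList s w := by
  have key : ∀ s, (∀ w, w ∈ DL s ↔ GoodList s w) ∧ (∀ w, w ∈ DL (s+1) ↔ GoodList (s+1) w) := by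
    intro s
    induction s with
    | zero =>
      have h0 : ∀ s', s' ≤ 1 → ∀ w, (w ∈ ({[]} : Finset (List ℕ)) ↔ GoodList s' w) := by
        intro s' hs' w
        simp only [Finset.mem_singleton]
        constructor
        · rintro rfl; exact ⟨List.isChain_nil, by simp, by simp⟩
        · rintro ⟨-, hpos, hle⟩
          cases w with
          | nil => rfl
          | cons a t =>
            have ha := hpos a (by simp)
            simp only [List.headD_cons, List.length_cons] at hle
            omega
      exact ⟨fun w => by rw [show DL 0 = {[]} from rfl]; exact h0 0 (by omega) w,
             fun w => by rw [show DL 1 = {[]} from rfl]; exact h0 1 (by omega) w⟩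
    | succ n ih =>
      refine ⟨ih.2, fun w => ?_⟩
      rw [show n+1+1 = n+2 from rfl, DL]
      simp only [Finset.mem_union, Finset.mem_image, ih.1, ih.2]
      constructor
      · rintro (h | ⟨t, ht, rfl⟩)
        · exact goodList_mono h
        · obtain ⟨hc, hpos, hle⟩ := ht
          have hlen : t.length ≤ n := goodList_length_le ⟨hc, hpos, hle⟩
          have hhead : ∀ y ∈ t.head?, n + 1 - t.length > y := by
            intro y hy
            cases t with
            | nil => simp at hy
            | cons a u =>
              simp_all
              omega
          refine ⟨List.isChain_cons.2 ⟨hhead, hc⟩, ?_, ?_⟩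
          · intro x hx
            rcases List.mem_cons.1 hx with rfl | hx
            · omega
            · exact hpos x hx
          · simp; omega
      · rintro ⟨hc, hpos, hle⟩
        by_cases hle' : w.headD 0 + w.length ≤ n + 1
        · exact Or.inl ⟨hc, hpos, hle'⟩
        · right
          cases w with
          | nil => simp at hle'
          | cons a t =>
            have hc' := List.isChain_cons.1 hc
            refine ⟨t, ⟨hc'.2, fun x hx => hpos x (List.mem_cons_of_mem _ hx), ?_⟩, ?_⟩
            · cases t with
              | nil => simp
              | cons b u =>
                have : a > b := hc'.1 b (by simp)
                simp at hle hle' ⊢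
                omega
            · simp at hle hle' ⊢
              omega
  exact fun s => (key s).1

lemma DL_length_le {s w} (h : w ∈ DL s) : w.length ≤ s :=
  goodList_length_le ((mem_DL s w).1 h)

lemma DL_disjoint (s : ℕ) :
    Disjoint (DL (s+1)) ((DL s).image (fun w => (s + 1 - w.length) :: w)) := by
  rw [Finset.disjoint_right]
  rintro w hw hw'
  obtain ⟨t, ht, rfl⟩ := Finset.mem_image.1 hw
  have h1 := ((mem_DL _ _).1 hw').2.2
  have h2 := DL_length_le ht
  simp only [List.headD_cons, List.length_cons] at h1
  omega

lemma cons_injOn (s : ℕ) : ∀ w ∈ DL s, ∀ w' ∈ DL s,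
    (s + 1 - w.length) :: w = (s + 1 - w'.length) :: w' → w = w' := by
  intro w _ w' _ h
  exact (List.cons.injEq _ _ _ _ ▸ h).2

lemma DL_key : ∀ s : ℕ,
    ((DL s).card : ℤ) = Nat.fib (s+1) ∧
    5 * ∑ w ∈ DL s, (w.length : ℤ) = 2 * s * Nat.fib (s+1) - (s + 1) * Nat.fib s ∧
    50 * ∑ w ∈ DL s, (w.sum : ℤ) =
      (5 * (s:ℤ)^2 + 7 * s) * Nat.fib (s+1) - (6 * s + 6) * Nat.fib s := by
  have main : ∀ s : ℕ,
      (((DL s).card : ℤ) = Nat.fib (s+1) ∧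
       5 * ∑ w ∈ DL s, (w.length : ℤ) = 2 * s * Nat.fib (s+1) - (s + 1) * Nat.fib s ∧
       50 * ∑ w ∈ DL s, (w.sum : ℤ) =
         (5 * (s:ℤ)^2 + 7 * s) * Nat.fib (s+1) - (6 * s + 6) * Nat.fib s) ∧
      (((DL (s+1)).card : ℤ) = Nat.fib (s+2) ∧
       5 * ∑ w ∈ DL (s+1), (w.length : ℤ) = 2 * (s+1) * Nat.fib (s+2) - (s + 2) * Nat.fib (s+1) ∧
       50 * ∑ w ∈ DL (s+1), (w.sum : ℤ) =
         (5 * ((s:ℤ)+1)^2 + 7 * ((s:ℤ)+1)) * Nat.fib (s+2) - (6 * ((s:ℤ)+1) + 6) * Nat.fib (s+1)) := by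
    intro s
    induction s with
    | zero =>
      refine ⟨⟨?_, ?_, ?_⟩, ?_, ?_, ?_⟩ <;> simp [DL]
    | succ n ih =>
      obtain ⟨⟨hC0, hL0, hT0⟩, hC1, hL1, hT1⟩ := ih
      refine ⟨⟨hC1, hL1, hT1⟩, ?_, ?_, ?_⟩
      · rw [show n+1+1 = n+2 from rfl, DL, Finset.card_union_of_disjoint (DL_disjoint n),
          Finset.card_image_of_injOn (cons_injOn n)]
        rw [show n+1+2 = (n+1)+2 from rfl, Nat.fib_add_two]
        push_cast
        linarith [hC0, hC1]
      · rw [show n+1+1 = n+2 from rfl, DL, Finset.sum_union (DL_disjoint n),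
          Finset.sum_image (cons_injOn n)]
        simp only [List.length_cons, Nat.cast_add, Nat.cast_one]
        rw [Finset.sum_add_distrib, Finset.sum_const, nsmul_eq_mul, mul_one]
        have hb2 : (Nat.fib (n+2) : ℤ) = Nat.fib (n+1) + Nat.fib n := by
          rw [Nat.fib_add_two]; push_cast; ring
        have hb3 : (Nat.fib (n+1+2) : ℤ) = 2 * Nat.fib (n+1) + Nat.fib n := by
          rw [show n+1+2 = (n+1)+2 from rfl, Nat.fib_add_two, Nat.fib_add_two]
          push_cast; ring
        rw [hb3, hb2]
        linear_combination hL1 + hL0 + 5 * hC0 + (2 * (n:ℤ) + 2) * hb2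
      · rw [show n+1+1 = n+2 from rfl, DL, Finset.sum_union (DL_disjoint n),
          Finset.sum_image (cons_injOn n)]
        have hrw : ∀ w ∈ DL n, ((((n + 1 - w.length) :: w).sum : ℕ) : ℤ)
            = ((n:ℤ) + 1 - w.length) + w.sum := by
          intro w hw
          have h := DL_length_le hw
          simp only [List.sum_cons]
          omega
        rw [Finset.sum_congr rfl hrw, Finset.sum_add_distrib, Finset.sum_sub_distrib,
          Finset.sum_const, nsmul_eq_mul]
        have hb2 : (Nat.fib (n+2) : ℤ) = Nat.fib (n+1) + Nat.fib n := by
          rw [Nat.fib_add_two]; push_cast; ring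
        have hb3 : (Nat.fib (n+1+2) : ℤ) = 2 * Nat.fib (n+1) + Nat.fib n := by
          rw [show n+1+2 = (n+1)+2 from rfl, Nat.fib_add_two, Nat.fib_add_two]
          push_cast; ring
        rw [hb3, hb2]
        have hcast : ((n+1 : ℕ) : ℤ) = (n : ℤ) + 1 := by push_cast; ring
        rw [hcast]
        linear_combination hT1 + hT0 + (50 * (n:ℤ) + 50) * hC0 - 10 * hL0
          + (5 * (n:ℤ)^2 + 17 * n + 12) * hb2
  exact fun s => (main s).1

namespace YoungDiagram

lemma colLen_pos_iff {Y : YoungDiagram} {j : ℕ} : 0 < Y.colLen j ↔ j < Y.rowLen 0 := by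
  rw [← mem_iff_lt_colLen, mem_iff_lt_rowLen]

/-- For a diagram with distinct parts, consecutive column lengths differ by at most 1. -/
lemma colLen_step {Y : YoungDiagram} (hd : Y.DistinctParts) (j : ℕ) :
    Y.colLen j ≤ Y.colLen (j + 1) + 1 := by
  by_contra hcon
  push_neg at hcon
  set c := Y.colLen (j + 1) with hc
  have h1 : (c + 1, j) ∈ Y := mem_iff_lt_colLen.2 (by omega)
  have h2 : (c, j + 1) ∉ Y := by rw [mem_iff_lt_colLen]; omega
  have h3 : (c + 1, j + 1) ∉ Y := by rw [mem_iff_lt_colLen]; omega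
  have hr1 : j < Y.rowLen (c + 1) := mem_iff_lt_rowLen.1 h1
  have hr2 : Y.rowLen c ≤ j + 1 := by
    by_contra h; exact h2 (mem_iff_lt_rowLen.2 (by omega))
  have hr3 : Y.rowLen (c + 1) ≤ j + 1 := by
    by_contra h; exact h3 (mem_iff_lt_rowLen.2 (by omega))
  have := hd c (by omega)
  omega

/-- distinct parts: only one row of maximal length. -/
lemma colLen_last {Y : YoungDiagram} (hd : Y.DistinctParts) (h : 0 < Y.rowLen 0) :
    Y.colLen (Y.rowLen 0 - 1) = 1 := by
  have h1 : (0, Y.rowLen 0 - 1) ∈ Y := mem_iff_lt_rowLen.2 (by omega)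
  have h2 : (1, Y.rowLen 0 - 1) ∉ Y := by
    rw [mem_iff_lt_rowLen]
    intro hcon
    have hpos : 0 < Y.rowLen (0 + 1) := by rw [zero_add]; omega
    have h0 := hd 0 hpos
    rw [zero_add] at h0
    omega
  rw [mem_iff_lt_colLen] at h1 h2
  omega

lemma isCore_iff {Y : YoungDiagram} (hd : Y.DistinctParts) (s : ℕ) (hs : 0 < s) :
    Y.IsCore s (s + 1) ↔ Y.rowLen 0 + Y.colLen 0 ≤ s := by
  constructor
  · intro hcore
    by_contra hcon
    push_neg at hcon
    have hrpos : 0 < Y.rowLen 0 := by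
      by_contra h
      push_neg at h
      interval_cases h' : Y.rowLen 0
      · have : Y.colLen 0 = 0 := by
          have := colLen_pos_iff (Y := Y) (j := 0)
          omega
        omega
    -- integer-valued hook of cell (0, j)
    have hookCast : ∀ j, j < Y.rowLen 0 →
        (Y.hookLength 0 j : ℤ) = (Y.rowLen 0 : ℤ) + Y.colLen j - j - 1 := by
      intro j hj
      have hcl : 0 < Y.colLen j := colLen_pos_iff.2 hj
      rw [hookLength]
      omega
    -- find a cell with hook s or s+1
    have hex : ∃ j : ℕ, j ≤ Y.rowLen 0 - 1 ∧
        (Y.rowLen 0 : ℤ) + Y.colLen j - j - 1 ≤ s + 1 := by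
      refine ⟨Y.rowLen 0 - 1, le_refl _, ?_⟩
      rw [colLen_last hd hrpos]
      omega
    classical
    obtain ⟨hjle, hjub⟩ := Nat.find_spec hex
    set j := Nat.find hex with hj
    have hjlt : j < Y.rowLen 0 := by omega
    have hjmem : (0, j) ∈ Y := mem_iff_lt_rowLen.2 hjlt
    have hcastj := hookCast j hjlt
    have hlb : (s : ℤ) ≤ (Y.rowLen 0 : ℤ) + Y.colLen j - j - 1 := by
      rcases Nat.eq_zero_or_pos j with h0 | hpos
      · rw [h0]
        push_cast
        omega
      · have hmin : ¬ (j - 1 ≤ Y.rowLen 0 - 1 ∧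
            (Y.rowLen 0 : ℤ) + Y.colLen (j-1) - (j-1 : ℕ) - 1 ≤ s + 1) :=
          Nat.find_min hex (by omega)
        push_neg at hmin
        have h1 := hmin (by omega)
        have hstep := colLen_step hd (j - 1)
        rw [Nat.sub_add_cancel hpos] at hstep
        omega
    have := hcore 0 j hjmem
    omega
  · intro hle i j hmem
    have h1 : j < Y.rowLen i := mem_iff_lt_rowLen.1 hmem
    have h2 : i < Y.colLen j := mem_iff_lt_colLen.1 hmem
    have h3 : Y.rowLen i ≤ Y.rowLen 0 := Y.rowLen_anti 0 i (by omega)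
    have h4 : Y.colLen j ≤ Y.colLen 0 := Y.colLen_anti 0 j (by omega)
    rw [hookLength]
    constructor <;> omega

end YoungDiagram

namespace YoungDiagram

lemma list_range_map_sum (n : ℕ) (f : ℕ → ℕ) :
    ((List.range n).map f).sum = ∑ i ∈ Finset.range n, f i := by
  induction n with
  | zero => simp
  | succ k ih => rw [List.range_succ, Finset.sum_range_succ]; simp [ih]

lemma card_eq_sum_rowLens'_s7 (Y : YoungDiagram) : Y.card = Y.rowLens.sum := by
  rw [rowLens, list_range_map_sum]
  rw [show Y.card = Y.cells.card from rfl]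
  rw [Finset.card_eq_sum_card_fiberwise (f := Prod.fst) (t := Finset.range (Y.colLen 0))
    (fun x hx => by
      rw [Finset.mem_coe, Finset.mem_range, ← mem_iff_lt_colLen]
      exact Y.up_left_mem (le_refl _) (Nat.zero_le _) hx)]
  refine Finset.sum_congr rfl fun i _ => ?_
  rw [rowLen_eq_card]
  rfl

lemma headD_rowLens (Y : YoungDiagram) : Y.rowLens.headD 0 = Y.rowLen 0 := by
  rw [rowLens]
  cases h : Y.colLen 0 with
  | zero =>
    have : ¬ (0 < Y.rowLen 0) := by
      rw [← mem_iff_lt_rowLen, mem_iff_lt_colLen]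
      omega
    simp
    omega
  | succ k =>
    rw [List.range_succ_eq_map]
    simp



end YoungDiagram

noncomputable instance : DecidableEq YoungDiagram := Classical.decEq _

noncomputable def toYD (w : List ℕ) : YoungDiagram :=
  if h : w.SortedGE then YoungDiagram.ofRowLens w h else ⊥

lemma chain'_gt_sorted {w : List ℕ} (h : w.Chain' (· > ·)) : w.SortedGE := by
  have h := List.isChain_iff_pairwise.1 h
  exact (h.imp le_of_lt).sortedGE

lemma toYD_eq {w : List ℕ} (hc : w.Chain' (· > ·)) :
    toYD w = YoungDiagram.ofRowLens w (chain'_gt_sorted hc) := by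
  rw [toYD, dif_pos (chain'_gt_sorted hc)]

lemma toYD_rowLens {w : List ℕ} (hc : w.Chain' (· > ·)) (hpos : ∀ x ∈ w, 0 < x) :
    (toYD w).rowLens = w := by
  rw [toYD_eq hc]
  exact YoungDiagram.rowLens_ofRowLens_eq_self hpos

lemma rowLen_toYD {w : List ℕ} (hc : w.Chain' (· > ·)) (hpos : ∀ x ∈ w, 0 < x) (i : ℕ) :
    (toYD w).rowLen i = w.getD i 0 := by
  rw [toYD_eq hc]
  by_cases h : i < w.length
  · rw [List.getD_eq_getElem _ _ h]
    simpa using YoungDiagram.rowLen_ofRowLens (w := w) (hw := chain'_gt_sorted hc) ⟨i, h⟩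
  · push_neg at h
    rw [List.getD_eq_default _ _ h]
    have hcl : (YoungDiagram.ofRowLens w (chain'_gt_sorted hc)).colLen 0 = w.length := by
      rw [← YoungDiagram.length_rowLens, YoungDiagram.rowLens_ofRowLens_eq_self hpos]
    have := YoungDiagram.rowLen_pos_iff
      (Y := YoungDiagram.ofRowLens w (chain'_gt_sorted hc)) (i := i)
    omega

lemma colLen0_toYD {w : List ℕ} (hc : w.Chain' (· > ·)) (hpos : ∀ x ∈ w, 0 < x) :
    (toYD w).colLen 0 = w.length := by
  rw [← YoungDiagram.length_rowLens, toYD_rowLens hc hpos]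

lemma getD_zero_eq_headD (w : List ℕ) : w.getD 0 0 = w.headD 0 := by
  cases w <;> simp

lemma toYD_mem {s : ℕ} (hs : 0 < s) {w : List ℕ} (hw : w ∈ DL s) :
    toYD w ∈ corePartitionsDistinct s := by
  obtain ⟨hc, hpos, hle⟩ := (mem_DL s w).1 hw
  have hd : (toYD w).DistinctParts := by
    intro i hi
    simp only [rowLen_toYD hc hpos] at hi ⊢
    by_cases h : i + 1 < w.length
    · rw [List.getD_eq_getElem _ _ h, List.getD_eq_getElem _ _ (by omega : i < w.length)]
      have := List.isChain_iff_getElem.1 hc i (by omega)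
      simpa using this
    · rw [List.getD_eq_default _ _ (by omega)] at hi
      omega
  refine ⟨hd, ?_⟩
  rw [YoungDiagram.isCore_iff hd s hs, rowLen_toYD hc hpos, colLen0_toYD hc hpos,
    getD_zero_eq_headD]
  exact hle

lemma corePartitions_eq (s : ℕ) (hs : 0 < s) :
    corePartitionsDistinct s = ↑((DL s).image toYD) := by
  ext Y
  simp only [Finset.coe_image, Set.mem_image, Finset.mem_coe]
  constructor
  · rintro ⟨hd, hcore⟩
    refine ⟨Y.rowLens, ?_, ?_⟩
    · rw [mem_DL]
      refine ⟨?_, Y.pos_of_mem_rowLens, ?_⟩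
      · refine List.isChain_iff_getElem.2 ?_
        intro i hi
        simp only [List.get_eq_getElem, YoungDiagram.get_rowLens]
        have hpos : 0 < Y.rowLen (i + 1) := by
          rw [YoungDiagram.rowLen_pos_iff, ← YoungDiagram.length_rowLens]
          omega
        exact hd i hpos
      · rw [YoungDiagram.headD_rowLens, YoungDiagram.length_rowLens]
        exact (YoungDiagram.isCore_iff hd s hs).1 hcore
    · rw [toYD, dif_pos Y.rowLens_sorted]
      exact YoungDiagram.ofRowLens_to_rowLens_eq_self
  · rintro ⟨w, hw, rfl⟩
    exact toYD_mem hs hw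

lemma toYD_injOn (s : ℕ) : ∀ w ∈ DL s, ∀ w' ∈ DL s, toYD w = toYD w' → w = w' := by
  intro w hw w' hw' h
  obtain ⟨hc, hpos, -⟩ := (mem_DL s w).1 hw
  obtain ⟨hc', hpos', -⟩ := (mem_DL s w').1 hw'
  rw [← toYD_rowLens hc hpos, ← toYD_rowLens hc' hpos', h]

lemma card_toYD {s : ℕ} {w : List ℕ} (hw : w ∈ DL s) : (toYD w).card = w.sum := by
  obtain ⟨hc, hpos, -⟩ := (mem_DL s w).1 hw
  rw [YoungDiagram.card_eq_sum_rowLens'_s7, toYD_rowLens hc hpos]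


/-- `50 Σ_{p ∈ P_s} |p| = (5s² + 7s) F_{s+1} - (6s + 6) F_s`; equivalently, the expected
size of a uniformly random `(s, s+1)`-core partition with distinct parts is
`(5s² F_{s+1} - 6s F_s + 7s F_{s+1} - 6 F_s) / (50 F_{s+1})`. -/
theorem expected_size_corePartitionsDistinct (s : ℕ) (hs : 0 < s) :
    (50 : ℤ) * ∑ᶠ Y ∈ corePartitionsDistinct s, (Y.card : ℤ)
        = (5 * (s : ℤ) ^ 2 + 7 * (s : ℤ)) * (Nat.fib (s + 1) : ℤ)
          - (6 * (s : ℤ) + 6) * (Nat.fib s : ℤ) ∧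
    sizeMoment 1 s
        = (5 * (s : ℝ) ^ 2 * (Nat.fib (s + 1) : ℝ) - 6 * (s : ℝ) * (Nat.fib s : ℝ)
            + 7 * (s : ℝ) * (Nat.fib (s + 1) : ℝ) - 6 * (Nat.fib s : ℝ))
          / (50 * (Nat.fib (s + 1) : ℝ)) := by
  have hset := corePartitions_eq s hs
  have hsum : ∀ (f : YoungDiagram → ℤ),
      ∑ᶠ Y ∈ corePartitionsDistinct s, f Y = ∑ w ∈ DL s, f (toYD w) := by
    intro f
    rw [hset, finsum_mem_coe_finset, Finset.sum_image (toYD_injOn s)]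
  have hsumR : ∀ (f : YoungDiagram → ℝ),
      ∑ᶠ Y ∈ corePartitionsDistinct s, f Y = ∑ w ∈ DL s, f (toYD w) := by
    intro f
    rw [hset, finsum_mem_coe_finset, Finset.sum_image (toYD_injOn s)]
  obtain ⟨hC, hL, hT⟩ := DL_key s
  have h1 : (50 : ℤ) * ∑ᶠ Y ∈ corePartitionsDistinct s, (Y.card : ℤ)
      = (5 * (s : ℤ) ^ 2 + 7 * (s : ℤ)) * (Nat.fib (s + 1) : ℤ)
        - (6 * (s : ℤ) + 6) * (Nat.fib s : ℤ) := by
    rw [hsum (fun Y => (Y.card : ℤ))]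
    rw [Finset.sum_congr rfl (fun w hw => by rw [card_toYD hw])]
    exact hT
  refine ⟨h1, ?_⟩
  have hfib : (0 : ℝ) < (Nat.fib (s + 1) : ℝ) := by
    exact_mod_cast Nat.fib_pos.2 (by omega)
  have h2 : ∑ᶠ Y ∈ corePartitionsDistinct s, (Y.card : ℝ) ^ 1
      = ∑ w ∈ DL s, (((w.sum : ℤ)) : ℝ) := by
    rw [hsumR (fun Y => (Y.card : ℝ) ^ 1)]
    exact Finset.sum_congr rfl fun w hw => by
      rw [pow_one, card_toYD hw]; exact (Int.cast_natCast _).symm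
  have hTR : (50 : ℝ) * ∑ w ∈ DL s, (((w.sum : ℤ)) : ℝ)
      = (5 * (s : ℝ) ^ 2 + 7 * (s : ℝ)) * (Nat.fib (s + 1) : ℝ)
        - (6 * (s : ℝ) + 6) * (Nat.fib s : ℝ) := by
    exact_mod_cast hT
  rw [sizeMoment, h2]
  rw [div_eq_div_iff (by positivity) (by positivity)]
  linear_combination (Nat.fib (s+1) : ℝ) * hTR
end

section
/- For every positive integer s, the variance of the size X_s of a uniformly random (s,s+1)-core partition with distinct parts equals (20 s^3 F_s F_{s+1} + 10 s^3 F_{s+1}^2 − 27 s^2 F_s^2 + 33 s^2 F_s F_{s+1} + 57 s^2 F_{s+1}^2 − 54 s F_s^2 − 32 s F_s F_{s+1} + 65 s F_{s+1}^2 − 27 F_s^2 − 45 F_s F_{s+1}) / (1875 F_{s+1}^2). -/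
open Polynomial Filter

/-! ### Auxiliary development -/

namespace CoreVarAux

open YoungDiagram

private lemma nat_eq_of_lt_iff {a b : ℕ} (h : ∀ n, n < a ↔ n < b) : a = b :=
  le_antisymm (Nat.le_of_not_lt fun hc => lt_irrefl b ((h b).1 hc))
    (Nat.le_of_not_lt fun hc => lt_irrefl a ((h a).2 hc))

/-- Strict partitions with bounded perimeter. -/
def QSet (s : ℕ) : Set YoungDiagram :=
  {Y | Y.DistinctParts ∧ Y.rowLen 0 + Y.colLen 0 ≤ s}

lemma both_pos {Y : YoungDiagram} (h2 : 0 < Y.rowLen 0 + Y.colLen 0) :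
    0 < Y.rowLen 0 ∧ 0 < Y.colLen 0 := by
  have h1 : (0, 0) ∈ Y ↔ 0 < Y.rowLen 0 := YoungDiagram.mem_iff_lt_rowLen
  have h3 : (0, 0) ∈ Y ↔ 0 < Y.colLen 0 := YoungDiagram.mem_iff_lt_colLen
  by_cases hm : (0, 0) ∈ Y
  · exact ⟨h1.1 hm, h3.1 hm⟩
  · have ha : Y.rowLen 0 = 0 := by
      by_contra hr
      exact hm (h1.2 (by omega))
    have hb : Y.colLen 0 = 0 := by
      by_contra hr
      exact hm (h3.2 (by omega))
    omega

/-- For a strict partition, column lengths decrease by at most one. -/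
lemma colLen_step {Y : YoungDiagram} (hd : Y.DistinctParts) (j : ℕ)
    (hj : (0, j + 1) ∈ Y) : Y.colLen j ≤ Y.colLen (j + 1) + 1 := by
  by_contra hc
  push_neg at hc
  set i := Y.colLen (j + 1) with hi
  have h1 : (i + 1, j) ∈ Y := YoungDiagram.mem_iff_lt_colLen.2 (by omega)
  have h2 : (i, j) ∈ Y := YoungDiagram.mem_iff_lt_colLen.2 (by omega)
  have h3 : (i, j + 1) ∉ Y := by rw [YoungDiagram.mem_iff_lt_colLen]; omega
  have h4 : Y.rowLen i ≤ j + 1 := by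
    by_contra h4
    push_neg at h4
    exact h3 (YoungDiagram.mem_iff_lt_rowLen.2 h4)
  have h5 : j < Y.rowLen i := YoungDiagram.mem_iff_lt_rowLen.1 h2
  have h6 : j < Y.rowLen (i + 1) := YoungDiagram.mem_iff_lt_rowLen.1 h1
  have := hd i (by omega)
  omega

lemma descend (g : ℕ → ℕ) (s r : ℕ) (hr : 0 < r)
    (hstep : ∀ j, j + 1 < r → g j ≤ g (j + 1) + 2)
    (h0 : s ≤ g 0) (hlast : g (r - 1) ≤ s + 1) :
    ∃ j, j < r ∧ (g j = s ∨ g j = s + 1) := by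
  by_contra hno
  push_neg at hno
  have key : ∀ d j, j + d = r - 1 → s ≤ g j → False := by
    intro d
    induction d with
    | zero =>
      intro j hj hs'
      have hjeq : j = r - 1 := by omega
      subst hjeq
      have h1 := hno (r - 1) (by omega)
      omega
    | succ d ihd =>
      intro j hj hs'
      have h1 := hno j (by omega)
      have h2 := hstep j (by omega)
      exact ihd (j + 1) (by omega) (by omega)
  exact key (r - 1) 0 (by omega) h0

/-- Characterization: `(s, s+1)`-cores with distinct parts are exactly the strict
partitions of perimeter at most `s - 1`. -/
lemma core_eq_QSet (s : ℕ) : corePartitionsDistinct s = QSet s := by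
  ext Y
  constructor
  · rintro ⟨hd, hc⟩
    refine ⟨hd, ?_⟩
    by_contra hb
    push_neg at hb
    have hr0 : 0 < Y.rowLen 0 := (both_pos (by omega)).1
    set r := Y.rowLen 0 with hrdef
    have hstep : ∀ j, j + 1 < r → Y.hookLength 0 j ≤ Y.hookLength 0 (j + 1) + 2 := by
      intro j hjr
      have hmem : (0, j + 1) ∈ Y := YoungDiagram.mem_iff_lt_rowLen.2 (by omega)
      have hcs := colLen_step hd j hmem
      have hc2 : 0 < Y.colLen (j + 1) := YoungDiagram.mem_iff_lt_colLen.1 hmem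
      simp only [YoungDiagram.hookLength]
      omega
    have h0 : s ≤ Y.hookLength 0 0 := by
      have hc0 : 0 < Y.colLen 0 := (both_pos (by omega)).2
      simp only [YoungDiagram.hookLength]
      omega
    have hlast : Y.hookLength 0 (r - 1) ≤ s + 1 := by
      have hmem : (0, r - 1) ∈ Y := YoungDiagram.mem_iff_lt_rowLen.2 (by omega)
      have h1 : 0 < Y.colLen (r - 1) := YoungDiagram.mem_iff_lt_colLen.1 hmem
      have h2 : Y.colLen (r - 1) ≤ 1 := by
        by_contra h2
        push_neg at h2
        have hm : (1, r - 1) ∈ Y := YoungDiagram.mem_iff_lt_colLen.2 (by omega)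
        have h3 : r - 1 < Y.rowLen 1 := YoungDiagram.mem_iff_lt_rowLen.1 hm
        have h4 := hd 0 (by simp only [Nat.zero_add]; omega)
        simp only [Nat.zero_add] at h4
        omega
      simp only [YoungDiagram.hookLength]
      omega
    obtain ⟨j, hjr, hjv⟩ := descend (fun j => Y.hookLength 0 j) s r hr0 hstep h0 hlast
    have hmem : (0, j) ∈ Y := YoungDiagram.mem_iff_lt_rowLen.2 hjr
    have := hc 0 j hmem
    tauto
  · rintro ⟨hd, hb⟩
    refine ⟨hd, ?_⟩
    intro i j hij
    have h1 : j < Y.rowLen i := YoungDiagram.mem_iff_lt_rowLen.1 hij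
    have h2 : i < Y.colLen j := YoungDiagram.mem_iff_lt_colLen.1 hij
    have h3 : Y.rowLen i ≤ Y.rowLen 0 := Y.rowLen_anti 0 i (Nat.zero_le i)
    have h4 : Y.colLen j ≤ Y.colLen 0 := Y.colLen_anti 0 j (Nat.zero_le j)
    simp only [YoungDiagram.hookLength]
    omega

/-! ### Removing the top row -/

/-- The Young diagram obtained by deleting the top row. -/
def erow (Y : YoungDiagram) : YoungDiagram where
  cells := (Y.cells.filter fun p => p.1 ≠ 0).image fun p => (p.1 - 1, p.2)
  isLowerSet := by
    rintro ⟨a, b⟩ ⟨c, d⟩ ⟨hca, hdb⟩ h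
    dsimp only at hca hdb
    simp only [Finset.coe_image, Finset.coe_filter, Set.mem_image, Set.mem_setOf_eq,
      YoungDiagram.mem_cells] at h ⊢
    obtain ⟨⟨p, q⟩, ⟨hp, hp0⟩, hpq⟩ := h
    simp only [Prod.mk.injEq] at hpq
    refine ⟨(c + 1, d), ⟨?_, by omega⟩, by simp⟩
    exact Y.up_left_mem (by omega) (by omega) hp

lemma mem_erow {Y : YoungDiagram} {i j : ℕ} : (i, j) ∈ erow Y ↔ (i + 1, j) ∈ Y := by
  show (i, j) ∈ ((Y.cells.filter fun p => p.1 ≠ 0).image fun p => (p.1 - 1, p.2)) ↔ _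
  simp only [Finset.mem_image, Finset.mem_filter, YoungDiagram.mem_cells]
  constructor
  · rintro ⟨⟨p, q⟩, ⟨hp, hp0⟩, hpq⟩
    simp only [Prod.mk.injEq] at hpq
    have hq : q = j := hpq.2
    have hpi : p = i + 1 := by omega
    rw [← hpi, ← hq]
    exact hp
  · intro h
    exact ⟨(i + 1, j), ⟨h, by omega⟩, by simp⟩

lemma erow_rowLen (Y : YoungDiagram) (i : ℕ) : (erow Y).rowLen i = Y.rowLen (i + 1) :=
  nat_eq_of_lt_iff fun n => by
    rw [← YoungDiagram.mem_iff_lt_rowLen, mem_erow, YoungDiagram.mem_iff_lt_rowLen]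

lemma erow_colLen (Y : YoungDiagram) (j : ℕ) : (erow Y).colLen j = Y.colLen j - 1 :=
  nat_eq_of_lt_iff fun n => by
    rw [← YoungDiagram.mem_iff_lt_colLen, mem_erow, YoungDiagram.mem_iff_lt_colLen]
    omega

lemma card_erow (Y : YoungDiagram) : Y.card = Y.rowLen 0 + (erow Y).card := by
  have h1 : ((erow Y).cells).card = ((Y.cells.filter fun p => ¬ p.1 = 0)).card := by
    show ((Y.cells.filter fun p => p.1 ≠ 0).image fun p => (p.1 - 1, p.2)).card = _
    rw [Finset.card_image_of_injOn]
    rintro ⟨p1, p2⟩ hp ⟨q1, q2⟩ hq hpq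
    simp only [Finset.coe_filter, Set.mem_setOf_eq] at hp hq
    simp only [Prod.mk.injEq] at hpq ⊢
    obtain ⟨ha, hb⟩ := hpq
    have hp0 : p1 ≠ 0 := hp.2
    have hq0 : q1 ≠ 0 := hq.2
    constructor
    · omega
    · exact hb
  have h2 : Y.rowLen 0 = ((Y.cells.filter fun p => p.1 = 0)).card := by
    rw [Y.rowLen_eq_card]
    rfl
  have h3 := Finset.card_filter_add_card_filter_not
    (s := Y.cells) (p := fun p => p.1 = 0)
  show Y.cells.card = Y.rowLen 0 + ((erow Y).cells).card
  omega

lemma erow_mem {n : ℕ} {Y : YoungDiagram} (hd : Y.DistinctParts)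
    (hsum : Y.rowLen 0 + Y.colLen 0 = n + 2) :
    (erow Y) ∈ QSet n ∧ Y.colLen 0 = (erow Y).colLen 0 + 1 ∧
      Y.card = (erow Y).card + (n + 1 - (erow Y).colLen 0) := by
  obtain ⟨hr0, hc0⟩ := both_pos (Y := Y) (by omega)
  have hY1 : Y.rowLen 1 = 0 ∨ Y.rowLen 1 < Y.rowLen 0 := by
    rcases Nat.eq_zero_or_pos (Y.rowLen 1) with h | h
    · exact Or.inl h
    · exact Or.inr (hd 0 h)
  have hcol : (erow Y).colLen 0 = Y.colLen 0 - 1 := erow_colLen Y 0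
  have hrow : (erow Y).rowLen 0 = Y.rowLen 1 := erow_rowLen Y 0
  refine ⟨⟨?_, ?_⟩, by omega, ?_⟩
  · intro i hi
    rw [erow_rowLen, erow_rowLen] at *
    exact hd (i + 1) hi
  · rw [hcol, hrow]
    omega
  · have hce := card_erow Y
    omega

lemma erow_inj {n : ℕ} {Y Z : YoungDiagram}
    (hdY : Y.DistinctParts) (hsY : Y.rowLen 0 + Y.colLen 0 = n + 2)
    (hdZ : Z.DistinctParts) (hsZ : Z.rowLen 0 + Z.colLen 0 = n + 2)
    (he : erow Y = erow Z) : Y = Z := by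
  have hcY : 0 < Y.colLen 0 := (both_pos (by omega)).2
  have hcZ : 0 < Z.colLen 0 := (both_pos (by omega)).2
  have hcols : Y.colLen 0 = Z.colLen 0 := by
    have h1 := erow_colLen Y 0
    have h2 := erow_colLen Z 0
    rw [he] at h1
    omega
  have hrow : ∀ i, Y.rowLen i = Z.rowLen i := by
    intro i
    cases i with
    | zero => omega
    | succ k =>
      have h1 := erow_rowLen Y k
      have h2 := erow_rowLen Z k
      rw [he] at h1
      omega
  apply SetLike.ext
  rintro ⟨i, j⟩
  rw [YoungDiagram.mem_iff_lt_rowLen, YoungDiagram.mem_iff_lt_rowLen, hrow i]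

/-! ### Adding a top row -/

/-- Add a new top row to `μ` so that the result has perimeter exactly `n + 1`. -/
def arow (n : ℕ) (μ : YoungDiagram) (h : μ.rowLen 0 + μ.colLen 0 ≤ n) : YoungDiagram where
  cells := ((Finset.range (n + 1 - μ.colLen 0)).image fun j => (0, j)) ∪
      (μ.cells.image fun p => (p.1 + 1, p.2))
  isLowerSet := by
    rintro ⟨a, b⟩ ⟨c, d⟩ ⟨hca, hdb⟩ hmem
    dsimp only at hca hdb
    simp only [Finset.coe_union, Set.mem_union, Finset.coe_image, Set.mem_image,
      Finset.mem_coe, Finset.coe_range, Set.mem_Iio, YoungDiagram.mem_cells] at hmem ⊢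
    rcases hmem with ⟨jj, hjj, heq⟩ | ⟨⟨p, q⟩, hp, hpq⟩
    · simp only [Prod.mk.injEq] at heq
      left
      exact ⟨d, by omega, by simp only [Prod.mk.injEq, and_true, true_and]; omega⟩
    · simp only [Prod.mk.injEq] at hpq
      rcases Nat.eq_zero_or_pos c with rfl | hc
      · left
        refine ⟨d, ?_, rfl⟩
        have hq : q < μ.rowLen p := YoungDiagram.mem_iff_lt_rowLen.1 hp
        have := μ.rowLen_anti 0 p (Nat.zero_le p)
        omega
      · right
        refine ⟨(c - 1, d), ?_, ?_⟩
        · exact μ.up_left_mem (by omega) (by omega) hp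
        · dsimp only
          simp only [Prod.mk.injEq, and_true, true_and]
          omega

lemma arow_cells (n : ℕ) (μ : YoungDiagram) (h : μ.rowLen 0 + μ.colLen 0 ≤ n) :
    (arow n μ h).cells = ((Finset.range (n + 1 - μ.colLen 0)).image fun j => (0, j)) ∪
      (μ.cells.image fun p => (p.1 + 1, p.2)) := rfl

lemma mem_arow {n : ℕ} {μ : YoungDiagram} {h : μ.rowLen 0 + μ.colLen 0 ≤ n} {i j : ℕ} :
    (i, j) ∈ arow n μ h ↔ (i = 0 ∧ j < n + 1 - μ.colLen 0) ∨ (0 < i ∧ (i - 1, j) ∈ μ) := by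
  rw [← YoungDiagram.mem_cells, arow_cells]
  simp only [Finset.mem_union, Finset.mem_image, Finset.mem_range, YoungDiagram.mem_cells]
  constructor
  · rintro (⟨jj, hjj, heq⟩ | ⟨⟨p, q⟩, hp, hpq⟩)
    · simp only [Prod.mk.injEq] at heq
      left
      omega
    · simp only [Prod.mk.injEq] at hpq
      right
      refine ⟨by omega, ?_⟩
      have : (i - 1, j) = (p, q) := by simp only [Prod.mk.injEq, and_true, true_and]; omega
      rw [this]
      exact hp
  · rintro (⟨rfl, hj⟩ | ⟨hi, hm⟩)
    · exact Or.inl ⟨j, hj, rfl⟩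
    · right
      exact ⟨(i - 1, j), hm, by simp only [Prod.mk.injEq, and_true, true_and]; omega⟩

lemma arow_rowLen_zero {n : ℕ} {μ : YoungDiagram} (h : μ.rowLen 0 + μ.colLen 0 ≤ n) :
    (arow n μ h).rowLen 0 = n + 1 - μ.colLen 0 :=
  nat_eq_of_lt_iff fun m => by
    rw [← YoungDiagram.mem_iff_lt_rowLen, mem_arow]
    simp only [lt_self_iff_false, false_and, or_false, eq_self_iff_true, true_and]

lemma arow_rowLen_succ {n : ℕ} {μ : YoungDiagram} (h : μ.rowLen 0 + μ.colLen 0 ≤ n) (i : ℕ) :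
    (arow n μ h).rowLen (i + 1) = μ.rowLen i :=
  nat_eq_of_lt_iff fun m => by
    rw [← YoungDiagram.mem_iff_lt_rowLen, mem_arow, YoungDiagram.mem_iff_lt_rowLen]
    simp only [Nat.add_sub_cancel]
    omega

lemma arow_colLen_zero {n : ℕ} {μ : YoungDiagram} (h : μ.rowLen 0 + μ.colLen 0 ≤ n) :
    (arow n μ h).colLen 0 = μ.colLen 0 + 1 :=
  nat_eq_of_lt_iff fun m => by
    rw [← YoungDiagram.mem_iff_lt_colLen, mem_arow, YoungDiagram.mem_iff_lt_colLen]
    omega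

lemma erow_arow {n : ℕ} {μ : YoungDiagram} (h : μ.rowLen 0 + μ.colLen 0 ≤ n) :
    erow (arow n μ h) = μ := by
  apply SetLike.ext
  rintro ⟨i, j⟩
  rw [mem_erow, mem_arow]
  constructor
  · rintro (⟨h0, _⟩ | ⟨_, hm⟩)
    · omega
    · simpa using hm
  · intro hm
    right
    exact ⟨Nat.succ_pos i, by simpa using hm⟩

lemma arow_distinct {n : ℕ} {μ : YoungDiagram} (h : μ.rowLen 0 + μ.colLen 0 ≤ n)
    (hd : μ.DistinctParts) : (arow n μ h).DistinctParts := by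
  intro i hi
  cases i with
  | zero =>
    rw [arow_rowLen_succ h 0, arow_rowLen_zero h]
    have := μ.rowLen_anti 0 0 (le_refl 0)
    omega
  | succ k =>
    rw [arow_rowLen_succ h (k + 1)] at hi
    rw [arow_rowLen_succ h (k + 1), arow_rowLen_succ h k]
    exact hd k hi

lemma arow_sum {n : ℕ} {μ : YoungDiagram} (h : μ.rowLen 0 + μ.colLen 0 ≤ n) :
    (arow n μ h).rowLen 0 + (arow n μ h).colLen 0 = n + 2 := by
  rw [arow_rowLen_zero h, arow_colLen_zero h]
  omega

/-! ### Finiteness -/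

lemma rowLen_bot (i : ℕ) : (⊥ : YoungDiagram).rowLen i = 0 := by
  have : ¬ 0 < (⊥ : YoungDiagram).rowLen i := fun hlt =>
    YoungDiagram.notMem_bot (i, 0) (YoungDiagram.mem_iff_lt_rowLen.2 hlt)
  omega

lemma colLen_bot (j : ℕ) : (⊥ : YoungDiagram).colLen j = 0 := by
  have : ¬ 0 < (⊥ : YoungDiagram).colLen j := fun hlt =>
    YoungDiagram.notMem_bot (0, j) (YoungDiagram.mem_iff_lt_colLen.2 hlt)
  omega

lemma card_bot : (⊥ : YoungDiagram).card = 0 := by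
  show (⊥ : YoungDiagram).cells.card = 0
  rw [YoungDiagram.cells_bot]
  rfl

lemma bot_mem_QSet (s : ℕ) : (⊥ : YoungDiagram) ∈ QSet s := by
  refine ⟨fun i hi => ?_, ?_⟩
  · rw [rowLen_bot] at hi
    omega
  · rw [rowLen_bot, colLen_bot]
    omega

lemma eq_bot_of_rowLen_zero {Y : YoungDiagram} (h : Y.rowLen 0 = 0) : Y = ⊥ := by
  apply SetLike.ext
  rintro ⟨i, j⟩
  refine iff_of_false (fun hm => ?_) (YoungDiagram.notMem_bot _)
  have h00 : (0, 0) ∈ Y := Y.up_left_mem (Nat.zero_le _) (Nat.zero_le _) hm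
  have := YoungDiagram.mem_iff_lt_rowLen.1 h00
  omega

lemma QSet_eq_bot {s : ℕ} (hs : s ≤ 1) : QSet s = {⊥} := by
  apply Set.eq_of_subset_of_subset
  · rintro Y ⟨hd, hb⟩
    simp only [Set.mem_singleton_iff]
    apply eq_bot_of_rowLen_zero
    by_contra hr
    obtain ⟨h1, h2⟩ := both_pos (Y := Y) (by omega)
    omega
  · rintro Y rfl
    exact bot_mem_QSet s

lemma QSet_finite (s : ℕ) : (QSet s).Finite := by
  induction s using Nat.strong_induction_on with
  | _ s ih =>
    rcases Nat.lt_or_ge s 2 with h2 | h2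
    · rw [QSet_eq_bot (by omega)]
      exact Set.finite_singleton _
    · obtain ⟨n, rfl⟩ : ∃ n, s = n + 2 := ⟨s - 2, by omega⟩
      have hfin1 := ih (n + 1) (by omega)
      have hfin0 := ih n (by omega)
      have hsplit : QSet (n + 2) ⊆ QSet (n + 1) ∪
          {Y | Y.DistinctParts ∧ Y.rowLen 0 + Y.colLen 0 = n + 2} := by
        rintro Y ⟨hd, hb⟩
        rcases Nat.lt_or_ge (Y.rowLen 0 + Y.colLen 0) (n + 2) with h | h
        · exact Or.inl ⟨hd, by omega⟩
        · exact Or.inr ⟨hd, by omega⟩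
      refine Set.Finite.subset (hfin1.union ?_) hsplit
      have hinj : Set.InjOn erow {Y | Y.DistinctParts ∧ Y.rowLen 0 + Y.colLen 0 = n + 2} := by
        intro Y hY Z hZ he
        exact erow_inj hY.1 hY.2 hZ.1 hZ.2 he
      apply Set.Finite.of_finite_image ?_ hinj
      apply hfin0.subset
      rintro _ ⟨Y, hY, rfl⟩
      exact (erow_mem hY.1 hY.2).1

/-- The finite set of strict partitions with perimeter at most `s - 1`. -/
noncomputable def QF (s : ℕ) : Finset YoungDiagram := (QSet_finite s).toFinset

lemma mem_QF {s : ℕ} {Y : YoungDiagram} :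
    Y ∈ QF s ↔ Y.DistinctParts ∧ Y.rowLen 0 + Y.colLen 0 ≤ s := by
  rw [QF, Set.Finite.mem_toFinset]
  exact Iff.rfl

end CoreVarAux


namespace CoreVarAux

open YoungDiagram

/-! ### The sum recursion -/

lemma sum_QF_rec (n : ℕ) (ψ : ℕ → ℕ → ℝ) :
    ∑ Y ∈ QF (n + 2), ψ Y.card (Y.colLen 0)
      = ∑ Y ∈ QF (n + 1), ψ Y.card (Y.colLen 0)
        + ∑ Y ∈ QF n, ψ (Y.card + (n + 1 - Y.colLen 0)) (Y.colLen 0 + 1) := by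
  classical
  have hsub : QF (n + 1) ⊆ QF (n + 2) := by
    intro Y hY
    rw [mem_QF] at hY ⊢
    exact ⟨hY.1, by omega⟩
  have key : ∑ Y ∈ QF (n + 2) \ QF (n + 1), ψ Y.card (Y.colLen 0)
      = ∑ Y ∈ QF n, ψ (Y.card + (n + 1 - Y.colLen 0)) (Y.colLen 0 + 1) := by
    have hmemD : ∀ Y, Y ∈ QF (n + 2) \ QF (n + 1) ↔
        Y.DistinctParts ∧ Y.rowLen 0 + Y.colLen 0 = n + 2 := by
      intro Y
      rw [Finset.mem_sdiff, mem_QF, mem_QF]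
      constructor
      · rintro ⟨⟨hd, hle⟩, hnot⟩
        refine ⟨hd, ?_⟩
        have : ¬ (Y.rowLen 0 + Y.colLen 0 ≤ n + 1) := fun hle' => hnot ⟨hd, hle'⟩
        omega
      · rintro ⟨hd, heq⟩
        exact ⟨⟨hd, by omega⟩, fun hcon => by omega⟩
    apply Finset.sum_bij (i := fun Y _ => erow Y)
    · intro Y hY
      rw [hmemD] at hY
      rw [mem_QF]
      exact (erow_mem hY.1 hY.2).1
    · intro Y hY Z hZ he
      rw [hmemD] at hY hZ
      exact erow_inj hY.1 hY.2 hZ.1 hZ.2 he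
    · intro μ hμ
      rw [mem_QF] at hμ
      refine ⟨arow n μ hμ.2, ?_, erow_arow hμ.2⟩
      rw [hmemD]
      exact ⟨arow_distinct hμ.2 hμ.1, arow_sum hμ.2⟩
    · intro Y hY
      rw [hmemD] at hY
      obtain ⟨hQ, hcol, hcard⟩ := erow_mem hY.1 hY.2
      rw [hcard, hcol]
  rw [← Finset.sum_sdiff hsub, key]
  ring

/-! ### The six statistics -/

noncomputable def S00 (s : ℕ) : ℝ := ∑ Y ∈ QF s, (1 : ℝ)
noncomputable def S01 (s : ℕ) : ℝ := ∑ Y ∈ QF s, (Y.colLen 0 : ℝ)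
noncomputable def S10 (s : ℕ) : ℝ := ∑ Y ∈ QF s, (Y.card : ℝ)
noncomputable def S02 (s : ℕ) : ℝ := ∑ Y ∈ QF s, (Y.colLen 0 : ℝ) ^ 2
noncomputable def S11 (s : ℕ) : ℝ := ∑ Y ∈ QF s, (Y.card : ℝ) * (Y.colLen 0 : ℝ)
noncomputable def S20 (s : ℕ) : ℝ := ∑ Y ∈ QF s, (Y.card : ℝ) ^ 2

lemma sum_comb (t : Finset YoungDiagram) (c1 c2 c3 c4 c5 c6 : ℝ) :
    ∑ Y ∈ t, (c1 * 1 + c2 * (Y.colLen 0 : ℝ) + c3 * (Y.card : ℝ)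
        + c4 * (Y.colLen 0 : ℝ) ^ 2 + c5 * ((Y.card : ℝ) * (Y.colLen 0 : ℝ))
        + c6 * (Y.card : ℝ) ^ 2)
      = c1 * (∑ Y ∈ t, (1 : ℝ)) + c2 * (∑ Y ∈ t, (Y.colLen 0 : ℝ))
        + c3 * (∑ Y ∈ t, (Y.card : ℝ)) + c4 * (∑ Y ∈ t, (Y.colLen 0 : ℝ) ^ 2)
        + c5 * (∑ Y ∈ t, (Y.card : ℝ) * (Y.colLen 0 : ℝ))
        + c6 * (∑ Y ∈ t, (Y.card : ℝ) ^ 2) := by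
  simp only [Finset.mul_sum, Finset.sum_add_distrib]

lemma colLen_le {n : ℕ} {Y : YoungDiagram} (hY : Y ∈ QF n) : Y.colLen 0 ≤ n := by
  rw [mem_QF] at hY
  omega

lemma cast_shift {n : ℕ} {Y : YoungDiagram} (hY : Y ∈ QF n) :
    ((Y.card + (n + 1 - Y.colLen 0) : ℕ) : ℝ) = (Y.card : ℝ) + ((n : ℝ) + 1) - (Y.colLen 0 : ℝ) := by
  have hm := colLen_le hY
  have h1 : (((n : ℕ) + 1 - Y.colLen 0 : ℕ) : ℝ) = ((n : ℝ) + 1) - (Y.colLen 0 : ℝ) := by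
    rw [Nat.cast_sub (by omega)]
    push_cast
    ring
  push_cast [h1]
  ring

lemma S00_rec (n : ℕ) : S00 (n + 2) = S00 (n + 1) + S00 n := by
  have h := sum_QF_rec n (fun a b => (1 : ℝ))
  simpa only [S00] using h

lemma S01_rec (n : ℕ) : S01 (n + 2) = S01 (n + 1) + (S00 n + S01 n) := by
  have h := sum_QF_rec n (fun a b => (b : ℝ))
  rw [S01, S01, h]
  congr 1
  have hpt : ∀ Y ∈ QF n, ((Y.colLen 0 + 1 : ℕ) : ℝ)
      = (1 : ℝ) * 1 + 1 * (Y.colLen 0 : ℝ) + 0 * (Y.card : ℝ)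
        + 0 * (Y.colLen 0 : ℝ) ^ 2 + 0 * ((Y.card : ℝ) * (Y.colLen 0 : ℝ))
        + 0 * (Y.card : ℝ) ^ 2 := by
    intro Y hY
    push_cast
    ring
  rw [Finset.sum_congr rfl hpt, sum_comb]
  simp only [S00, S01]
  ring

lemma S10_rec (n : ℕ) :
    S10 (n + 2) = S10 (n + 1) + (((n : ℝ) + 1) * S00 n + (-1) * S01 n + S10 n) := by
  have h := sum_QF_rec n (fun a b => (a : ℝ))
  rw [S10, S10, h]
  congr 1
  have hpt : ∀ Y ∈ QF n, ((Y.card + (n + 1 - Y.colLen 0) : ℕ) : ℝ)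
      = ((n : ℝ) + 1) * 1 + (-1) * (Y.colLen 0 : ℝ) + 1 * (Y.card : ℝ)
        + 0 * (Y.colLen 0 : ℝ) ^ 2 + 0 * ((Y.card : ℝ) * (Y.colLen 0 : ℝ))
        + 0 * (Y.card : ℝ) ^ 2 := by
    intro Y hY
    rw [cast_shift hY]
    ring
  rw [Finset.sum_congr rfl hpt, sum_comb]
  simp only [S00, S01, S10]
  ring

lemma S02_rec (n : ℕ) : S02 (n + 2) = S02 (n + 1) + (S00 n + 2 * S01 n + S02 n) := by
  have h := sum_QF_rec n (fun a b => (b : ℝ) ^ 2)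
  rw [S02, S02, h]
  congr 1
  have hpt : ∀ Y ∈ QF n, ((Y.colLen 0 + 1 : ℕ) : ℝ) ^ 2
      = (1 : ℝ) * 1 + 2 * (Y.colLen 0 : ℝ) + 0 * (Y.card : ℝ)
        + 1 * (Y.colLen 0 : ℝ) ^ 2 + 0 * ((Y.card : ℝ) * (Y.colLen 0 : ℝ))
        + 0 * (Y.card : ℝ) ^ 2 := by
    intro Y hY
    push_cast
    ring
  rw [Finset.sum_congr rfl hpt, sum_comb]
  simp only [S00, S01, S02]
  ring

lemma S11_rec (n : ℕ) :
    S11 (n + 2) = S11 (n + 1) + (((n : ℝ) + 1) * S00 n + (n : ℝ) * S01 n + S10 n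
      + (-1) * S02 n + S11 n) := by
  have h := sum_QF_rec n (fun a b => (a : ℝ) * (b : ℝ))
  rw [S11, S11, h]
  congr 1
  have hpt : ∀ Y ∈ QF n, ((Y.card + (n + 1 - Y.colLen 0) : ℕ) : ℝ) * ((Y.colLen 0 + 1 : ℕ) : ℝ)
      = ((n : ℝ) + 1) * 1 + (n : ℝ) * (Y.colLen 0 : ℝ) + 1 * (Y.card : ℝ)
        + (-1) * (Y.colLen 0 : ℝ) ^ 2 + 1 * ((Y.card : ℝ) * (Y.colLen 0 : ℝ))
        + 0 * (Y.card : ℝ) ^ 2 := by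
    intro Y hY
    rw [cast_shift hY]
    push_cast
    ring
  rw [Finset.sum_congr rfl hpt, sum_comb]
  simp only [S00, S01, S10, S02, S11]
  ring

lemma S20_rec (n : ℕ) :
    S20 (n + 2) = S20 (n + 1) + (((n : ℝ) + 1) ^ 2 * S00 n + (-(2 * ((n : ℝ) + 1))) * S01 n
      + (2 * ((n : ℝ) + 1)) * S10 n + S02 n + (-2) * S11 n + S20 n) := by
  have h := sum_QF_rec n (fun a b => (a : ℝ) ^ 2)
  rw [S20, S20, h]
  congr 1
  have hpt : ∀ Y ∈ QF n, ((Y.card + (n + 1 - Y.colLen 0) : ℕ) : ℝ) ^ 2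
      = (((n : ℝ) + 1) ^ 2) * 1 + (-(2 * ((n : ℝ) + 1))) * (Y.colLen 0 : ℝ)
        + (2 * ((n : ℝ) + 1)) * (Y.card : ℝ)
        + 1 * (Y.colLen 0 : ℝ) ^ 2 + (-2) * ((Y.card : ℝ) * (Y.colLen 0 : ℝ))
        + 1 * (Y.card : ℝ) ^ 2 := by
    intro Y hY
    rw [cast_shift hY]
    ring
  rw [Finset.sum_congr rfl hpt, sum_comb]
  simp only [S00, S01, S10, S02, S11, S20]
  ring

end CoreVarAux


namespace CoreVarAux

open YoungDiagram

lemma QF_eq_bot {s : ℕ} (hs : s ≤ 1) : QF s = {⊥} := by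
  ext Y
  rw [QF, Set.Finite.mem_toFinset, QSet_eq_bot hs, Finset.mem_singleton,
    Set.mem_singleton_iff]

lemma S_base {s : ℕ} (hs : s ≤ 1) :
    S00 s = 1 ∧ S01 s = 0 ∧ S10 s = 0 ∧ S02 s = 0 ∧ S11 s = 0 ∧ S20 s = 0 := by
  simp only [S00, S01, S10, S02, S11, S20, QF_eq_bot hs, Finset.sum_singleton,
    card_bot, colLen_bot]
  norm_num

lemma closed (s : ℕ) :
    S00 s = (Nat.fib (s + 1) : ℝ) ∧
    S01 s = (2 * (s : ℝ) * (Nat.fib (s + 1) : ℝ) - ((s : ℝ) + 1) * (Nat.fib s : ℝ)) / 5 ∧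
    S10 s = ((15 * (s : ℝ) ^ 2 + 21 * (s : ℝ)) * (Nat.fib (s + 1) : ℝ)
        - (18 * (s : ℝ) + 18) * (Nat.fib s : ℝ)) / 150 ∧
    S02 s = ((5 * (s : ℝ) ^ 2 + 3 * (s : ℝ)) * (Nat.fib (s + 1) : ℝ)
        + (1 - 4 * (s : ℝ) - 5 * (s : ℝ) ^ 2) * (Nat.fib s : ℝ)) / 25 ∧
    S11 s = ((2 * (s : ℝ) ^ 3 + 5 * (s : ℝ) ^ 2 + 5 * (s : ℝ)) * (Nat.fib (s + 1) : ℝ)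
        - ((s : ℝ) ^ 3 + 6 * (s : ℝ) ^ 2 + 5 * (s : ℝ)) * (Nat.fib s : ℝ)) / 50 ∧
    S20 s = ((15 * (s : ℝ) ^ 4 + 50 * (s : ℝ) ^ 3 + 75 * (s : ℝ) ^ 2 + 52 * (s : ℝ))
          * (Nat.fib (s + 1) : ℝ)
        - (20 * (s : ℝ) ^ 3 + 60 * (s : ℝ) ^ 2 + 76 * (s : ℝ) + 36) * (Nat.fib s : ℝ)) / 1500 := by
  induction s using Nat.strong_induction_on with
  | _ s ih =>
    match s, ih with
    | 0, _ =>
      obtain ⟨h1, h2, h3, h4, h5, h6⟩ := S_base (s := 0) (by omega)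
      rw [h1, h2, h3, h4, h5, h6]
      norm_num [Nat.fib_one]
    | 1, _ =>
      obtain ⟨h1, h2, h3, h4, h5, h6⟩ := S_base (s := 1) (by omega)
      rw [h1, h2, h3, h4, h5, h6]
      norm_num [Nat.fib_one, Nat.fib_two]
    | (n + 2), ih =>
      obtain ⟨a0, b0, c0, d0, e0, f0⟩ := ih n (by omega)
      obtain ⟨a1, b1, c1, d1, e1, f1⟩ := ih (n + 1) (by omega)
      have hf2 : (Nat.fib (n + 1 + 1) : ℝ) = (Nat.fib n : ℝ) + (Nat.fib (n + 1) : ℝ) := by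
        have h : Nat.fib (n + 1 + 1) = Nat.fib n + Nat.fib (n + 1) := Nat.fib_add_two
        exact_mod_cast h
      have hf3 : (Nat.fib (n + 2 + 1) : ℝ)
          = (Nat.fib (n + 1) : ℝ) + (Nat.fib (n + 1 + 1) : ℝ) := by
        have h : Nat.fib (n + 2 + 1) = Nat.fib (n + 1) + Nat.fib (n + 1 + 1) :=
          Nat.fib_add_two (n := n + 1)
        exact_mod_cast h
      refine ⟨?_, ?_, ?_, ?_, ?_, ?_⟩
      · rw [S00_rec n, a1, a0, hf3, hf2]
        ring
      · rw [S01_rec n, b1, a0, b0, hf3, hf2]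
        push_cast
        ring
      · rw [S10_rec n, c1, a0, b0, c0, hf3, hf2]
        push_cast
        ring
      · rw [S02_rec n, d1, a0, b0, d0, hf3, hf2]
        push_cast
        ring
      · rw [S11_rec n, e1, a0, b0, c0, d0, e0, hf3, hf2]
        push_cast
        ring
      · rw [S20_rec n, f1, a0, b0, c0, d0, e0, f0, hf3, hf2]
        push_cast
        ring

end CoreVarAux


/-- Explicit formula for the variance of the size of a uniformly random `(s, s+1)`-core
partition with distinct parts (here computed as the second central moment). -/
theorem variance_corePartitionsDistinct (s : ℕ) (hs : 0 < s) :
    sizeCentralMoment 2 s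
      = (20 * (s : ℝ) ^ 3 * (Nat.fib s : ℝ) * (Nat.fib (s + 1) : ℝ)
          + 10 * (s : ℝ) ^ 3 * (Nat.fib (s + 1) : ℝ) ^ 2
          - 27 * (s : ℝ) ^ 2 * (Nat.fib s : ℝ) ^ 2
          + 33 * (s : ℝ) ^ 2 * (Nat.fib s : ℝ) * (Nat.fib (s + 1) : ℝ)
          + 57 * (s : ℝ) ^ 2 * (Nat.fib (s + 1) : ℝ) ^ 2
          - 54 * (s : ℝ) * (Nat.fib s : ℝ) ^ 2
          - 32 * (s : ℝ) * (Nat.fib s : ℝ) * (Nat.fib (s + 1) : ℝ)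
          + 65 * (s : ℝ) * (Nat.fib (s + 1) : ℝ) ^ 2
          - 27 * (Nat.fib s : ℝ) ^ 2
          - 45 * (Nat.fib s : ℝ) * (Nat.fib (s + 1) : ℝ))
        / (1875 * (Nat.fib (s + 1) : ℝ) ^ 2) := by
  obtain ⟨ha, hb, hc, hd, he, hf⟩ := CoreVarAux.closed s
  have hQcoe : corePartitionsDistinct s = ↑(CoreVarAux.QF s) := by
    rw [CoreVarAux.core_eq_QSet]
    exact (Set.Finite.coe_toFinset _).symm
  have hfibpos : (0 : ℝ) < (Nat.fib (s + 1) : ℝ) := by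
    have := Nat.fib_pos.2 (Nat.succ_pos s)
    exact_mod_cast this
  have hμ : sizeMoment 1 s = CoreVarAux.S10 s / (Nat.fib (s + 1) : ℝ) := by
    rw [sizeMoment, hQcoe, finsum_mem_coe_finset]
    simp only [pow_one, CoreVarAux.S10]
  rw [sizeCentralMoment, hQcoe, finsum_mem_coe_finset]
  have hpt : ∀ Y ∈ CoreVarAux.QF s, ((Y.card : ℝ) - sizeMoment 1 s) ^ 2
      = (Y.card : ℝ) ^ 2 - (2 * sizeMoment 1 s) * (Y.card : ℝ) + (sizeMoment 1 s ^ 2) * 1 :=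
    fun Y _ => by ring
  rw [Finset.sum_congr rfl hpt, Finset.sum_add_distrib, Finset.sum_sub_distrib,
    ← Finset.mul_sum, ← Finset.mul_sum]
  rw [show (∑ Y ∈ CoreVarAux.QF s, (Y.card : ℝ) ^ 2) = CoreVarAux.S20 s from rfl,
    show (∑ Y ∈ CoreVarAux.QF s, (Y.card : ℝ)) = CoreVarAux.S10 s from rfl,
    show (∑ Y ∈ CoreVarAux.QF s, (1 : ℝ)) = CoreVarAux.S00 s from rfl]
  rw [hμ, ha, hc, hf]
  have hne : (Nat.fib (s + 1) : ℝ) ≠ 0 := ne_of_gt hfibpos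
  field_simp
  ring
end

section
/- For every integer k with 1 ≤ k ≤ 16, there exist polynomials A_k and B_k with rational coefficients such that for all positive integers s, the k-th moment of the size X_s of a uniformly random (s,s+1)-core partition with distinct parts satisfies E[X_s^k] = A_k(s) · (F_s / F_{s+1}) + B_k(s); equivalently, Σ_{p ∈ P_s} |p|^k = A_k(s) F_s + B_k(s) F_{s+1}. -/
open Polynomial Filter

noncomputable section
namespace MFP

/-- the pair of polys describing `g(s+2)-g(s+1)-g(s)` for `g = A·F_s + B·F_{s+1}` -/
def psi1 (A B : ℚ[X]) : ℚ[X] := A.comp (X + C 2) + B.comp (X + C 2) - B.comp (X + C 1) - A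
def psi2 (A B : ℚ[X]) : ℚ[X] :=
  A.comp (X + C 2) + C 2 * B.comp (X + C 2) - A.comp (X + C 1) - B.comp (X + C 1) - B

lemma psi1_add (A B A' B' : ℚ[X]) :
    psi1 (A + A') (B + B') = psi1 A B + psi1 A' B' := by
  simp only [psi1, add_comp]; ring

lemma psi2_add (A B A' B' : ℚ[X]) :
    psi2 (A + A') (B + B') = psi2 A B + psi2 A' B' := by
  simp only [psi2, add_comp]; ring

lemma coeff_comp_pow (a c : ℚ) (m N : ℕ) :
    ((C a * X ^ m).comp (X + C c)).coeff N = a * (c ^ (m - N) * m.choose N) := by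
  rw [mul_comp, C_comp, X_pow_comp, coeff_C_mul, coeff_X_add_C_pow]

lemma coeff_mono (a : ℚ) (m N : ℕ) :
    (C a * X ^ m).coeff N = a * (if m = N then 1 else 0) := by
  rw [coeff_C_mul, coeff_X_pow]
  simp [eq_comm]

lemma coeff_psi1_mono (a b : ℚ) (n N : ℕ) (hN : n < N) :
    (psi1 (C a * X ^ (n + 1)) (C b * X ^ (n + 1))).coeff N = 0 := by
  simp only [psi1, coeff_sub, coeff_add, coeff_comp_pow, coeff_mono]
  rcases eq_or_lt_of_le (show n + 1 ≤ N from hN) with h | h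
  · rw [← h]; simp [Nat.choose_succ_self_right]
  · rw [Nat.choose_eq_zero_of_lt (by omega : n + 1 < N), if_neg (by omega : ¬ n + 1 = N)]
    ring

lemma coeff_psi2_mono (a b : ℚ) (n N : ℕ) (hN : n < N) :
    (psi2 (C a * X ^ (n + 1)) (C b * X ^ (n + 1))).coeff N = 0 := by
  simp only [psi2, coeff_sub, coeff_add, coeff_C_mul, coeff_comp_pow, coeff_X_pow]
  rcases eq_or_lt_of_le (show n + 1 ≤ N from hN) with h | h
  · rw [← h]; simp [Nat.choose_succ_self_right]; ring
  · rw [Nat.choose_eq_zero_of_lt (by omega : n + 1 < N), if_neg (by omega : ¬ N = n + 1)]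
    ring

lemma coeff_psi1_mono_top (a b : ℚ) (n : ℕ) :
    (psi1 (C a * X ^ (n + 1)) (C b * X ^ (n + 1))).coeff n = (n+1) * (2*a + b) := by
  simp only [psi1, coeff_sub, coeff_add, coeff_comp_pow, coeff_mono,
    Nat.choose_succ_self_right, Nat.succ_sub (le_refl n), Nat.sub_self]
  rw [if_neg (by omega : ¬ n + 1 = n)]
  push_cast
  ring

lemma coeff_psi2_mono_top (a b : ℚ) (n : ℕ) :
    (psi2 (C a * X ^ (n + 1)) (C b * X ^ (n + 1))).coeff n = (n+1) * (a + 3*b) := by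
  simp only [psi2, coeff_sub, coeff_add, coeff_C_mul, coeff_comp_pow, coeff_X_pow,
    Nat.choose_succ_self_right, Nat.succ_sub (le_refl n), Nat.sub_self]
  rw [if_neg (by omega : ¬ n = n + 1)]
  push_cast
  ring

lemma psi_surj : ∀ n (Cp Dp : ℚ[X]), Cp.natDegree ≤ n → Dp.natDegree ≤ n →
    ∃ A B : ℚ[X], psi1 A B = Cp ∧ psi2 A B = Dp := by
  intro n
  induction n with
  | zero =>
    intro Cp Dp hC hD
    set c := Cp.coeff 0 with hc
    set d := Dp.coeff 0 with hd
    refine ⟨C ((3*c - d)/5) * X ^ 1, C ((2*d - c)/5) * X ^ 1, ?_, ?_⟩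
    · have h0 : (psi1 (C ((3*c - d)/5) * X ^ 1) (C ((2*d - c)/5) * X ^ 1)).natDegree ≤ 0 :=
        natDegree_le_iff_coeff_eq_zero.2 fun N hN => coeff_psi1_mono _ _ 0 N hN
      rw [eq_C_of_natDegree_le_zero h0, eq_C_of_natDegree_le_zero hC]
      rw [show (0:ℕ) = 0 + 0 from rfl, coeff_psi1_mono_top]
      rw [← hc]
      congr 1
      push_cast
      ring
    · have h0 : (psi2 (C ((3*c - d)/5) * X ^ 1) (C ((2*d - c)/5) * X ^ 1)).natDegree ≤ 0 :=
        natDegree_le_iff_coeff_eq_zero.2 fun N hN => coeff_psi2_mono _ _ 0 N hN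
      rw [eq_C_of_natDegree_le_zero h0, eq_C_of_natDegree_le_zero hD]
      rw [show (0:ℕ) = 0 + 0 from rfl, coeff_psi2_mono_top]
      rw [← hd]
      congr 1
      push_cast
      ring
  | succ n ih =>
    intro Cp Dp hC hD
    set c := Cp.coeff (n+1) with hc
    set d := Dp.coeff (n+1) with hd
    set a := (3*(c/(n+2)) - (d/(n+2)))/5 with ha
    set b := (2*(d/(n+2)) - (c/(n+2)))/5 with hb
    set MA : ℚ[X] := C a * X ^ (n+2) with hMA
    set MB : ℚ[X] := C b * X ^ (n+2) with hMB
    have hn2 : ((n:ℚ)+1+1) ≠ 0 := by positivity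
    have hC' : (Cp - psi1 MA MB).natDegree ≤ n := by
      apply natDegree_le_iff_coeff_eq_zero.2
      intro N hN
      rcases eq_or_lt_of_le (show n + 1 ≤ N from hN) with h | h
      · rw [coeff_sub, ← h, hMA, hMB, show n+2 = (n+1)+1 from rfl, coeff_psi1_mono_top]
        rw [← hc, ha, hb]
        field_simp
        push_cast
        ring
      · rw [coeff_sub, hMA, hMB, show n+2 = (n+1)+1 from rfl,
          coeff_psi1_mono _ _ _ _ (by omega),
          natDegree_le_iff_coeff_eq_zero.1 hC N (by omega), sub_zero]
    have hD' : (Dp - psi2 MA MB).natDegree ≤ n := by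
      apply natDegree_le_iff_coeff_eq_zero.2
      intro N hN
      rcases eq_or_lt_of_le (show n + 1 ≤ N from hN) with h | h
      · rw [coeff_sub, ← h, hMA, hMB, show n+2 = (n+1)+1 from rfl, coeff_psi2_mono_top]
        rw [← hd, ha, hb]
        field_simp
        push_cast
        ring
      · rw [coeff_sub, hMA, hMB, show n+2 = (n+1)+1 from rfl,
          coeff_psi2_mono _ _ _ _ (by omega),
          natDegree_le_iff_coeff_eq_zero.1 hD N (by omega), sub_zero]
    obtain ⟨A', B', h1, h2⟩ := ih _ _ hC' hD'
    exact ⟨A' + MA, B' + MB, by rw [psi1_add, h1]; ring, by rw [psi2_add, h2]; ring⟩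


/-- `f` has the form `A(s)·F_s + B(s)·F_{s+1}` for polynomials `A, B`. -/
def Good (f : ℕ → ℚ) : Prop :=
  ∃ A B : ℚ[X], ∀ s : ℕ, f s = A.eval (s:ℚ) * (Nat.fib s : ℚ) + B.eval (s:ℚ) * (Nat.fib (s+1) : ℚ)

lemma good_solve (u E : ℕ → ℚ) (hrec : ∀ s, u (s+2) = u (s+1) + u s + E s)
    (hE : Good E) : Good u := by
  obtain ⟨Cp, Dp, hCD⟩ := hE
  obtain ⟨A, B, h1, h2⟩ := psi_surj (max Cp.natDegree Dp.natDegree) Cp Dp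
    (le_max_left _ _) (le_max_right _ _)
  set g : ℕ → ℚ := fun s => A.eval (s:ℚ) * (Nat.fib s : ℚ) + B.eval (s:ℚ) * (Nat.fib (s+1) : ℚ) with hgdef
  have hg : ∀ s : ℕ, g (s+2) = g (s+1) + g s + E s := by
    intro s
    have e1 : A.eval ((s:ℚ)+2) + B.eval ((s:ℚ)+2) - B.eval ((s:ℚ)+1) - A.eval (s:ℚ)
        = Cp.eval (s:ℚ) := by
      have := congrArg (eval (s:ℚ)) h1
      simpa [psi1, eval_comp] using this
    have e2 : A.eval ((s:ℚ)+2) + 2 * B.eval ((s:ℚ)+2) - A.eval ((s:ℚ)+1)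
        - B.eval ((s:ℚ)+1) - B.eval (s:ℚ) = Dp.eval (s:ℚ) := by
      have := congrArg (eval (s:ℚ)) h2
      simpa [psi2, eval_comp] using this
    have f2 : (Nat.fib (s+2) : ℚ) = Nat.fib s + Nat.fib (s+1) := by
      rw [Nat.fib_add_two]; push_cast; ring
    have f3 : (Nat.fib (s+3) : ℚ) = Nat.fib s + 2 * Nat.fib (s+1) := by
      rw [show s+3 = (s+1)+2 from rfl, Nat.fib_add_two, Nat.fib_add_two]; push_cast; ring
    rw [hCD]
    simp only [hgdef]
    push_cast
    rw [show s+2+1 = s+3 from rfl, show s+1+1 = s+2 from rfl]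
    linear_combination (eval ((s:ℚ)+2) A - eval ((s:ℚ)+1) B) * f2 + (eval ((s:ℚ)+2) B) * f3
      + (Nat.fib s : ℚ) * e1 + (Nat.fib (s+1) : ℚ) * e2
  set α : ℚ := (u 1 - g 1) - (u 0 - g 0) with hα
  set β : ℚ := u 0 - g 0 with hβ
  have key : ∀ s : ℕ, (u s - g s = α * Nat.fib s + β * Nat.fib (s+1)) ∧
      (u (s+1) - g (s+1) = α * Nat.fib (s+1) + β * Nat.fib (s+2)) := by
    intro s
    induction s with
    | zero =>
      constructor
      · show u 0 - g 0 = α * (Nat.fib 0 : ℚ) + β * (Nat.fib 1 : ℚ)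
        norm_num [hβ]
      · show u 1 - g 1 = α * (Nat.fib 1 : ℚ) + β * (Nat.fib 2 : ℚ)
        norm_num [hα, hβ]
    | succ n ih =>
      refine ⟨ih.2, ?_⟩
      have hu := hrec n
      have hgg := hg n
      have f3 : (Nat.fib (n+3) : ℚ) = Nat.fib (n+1) + Nat.fib (n+2) := by
        rw [show n+3 = (n+1)+2 from rfl, Nat.fib_add_two]; push_cast; ring
      have f2' : (Nat.fib (n+2) : ℚ) = Nat.fib n + Nat.fib (n+1) := by
        rw [Nat.fib_add_two]; push_cast; ring
      show u (n+2) - g (n+2) = α * (Nat.fib (n+2) : ℚ) + β * (Nat.fib (n+3) : ℚ)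
      linear_combination hu - hgg + ih.1 + ih.2 - α * f2' - β * f3
  refine ⟨A + C α, B + C β, fun s => ?_⟩
  have := (key s).1
  simp only [eval_add, eval_C]
  simp only [hgdef] at this
  linear_combination this


lemma good_zero : Good (fun _ => 0) := ⟨0, 0, by simp⟩

lemma good_add {f g : ℕ → ℚ} (hf : Good f) (hg : Good g) : Good (fun s => f s + g s) := by
  obtain ⟨A, B, hAB⟩ := hf
  obtain ⟨A', B', hAB'⟩ := hg
  exact ⟨A + A', B + B', fun s => by simp [hAB s, hAB' s]; ring⟩

lemma good_polymul {f : ℕ → ℚ} (P : ℚ[X]) (hf : Good f) :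
    Good (fun s => P.eval (s:ℚ) * f s) := by
  obtain ⟨A, B, hAB⟩ := hf
  exact ⟨P * A, P * B, fun s => by simp [hAB s]; ring⟩

lemma good_sum {ι : Type*} (t : Finset ι) (f : ι → ℕ → ℚ) (hf : ∀ i ∈ t, Good (f i)) :
    Good (fun s => ∑ i ∈ t, f i s) := by
  classical
  induction t using Finset.induction_on with
  | empty => simpa using good_zero
  | @insert a t' hx ih =>
    have : Good (fun s => f a s + ∑ i ∈ t', f i s) :=
      good_add (hf a (by simp)) (ih fun i hi => hf i (by simp [hi]))
    simpa [Finset.sum_insert hx] using this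

/-- The model: strictly decreasing lists of positive integers with
head + length ≤ s, built recursively. -/
def M : ℕ → Finset (List ℕ)
  | 0 => {[]}
  | 1 => {[]}
  | (s+2) => M (s+1) ∪ (M s).image (fun q => (s + 1 - q.length) :: q)

lemma mem_M_iff : ∀ (s : ℕ) (l : List ℕ), l ∈ M s ↔
    (List.Chain' (· > ·) l ∧ (∀ x ∈ l, 0 < x) ∧ l.headD 0 + l.length ≤ s) := by
  intro s
  induction s using Nat.strong_induction_on with
  | _ s ih =>
    match s with
    | 0 =>
      intro l
      simp only [M, Finset.mem_singleton]
      constructor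
      · rintro rfl; simp [List.Chain']
      · rintro ⟨h1, h2, h3⟩
        cases l with
        | nil => rfl
        | cons a t =>
          exfalso
          have := h2 a (by simp)
          simp only [List.headD_cons, List.length_cons] at h3
          omega
    | 1 =>
      intro l
      simp only [M, Finset.mem_singleton]
      constructor
      · rintro rfl; simp [List.Chain']
      · rintro ⟨h1, h2, h3⟩
        cases l with
        | nil => rfl
        | cons a t =>
          exfalso
          have := h2 a (by simp)
          simp only [List.headD_cons, List.length_cons] at h3
          omega
    | (s+2) =>
      intro l
      simp only [M, Finset.mem_union, Finset.mem_image]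
      constructor
      · rintro (h | ⟨q, hq, rfl⟩)
        · obtain ⟨h1, h2, h3⟩ := (ih (s+1) (by omega) l).1 h
          exact ⟨h1, h2, by omega⟩
        · obtain ⟨h1, h2, h3⟩ := (ih s (by omega) q).1 hq
          have hlen : q.length ≤ s := by
            cases q with
            | nil => simp
            | cons a t =>
              have := h2 a (by simp)
              simp at h3 ⊢
              omega
          refine ⟨?_, ?_, ?_⟩
          · cases q with
            | nil => simp [List.Chain']
            | cons a t =>
              refine List.isChain_cons_cons.2 ⟨?_, h1⟩
              simp only [List.headD_cons, List.length_cons] at h3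
              simp only [List.length_cons]
              omega
          · intro x hx
            rcases List.mem_cons.1 hx with rfl | hx
            · omega
            · exact h2 x hx
          · simp only [List.headD_cons, List.length_cons]
            omega
      · rintro ⟨h1, h2, h3⟩
        by_cases hle : l.headD 0 + l.length ≤ s + 1
        · exact Or.inl ((ih (s+1) (by omega) l).2 ⟨h1, h2, hle⟩)
        · right
          have heq : l.headD 0 + l.length = s + 2 := by omega
          cases l with
          | nil => simp at heq
          | cons a t =>
            refine ⟨t, ?_, ?_⟩
            · apply (ih s (by omega) t).2
              refine ⟨h1.tail, fun x hx => h2 x (by simp [hx]), ?_⟩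
              cases t with
              | nil => simp
              | cons b r =>
                have hab : a > b := (List.isChain_cons_cons.1 h1).1
                simp only [List.headD_cons, List.length_cons] at heq ⊢
                omega
            · simp only [List.headD_cons, List.length_cons] at heq
              congr 1
              omega

lemma M_head_len {s : ℕ} {l : List ℕ} (h : l ∈ M s) : l.headD 0 + l.length ≤ s :=
  ((mem_M_iff s l).1 h).2.2

lemma M_len {s : ℕ} {l : List ℕ} (h : l ∈ M s) : l.length ≤ s := by
  obtain ⟨h1, h2, h3⟩ := (mem_M_iff s l).1 h
  cases l with
  | nil => simp
  | cons a t =>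
    have := h2 a (by simp)
    simp only [List.headD_cons] at h3
    omega

lemma sum_M_rec (s : ℕ) (f : List ℕ → ℚ) :
    ∑ l ∈ M (s+2), f l = (∑ l ∈ M (s+1), f l) +
      ∑ q ∈ M s, f ((s + 1 - q.length) :: q) := by
  show ∑ l ∈ (M (s+1) ∪ (M s).image (fun q => (s + 1 - q.length) :: q)), f l = _
  rw [Finset.sum_union, Finset.sum_image]
  · intro x _ y _ hxy
    exact (List.cons.injEq _ _ _ _ ▸ hxy).2
  · rw [Finset.disjoint_right]
    intro l hl hl'
    obtain ⟨q, hq, rfl⟩ := Finset.mem_image.1 hl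
    have h1 := M_head_len hl'
    have h2 := M_len hq
    simp only [List.headD_cons, List.length_cons] at h1
    omega

/-- joint moments of (size, length) over the model -/
def T (k m : ℕ) (s : ℕ) : ℚ :=
  ∑ l ∈ M s, (l.sum : ℚ) ^ k * (l.length : ℚ) ^ m


lemma point (k m : ℕ) (c x L : ℚ) :
    (x + (c - L))^k * (L+1)^m
      = ∑ a ∈ Finset.range (k+1), ∑ b ∈ Finset.range (k-a+1), ∑ j ∈ Finset.range (m+1),
        ((-1)^b * (k.choose a : ℚ) * ((k-a).choose b : ℚ) * (m.choose j : ℚ) * c^(k-a-b))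
          * (x^a * L^(b+j)) := by
  rw [show c - L = -L + c by ring, add_pow, Finset.sum_mul]
  refine Finset.sum_congr rfl fun a _ => ?_
  rw [add_pow, add_pow]
  simp only [Finset.mul_sum, Finset.sum_mul]
  rw [Finset.sum_comm]
  refine Finset.sum_congr rfl fun b _ => ?_
  refine Finset.sum_congr rfl fun j _ => ?_
  rw [pow_add, neg_pow]
  ring

lemma T_rec (k m s : ℕ) :
    T k m (s+2) = T k m (s+1) +
      ∑ q ∈ M s, ((q.sum : ℚ) + (((s:ℚ)+1) - (q.length : ℚ)))^k * ((q.length : ℚ)+1)^m := by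
  show (∑ l ∈ M (s+2), (l.sum : ℚ) ^ k * (l.length : ℚ) ^ m) = _
  rw [sum_M_rec s (fun l => (l.sum : ℚ) ^ k * (l.length : ℚ) ^ m)]
  congr 1
  refine Finset.sum_congr rfl fun q hq => ?_
  have hlen : q.length ≤ s := M_len hq
  have h1 : ((s + 1 - q.length : ℕ) : ℚ) = (s:ℚ) + 1 - (q.length : ℚ) := by
    have h2 : q.length ≤ s + 1 := by omega
    push_cast [h2]
    ring
  simp only [List.sum_cons, List.length_cons]
  push_cast [h1]
  ring_nf

lemma expand (k m s : ℕ) :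
    ∑ q ∈ M s, ((q.sum : ℚ) + (((s:ℚ)+1) - (q.length : ℚ)))^k * ((q.length : ℚ)+1)^m
      = ∑ a ∈ Finset.range (k+1), ∑ b ∈ Finset.range (k-a+1), ∑ j ∈ Finset.range (m+1),
        ((-1)^b * (k.choose a : ℚ) * ((k-a).choose b : ℚ) * (m.choose j : ℚ)
          * ((s:ℚ)+1)^(k-a-b)) * T a (b+j) s := by
  have := fun q (_ : q ∈ M s) => point k m ((s:ℚ)+1) (q.sum : ℚ) (q.length : ℚ)
  rw [Finset.sum_congr rfl this, Finset.sum_comm]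
  refine Finset.sum_congr rfl fun a _ => ?_
  rw [Finset.sum_comm]
  refine Finset.sum_congr rfl fun b _ => ?_
  rw [Finset.sum_comm]
  refine Finset.sum_congr rfl fun j _ => ?_
  rw [← Finset.mul_sum]
  rfl

lemma mu_lt1 (k m a n : ℕ) (ha : a < k) (hn : n ≤ k - a + m) :
    (a + n)^2 + a < (k+m)^2 + k := by
  have ht : a + n ≤ k + m := by omega
  rcases eq_or_lt_of_le ht with h | h
  · rw [h]; omega
  · have h1 : (a+n)^2 + a < (a+n+1)^2 := by nlinarith
    have h2 : (a+n+1)^2 ≤ (k+m)^2 := Nat.pow_le_pow_left (by omega) 2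
    omega

lemma mu_lt2 (k m j : ℕ) (hj : j < m) : (k + j)^2 + k < (k+m)^2 + k := by
  have : (k+j)^2 < (k+m)^2 := Nat.pow_lt_pow_left (by omega) (by omega)
  omega

theorem good_T (k m : ℕ) : Good (T k m) := by
  have H : ∀ N, ∀ k m : ℕ, (k+m)^2 + k ≤ N → Good (T k m) := by
    intro N
    induction N using Nat.strong_induction_on with
    | _ N ih =>
      intro k m hkm
      set E : ℕ → ℚ := fun s =>
        (∑ a ∈ Finset.range (k+1), ∑ b ∈ Finset.range (k-a+1), ∑ j ∈ Finset.range (m+1),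
          ((-1)^b * (k.choose a : ℚ) * ((k-a).choose b : ℚ) * (m.choose j : ℚ)
            * ((s:ℚ)+1)^(k-a-b)) * T a (b+j) s) - T k m s with hE
      have hrec : ∀ s, T k m (s+2) = T k m (s+1) + T k m s + E s := by
        intro s
        rw [T_rec, expand, hE]
        ring
      have goodIH : ∀ a n : ℕ, (a + n)^2 + a < (k+m)^2 + k → Good (T a n) := by
        intro a n h
        exact ih ((a+n)^2 + a) (by omega) a n le_rfl
      apply good_solve _ _ hrec
      have hsplit : ∀ s : ℕ, E s =
          (∑ a ∈ Finset.range k, ∑ b ∈ Finset.range (k-a+1), ∑ j ∈ Finset.range (m+1),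
            ((-1)^b * (k.choose a : ℚ) * ((k-a).choose b : ℚ) * (m.choose j : ℚ)
              * ((s:ℚ)+1)^(k-a-b)) * T a (b+j) s)
          + (∑ j ∈ Finset.range m, ((m.choose j : ℚ)) * T k j s) := by
        intro s
        simp only [hE]
        rw [Finset.sum_range_succ]
        have hinner : ∑ b ∈ Finset.range (k-k+1), ∑ j ∈ Finset.range (m+1),
            ((-1)^b * (k.choose k : ℚ) * ((k-k).choose b : ℚ) * (m.choose j : ℚ)
              * ((s:ℚ)+1)^(k-k-b)) * T k (b+j) s
            = (∑ j ∈ Finset.range m, ((m.choose j : ℚ)) * T k j s) + T k m s := by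
          rw [Nat.sub_self]
          rw [Finset.sum_range_one]
          rw [Finset.sum_range_succ]
          simp [Nat.choose_self]
        rw [hinner]
        ring
      rw [show E = _ from funext hsplit]
      apply good_add
      · apply good_sum
        intro a ha
        apply good_sum
        intro b hb
        apply good_sum
        intro j hj
        simp only [Finset.mem_range] at ha hb hj
        have hg : Good (T a (b+j)) := by
          apply goodIH
          apply mu_lt1 k m a (b+j) (by omega) (by omega)
        have := good_polymul
          (C ((-1)^b * (k.choose a : ℚ) * ((k-a).choose b : ℚ) * (m.choose j : ℚ))
            * (X+1)^(k-a-b)) hg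
        simpa using this
      · apply good_sum
        intro j hj
        simp only [Finset.mem_range] at hj
        have hg : Good (T k j) := by
          apply goodIH
          exact mu_lt2 k m j hj
        have := good_polymul (C ((m.choose j : ℚ))) hg
        simpa using this
  exact H ((k+m)^2 + k) k m le_rfl

open YoungDiagram

lemma card_eq_sum_rowLens (Y : YoungDiagram) : Y.card = Y.rowLens.sum := by
  have hcells : Y.cells = (Finset.range (Y.colLen 0)).biUnion (fun i => Y.row i) := by
    ext c
    simp only [Finset.mem_biUnion, Finset.mem_range, mem_row_iff, mem_cells]
    constructor
    · intro hc
      refine ⟨c.1, ?_, hc, rfl⟩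
      calc c.1 < Y.colLen c.2 := mem_iff_lt_colLen.1 hc
        _ ≤ Y.colLen 0 := Y.colLen_anti 0 c.2 (Nat.zero_le _)
    · rintro ⟨i, _, hc, rfl⟩
      exact hc
  have hdisj : ∀ x ∈ Finset.range (Y.colLen 0), ∀ y ∈ Finset.range (Y.colLen 0), x ≠ y →
      Disjoint (Y.row x) (Y.row y) := by
    intro x _ y _ hxy
    rw [Finset.disjoint_left]
    intro c hcx hcy
    rw [mem_row_iff] at hcx hcy
    exact hxy (hcx.2 ▸ hcy.2 ▸ rfl)
  rw [YoungDiagram.card, hcells, Finset.card_biUnion hdisj]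
  rw [show Y.rowLens.sum = ∑ i ∈ Finset.range (Y.colLen 0), Y.rowLen i from rfl]
  exact Finset.sum_congr rfl fun i _ => (Y.rowLen_eq_card).symm

lemma pos_row_iff (Y : YoungDiagram) (i : ℕ) : 0 < Y.rowLen i ↔ i < Y.colLen 0 := by
  rw [← mem_iff_lt_rowLen, ← mem_iff_lt_colLen]

lemma distinct_iff (Y : YoungDiagram) :
    Y.DistinctParts ↔ List.Chain' (· > ·) Y.rowLens := by
  rw [List.Chain', List.isChain_iff_getElem]
  constructor
  · intro hd i hi
    simp only [length_rowLens] at hi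
    simp only [List.get_eq_getElem, get_rowLens]
    apply hd
    rw [pos_row_iff]
    omega
  · intro h i hpos
    have hi : i + 1 < Y.colLen 0 := (pos_row_iff Y (i+1)).1 hpos
    have := h i (by simp only [length_rowLens]; omega)
    simpa only [List.get_eq_getElem, get_rowLens] using this

lemma headD_getElem (l : List ℕ) (h : 0 < l.length) : l.headD 0 = l[0]'h := by
  cases l with
  | nil => simp at h
  | cons a t => simp

lemma headD_rowLens (Y : YoungDiagram) : Y.rowLens.headD 0 = Y.rowLen 0 := by
  rcases Nat.eq_zero_or_pos (Y.colLen 0) with h | h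
  · have h1 : Y.rowLens = [] := by
      have : Y.rowLens.length = 0 := by rw [length_rowLens, h]
      exact List.length_eq_zero_iff.1 this
    rw [h1]
    have : ¬ 0 < Y.rowLen 0 := by rw [pos_row_iff]; omega
    simp only [List.headD_nil]
    omega
  · have hlen : 0 < Y.rowLens.length := by rw [length_rowLens]; exact h
    have h0 : Y.rowLens[0]'hlen = Y.rowLen 0 := get_rowLens
    rw [← h0]
    exact headD_getElem _ hlen

lemma colLen_step (Y : YoungDiagram) (hd : Y.DistinctParts) (j : ℕ) :
    Y.colLen j ≤ Y.colLen (j+1) + 1 := by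
  by_contra hcon
  push_neg at hcon
  set c := Y.colLen (j+1) with hc
  have h1 : (c + 1, j) ∈ Y := mem_iff_lt_colLen.2 (by omega)
  have h2 : (c, j+1) ∉ Y := by rw [mem_iff_lt_colLen]; omega
  rw [mem_iff_lt_rowLen] at h1
  rw [mem_iff_lt_rowLen] at h2
  push_neg at h2
  have := hd c (by omega)
  omega

lemma isCore_of_perim (Y : YoungDiagram) (s : ℕ) (h : Y.rowLen 0 + Y.colLen 0 ≤ s) :
    Y.IsCore s (s+1) := by
  intro i j hmem
  have h1 : j < Y.rowLen i := mem_iff_lt_rowLen.1 hmem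
  have h2 : i < Y.colLen j := mem_iff_lt_colLen.1 hmem
  have h3 : Y.rowLen i ≤ Y.rowLen 0 := Y.rowLen_anti 0 i (Nat.zero_le _)
  have h4 : Y.colLen j ≤ Y.colLen 0 := Y.colLen_anti 0 j (Nat.zero_le _)
  unfold YoungDiagram.hookLength
  omega

lemma perim_of_isCore (Y : YoungDiagram) (s : ℕ) (hd : Y.DistinctParts)
    (hc : Y.IsCore s (s+1)) : Y.rowLen 0 + Y.colLen 0 ≤ s := by
  by_contra hcon
  push_neg at hcon
  set r0 := Y.rowLen 0 with hr0
  have hr0pos : 0 < r0 := by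
    rcases Nat.eq_zero_or_pos r0 with h | h
    · have : Y.colLen 0 = 0 := by
        by_contra hne
        have : (0,0) ∈ Y := mem_iff_lt_colLen.2 (by omega)
        rw [mem_iff_lt_rowLen] at this
        omega
      omega
    · exact h
  have hclast : Y.colLen (r0 - 1) = 1 := by
    have hge : (0, r0 - 1) ∈ Y := mem_iff_lt_rowLen.2 (by omega)
    rw [mem_iff_lt_colLen] at hge
    have hlt : (1, r0 - 1) ∉ Y := by
      rw [mem_iff_lt_rowLen]
      push_neg
      rcases Nat.eq_zero_or_pos (Y.rowLen 1) with h | h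
      · omega
      · have h5 : Y.rowLen 1 < Y.rowLen 0 := by simpa using hd 0 h
        omega
    rw [mem_iff_lt_colLen] at hlt
    push_neg at hlt
    omega
  have hPlast : r0 - 1 ≤ r0 - 1 ∧ Y.hookLength 0 (r0-1) ≤ s + 1 := by
    refine ⟨le_rfl, ?_⟩
    unfold YoungDiagram.hookLength
    rw [hclast]
    omega
  have hex : ∃ j, j ≤ r0 - 1 ∧ Y.hookLength 0 j ≤ s + 1 := ⟨r0 - 1, hPlast⟩
  obtain ⟨j0, hj0r, hj0h, hmin⟩ :
      ∃ j0, j0 ≤ r0 - 1 ∧ Y.hookLength 0 j0 ≤ s + 1 ∧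
        ∀ j', j' < j0 → ¬ (j' ≤ r0 - 1 ∧ Y.hookLength 0 j' ≤ s + 1) :=
    ⟨Nat.find hex, (Nat.find_spec hex).1, (Nat.find_spec hex).2,
      fun j' h => Nat.find_min hex h⟩
  have hmem : (0, j0) ∈ Y := mem_iff_lt_rowLen.2 (by omega)
  obtain ⟨hne1, hne2⟩ := hc 0 j0 hmem
  have hclow : 1 ≤ Y.colLen j0 := by
    have := mem_iff_lt_colLen.1 hmem
    omega
  rcases Nat.eq_zero_or_pos j0 with h0 | h0
  · -- j0 = 0 : hook(0,0) ≥ s but also ≤ s+1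
    have : Y.hookLength 0 0 = r0 + Y.colLen 0 - 1 := by
      unfold YoungDiagram.hookLength
      omega
    subst h0
    omega
  · -- j0 = j+1
    obtain ⟨j, rfl⟩ : ∃ j, j0 = j + 1 := ⟨j0 - 1, by omega⟩
    have hnotP : ¬ (j ≤ r0 - 1 ∧ Y.hookLength 0 j ≤ s + 1) := hmin j (by omega)
    have hjr : j ≤ r0 - 1 := by omega
    have hjhook : s + 2 ≤ Y.hookLength 0 j := by
      rcases Nat.lt_or_ge (s+1) (Y.hookLength 0 j) with h | h
      · omega
      · exact absurd ⟨hjr, h⟩ hnotP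
    have hstep := colLen_step Y hd j
    have hcj1 : 1 ≤ Y.colLen (j+1) := hclow
    have : Y.hookLength 0 j ≤ Y.hookLength 0 (j+1) + 2 := by
      unfold YoungDiagram.hookLength
      omega
    unfold YoungDiagram.hookLength at *
    omega


local instance : DecidableEq YoungDiagram := Classical.decEq _

/-- `listYD l` : the Young diagram with row lengths `l` (for sorted `l`). -/
def listYD (l : List ℕ) : YoungDiagram :=
  if h : l.Pairwise (· ≥ ·) then YoungDiagram.ofRowLens l h.sortedGE else ⊥

lemma sorted_of_chain {l : List ℕ} (h : List.Chain' (· > ·) l) : l.Pairwise (· ≥ ·) :=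
  (List.isChain_iff_pairwise.1 h).imp le_of_lt

lemma listYD_eq {l : List ℕ} (h1 : List.Chain' (· > ·) l) (h2 : ∀ x ∈ l, 0 < x) :
    (listYD l).rowLens = l := by
  rw [listYD, dif_pos (sorted_of_chain h1)]
  exact rowLens_ofRowLens_eq_self h2

lemma core_set_eq (s : ℕ) : corePartitionsDistinct s = ↑((M s).image listYD) := by
  ext Y
  simp only [Finset.coe_image, Set.mem_image, Finset.mem_coe, corePartitionsDistinct,
    Set.mem_setOf_eq]
  constructor
  · rintro ⟨hd, hc⟩
    refine ⟨Y.rowLens, ?_, ?_⟩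
    · rw [mem_M_iff]
      refine ⟨(distinct_iff Y).1 hd, Y.pos_of_mem_rowLens, ?_⟩
      rw [headD_rowLens, length_rowLens]
      exact perim_of_isCore Y s hd hc
    · rw [listYD, dif_pos Y.rowLens_sorted.pairwise]
      exact ofRowLens_to_rowLens_eq_self
  · rintro ⟨l, hl, rfl⟩
    obtain ⟨h1, h2, h3⟩ := (mem_M_iff s l).1 hl
    have hrl := listYD_eq h1 h2
    constructor
    · rw [distinct_iff, hrl]; exact h1
    · apply isCore_of_perim
      rw [← headD_rowLens, ← length_rowLens, hrl]
      exact h3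

lemma finsum_eq_T (k s : ℕ) :
    (∑ᶠ Y ∈ corePartitionsDistinct s, (Y.card : ℚ) ^ k) = T k 0 s := by
  rw [core_set_eq s, finsum_mem_coe_finset]
  rw [Finset.sum_image (fun x hx y hy hxy => by
    obtain ⟨hx1, hx2, _⟩ := (mem_M_iff s x).1 hx
    obtain ⟨hy1, hy2, _⟩ := (mem_M_iff s y).1 hy
    rw [← listYD_eq hx1 hx2, ← listYD_eq hy1 hy2, hxy])]
  refine Finset.sum_congr rfl fun l hl => ?_
  obtain ⟨h1, h2, _⟩ := (mem_M_iff s l).1 hl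
  rw [card_eq_sum_rowLens, listYD_eq h1 h2]
  simp

end MFP
end

/-- For each `1 ≤ k ≤ 16` there are polynomials `A_k, B_k` with rational coefficients such
that, for all positive integers `s`, `Σ_{p ∈ P_s} |p|^k = A_k(s) F_s + B_k(s) F_{s+1}`;
equivalently, `E[X_s^k] = A_k(s) (F_s / F_{s+1}) + B_k(s)` (recall `|P_s| = F_{s+1}`). -/
theorem moments_fib_polynomial (k : ℕ) (hk1 : 1 ≤ k) (hk16 : k ≤ 16) :
    ∃ A B : Polynomial ℚ, ∀ s : ℕ, 0 < s →
      (∑ᶠ Y ∈ corePartitionsDistinct s, (Y.card : ℚ) ^ k)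
          = A.eval (s : ℚ) * (Nat.fib s : ℚ) + B.eval (s : ℚ) * (Nat.fib (s + 1) : ℚ) ∧
      (∑ᶠ Y ∈ corePartitionsDistinct s, (Y.card : ℚ) ^ k) / (Nat.fib (s + 1) : ℚ)
          = A.eval (s : ℚ) * ((Nat.fib s : ℚ) / (Nat.fib (s + 1) : ℚ)) + B.eval (s : ℚ) := by
  obtain ⟨A, B, hAB⟩ := MFP.good_T k 0
  refine ⟨A, B, fun s hs => ?_⟩
  have h1 : (∑ᶠ Y ∈ corePartitionsDistinct s, (Y.card : ℚ) ^ k)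
      = A.eval (s:ℚ) * (Nat.fib s : ℚ) + B.eval (s:ℚ) * (Nat.fib (s+1) : ℚ) := by
    rw [MFP.finsum_eq_T]
    exact hAB s
  refine ⟨h1, ?_⟩
  have hfib : ((Nat.fib (s+1) : ℚ)) ≠ 0 :=
    Nat.cast_ne_zero.2 (Nat.fib_pos.2 (Nat.succ_pos s)).ne'
  rw [h1]
  field_simp
end
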